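/- arXiv:2107.02552 — 11 statements merged into one kernel-verified Lean document; each statement's English description precedes it below -/
import Mathlib

section
/- Let V be a valuation domain with maximal ideal M, and let I be an ideal of V with I strictly contained in M. Then the ideal ⋂_{t ∈ V∖I, n ≥ 1} t^n V is a prime ideal of V, it is contained in I, and it contains every prime ideal of V that is contained in I; that is, it is the largest prime ideal of V contained in I. -/
/-- In a valuation domain, `x² ∣ y²` implies `x ∣ y`. -/
lemma aux_sq_dvd {R : Type*} [CommRing R] [IsDomain R] [ValuationRing R]
    {x y : R} (h : x ^ 2 ∣ y ^ 2) : x ∣ y := by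
  rcases ValuationRing.dvd_total x y with h' | h'
  · exact h'
  · rcases h' with ⟨c, rfl⟩
    by_cases hy : y = 0
    · simp [hy]
    rcases h with ⟨d, hd⟩
    have h1 : 1 = c ^ 2 * d := by
      have : y ^ 2 * 1 = y ^ 2 * (c ^ 2 * d) := by ring_nf; ring_nf at hd; linear_combination hd
      exact mul_left_cancel₀ (pow_ne_zero 2 hy) this
    exact ⟨c * d, by linear_combination y * h1⟩

/-!
STATEMENT 1. `V` is modelled as the valuation subring of a valuation
`v : Valuation K Γ₀` on its quotient field `K`.  For an ideal `I` strictly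
contained in the maximal ideal `M` of `V`, the ideal
`⋂_{t ∈ V∖I, n ≥ 1} tⁿV` (an infimum of ideals, i.e. their intersection)
is prime, is contained in `I`, and contains every prime ideal contained
in `I`.
-/
theorem stmt_1 {K : Type*} [Field K] {Γ₀ : Type*} [LinearOrderedCommGroupWithZero Γ₀]
    (v : Valuation K Γ₀) (I : Ideal ↥v.valuationSubring)
    (hI : I < IsLocalRing.maximalIdeal ↥v.valuationSubring) :
    letI P : Ideal ↥v.valuationSubring :=
      ⨅ (t : ↥v.valuationSubring) (_ : t ∉ I) (n : ℕ) (_ : 1 ≤ n), Ideal.span {t ^ n}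
    P.IsPrime ∧ P ≤ I ∧
      ∀ Q : Ideal ↥v.valuationSubring, Q.IsPrime → Q ≤ I → Q ≤ P := by
  set P : Ideal ↥v.valuationSubring :=
    ⨅ (t : ↥v.valuationSubring) (_ : t ∉ I) (n : ℕ) (_ : 1 ≤ n), Ideal.span {t ^ n} with hPdef
  have memP : ∀ x : ↥v.valuationSubring,
      x ∈ P ↔ ∀ t : ↥v.valuationSubring, t ∉ I → ∀ n : ℕ, 1 ≤ n → t ^ n ∣ x := by
    intro x
    simp [P, Ideal.mem_iInf, Ideal.mem_span_singleton]
  -- P ≤ I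
  have hPI : P ≤ I := by
    intro x hx
    by_contra hxI
    have hsq : x ^ 2 ∣ x := (memP x).1 hx x hxI 2 (by norm_num)
    rcases hsq with ⟨c, hc⟩
    by_cases hx0 : x = 0
    · exact hxI (hx0 ▸ I.zero_mem)
    have h1 : x * 1 = x * (x * c) := by ring_nf; ring_nf at hc; linear_combination hc
    have hxu : IsUnit x := IsUnit.of_mul_eq_one (a := x) c (mul_left_cancel₀ hx0 h1).symm
    obtain ⟨s, hsM, hsI⟩ := SetLike.exists_of_lt hI
    have hsd : s ∣ x := by simpa using (memP x).1 hx s hsI 1 le_rfl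
    exact hsM (isUnit_of_dvd_unit hsd hxu)
  have hInet : I ≠ ⊤ := ne_top_of_lt hI
  have hPne : P ≠ ⊤ := fun h => hInet (top_le_iff.mp (h ▸ hPI))
  refine ⟨⟨hPne, ?_⟩, hPI, ?_⟩
  · -- primality
    rintro a b hab
    have key : ∀ a b : ↥v.valuationSubring, a ∣ b → a * b ∈ P → b ∈ P := by
      intro a b hdvd hmem
      rw [memP]
      intro t ht n hn
      have h2n : t ^ (2 * n) ∣ a * b := (memP _).1 hmem t ht (2 * n) (by omega)
      have hb2 : a * b ∣ b ^ 2 := by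
        rcases hdvd with ⟨c, rfl⟩; exact ⟨c, by ring⟩
      have : (t ^ n) ^ 2 ∣ b ^ 2 := by
        rw [← pow_mul, mul_comm n 2]
        exact h2n.trans hb2
      exact aux_sq_dvd this
    rcases ValuationRing.dvd_total a b with h | h
    · exact Or.inr (key a b h hab)
    · exact Or.inl (key b a h (mul_comm a b ▸ hab))
  · -- largest prime contained in I
    intro Q hQ hQI x hx
    rw [memP]
    intro t ht n hn
    rcases ValuationRing.dvd_total (t ^ n) x with h | h
    · exact h
    · exfalso
      have : t ^ n ∈ Q := by
        rcases h with ⟨c, hc⟩; exact hc ▸ Q.mul_mem_right c hx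
      exact ht (hQI (hQ.mem_of_pow_mem n this))
end

section
/- Let V be a valuation domain with quotient field K and associated valuation v. Let E = {s_n}_{n∈ℕ} ⊆ K be a pseudo-convergent sequence with gauge {δ_n}_{n∈ℕ} and set c_n := s_{n+1} − s_n. Fix k ∈ ℕ, let Br(E) be the breadth ideal of E, and let P_k be the largest prime ideal of V contained in the ideal c_k^{-1}Br(E). Then for α ∈ K the following are equivalent: (i) v(α − s_k) > λ(δ_r − δ_k) + δ_k for every r ≥ k and every positive integer λ; (ii) α ∈ s_k + c_k P_k. -/
/-- `P` is the largest prime ideal of the valuation ring `v.valuationSubring`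
whose elements all lie (as elements of `K`) in the subset `S` of `K`. -/
def IsLargestPrimeIn {K : Type*} [Field K] {Γ₀ : Type*} [LinearOrderedCommGroupWithZero Γ₀]
    (v : Valuation K Γ₀) (P : Ideal ↥v.valuationSubring) (S : Set K) : Prop :=
  P.IsPrime ∧ (∀ p : ↥v.valuationSubring, p ∈ P → (p : K) ∈ S) ∧
    ∀ Q : Ideal ↥v.valuationSubring, Q.IsPrime →
      (∀ q : ↥v.valuationSubring, q ∈ Q → (q : K) ∈ S) → Q ≤ P

/-!
STATEMENT 2. Multiplicative convention: additively the gauge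
`δ_n = v(s_{n+1} − s_n)` is strictly increasing, multiplicatively the
gauge `n ↦ v (s (n+1) - s n)` is strictly decreasing (`StrictAnti`).
With `c_k := s_{k+1} − s_k`, the set `c_k⁻¹·Br(E) = {x | c_k·x ∈ Br(E)}`
is `{x : K | ∀ n, v (c_k * x) < v (s (n+1) - s n)}` (additively:
`v(c_k x) > δ_n` for all `n`).  Condition (i), additively
`v(α − s_k) > λ(δ_r − δ_k) + δ_k`, becomes multiplicatively
`v (α - s k) < (δ_r/δ_k)^λ * δ_k`; condition (ii) is `α ∈ s_k + c_k·P_k`.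
-/
theorem stmt_2 {K : Type*} [Field K] {Γ₀ : Type*} [LinearOrderedCommGroupWithZero Γ₀]
    (v : Valuation K Γ₀) (s : ℕ → K)
    (hE : StrictAnti fun n => v (s (n + 1) - s n)) (k : ℕ)
    (P : Ideal ↥v.valuationSubring)
    (hP : IsLargestPrimeIn v P
      {x : K | ∀ n, v ((s (k + 1) - s k) * x) < v (s (n + 1) - s n)})
    (α : K) :
    (∀ r, k ≤ r → ∀ lam : ℕ, 1 ≤ lam →
        v (α - s k) <
          (v (s (r + 1) - s r) / v (s (k + 1) - s k)) ^ lam * v (s (k + 1) - s k))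
      ↔ ∃ p ∈ P, α = s k + (s (k + 1) - s k) * (p : K) := by
  set δ : ℕ → Γ₀ := fun n => v (s (n + 1) - s n) with hδdef
  have hδanti : StrictAnti δ := hE
  have hδne : ∀ n, δ n ≠ 0 := by
    intro n h
    have h2 := hδanti (Nat.lt_succ_self n)
    rw [h] at h2
    exact absurd h2 (by simp)
  set c : K := s (k + 1) - s k with hcdef
  have hvc : v c = δ k := rfl
  have hcne : c ≠ 0 := by
    intro h
    exact hδne k (by rw [← hvc, h, map_zero])
  have hbne : ∀ r (lam : ℕ), ((δ r / δ k) ^ lam : Γ₀) ≠ 0 :=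
    fun r lam => pow_ne_zero _ (div_ne_zero (hδne r) (hδne k))
  -- key: any element of P satisfies the bound
  have key : ∀ p : v.valuationSubring, p ∈ P → ∀ r, k ≤ r → ∀ lam : ℕ, 1 ≤ lam →
      v (p : K) < (δ r / δ k) ^ lam := by
    intro p hp r hr lam hlam
    by_contra hcon
    push_neg at hcon
    have htle : v ((s (r + 1) - s r) / c) ≤ 1 := by
      rw [map_div₀, hvc]
      exact (div_le_one₀ (zero_lt_iff.mpr (hδne k))).mpr (hδanti.antitone hr)
    set t : v.valuationSubring := ⟨(s (r + 1) - s r) / c, htle⟩ with htdef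
    have hvt : v (t : K) = δ r / δ k := by rw [map_div₀, hvc]
    have hpne : (p : K) ≠ 0 := by
      intro h
      rw [h, map_zero] at hcon
      exact hbne r lam (le_antisymm hcon zero_le')
    have hwle : v ((t : K) ^ lam / (p : K)) ≤ 1 := by
      rw [map_div₀, map_pow, hvt]
      exact (div_le_one₀ (zero_lt_iff.mpr ((v.ne_zero_iff).mpr hpne))).mpr hcon
    have htpow : t ^ lam = p * ⟨(t : K) ^ lam / (p : K), hwle⟩ := by
      ext
      push_cast
      field_simp
    have htP : t ∈ P := hP.1.mem_of_pow_mem lam (htpow ▸ Ideal.mul_mem_right _ _ hp)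
    have := hP.2.1 t htP r
    rw [show c * (t : K) = s (r + 1) - s r by show c * ((s (r + 1) - s r) / c) = _; field_simp] at this
    exact lt_irrefl _ this
  -- the ideal T
  let T : Ideal v.valuationSubring :=
  { carrier := {x | ∀ r, k ≤ r → ∀ lam : ℕ, 1 ≤ lam → v (x : K) < (δ r / δ k) ^ lam}
    zero_mem' := by
      intro r hr lam hlam
      simpa using zero_lt_iff.mpr (hbne r lam)
    add_mem' := by
      intro a b ha hb r hr lam hlam
      push_cast
      exact lt_of_le_of_lt (v.map_add _ _) (max_lt (ha r hr lam hlam) (hb r hr lam hlam))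
    smul_mem' := by
      intro a x hx r hr lam hlam
      have : v ((a : K) * (x : K)) ≤ v (x : K) := by
        rw [map_mul]
        calc v (a : K) * v (x : K) ≤ 1 * v (x : K) := mul_le_mul_left a.2 _
        _ = v (x : K) := one_mul _
      exact lt_of_le_of_lt this (hx r hr lam hlam) }
  have hTmem : ∀ x : v.valuationSubring,
      x ∈ T ↔ ∀ r, k ≤ r → ∀ lam : ℕ, 1 ≤ lam → v (x : K) < (δ r / δ k) ^ lam :=
    fun x => Iff.rfl
  have hTprime : T.IsPrime := by
    constructor
    · intro h
      have h1 : (1 : v.valuationSubring) ∈ T := h ▸ Submodule.mem_top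
      have := (hTmem 1).mp h1 k le_rfl 1 le_rfl
      rw [div_self (hδne k)] at this
      simp at this
    · intro a b hab
      by_contra hcon
      push_neg at hcon
      obtain ⟨ha, hb⟩ := hcon
      rw [hTmem] at ha hb
      push_neg at ha hb
      obtain ⟨r₁, hr₁, l₁, hl₁, ha⟩ := ha
      obtain ⟨r₂, hr₂, l₂, hl₂, hb⟩ := hb
      have hmono : ∀ r' r : ℕ, r' ≤ r → (δ r / δ k) ≤ (δ r' / δ k) := by
        intro r' r h
        rw [div_eq_mul_inv, div_eq_mul_inv]
        exact mul_le_mul_left (hδanti.antitone h) _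
      have h1 : (δ (max r₁ r₂) / δ k) ^ l₁ ≤ v (a : K) :=
        le_trans (pow_le_pow_left' (hmono r₁ _ (le_max_left _ _)) l₁) ha
      have h2 : (δ (max r₁ r₂) / δ k) ^ l₂ ≤ v (b : K) :=
        le_trans (pow_le_pow_left' (hmono r₂ _ (le_max_right _ _)) l₂) hb
      have h3 := (hTmem _).mp hab (max r₁ r₂) (le_trans hr₁ (le_max_left _ _)) (l₁ + l₂)
        (le_trans hl₁ (Nat.le_add_right _ _))
      rw [pow_add] at h3
      have h4 : (δ (max r₁ r₂) / δ k) ^ l₁ * (δ (max r₁ r₂) / δ k) ^ l₂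
          ≤ v (a : K) * v (b : K) := mul_le_mul' h1 h2
      rw [show v ((a * b : v.valuationSubring) : K) = v (a : K) * v (b : K) by
        push_cast; rw [map_mul]] at h3
      exact absurd (lt_of_le_of_lt h4 h3) (lt_irrefl _)
  have hTS : ∀ q : v.valuationSubring, q ∈ T →
      (q : K) ∈ {x : K | ∀ n, v (c * x) < δ n} := by
    intro q hq n
    have h1 : v (q : K) < δ (max n k) / δ k := by
      have := (hTmem q).mp hq (max n k) (le_max_right n k) 1 le_rfl
      rwa [pow_one] at this
    calc v (c * (q : K)) = δ k * v (q : K) := by rw [map_mul, hvc]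
    _ < δ k * (δ (max n k) / δ k) := by
        rw [mul_lt_mul_iff_right₀ (zero_lt_iff.mpr (hδne k))]; exact h1
    _ = δ (max n k) := by rw [mul_comm, div_mul_cancel₀ _ (hδne k)]
    _ ≤ δ n := hδanti.antitone (le_max_left n k)
  have hTP : T ≤ P := hP.2.2 T hTprime hTS
  constructor
  · intro h
    have hx1 : v ((α - s k) / c) ≤ 1 := by
      rw [map_div₀, hvc]
      have := h k le_rfl 1 le_rfl
      rw [div_self (hδne k), one_pow, one_mul] at this
      exact (div_le_one₀ (zero_lt_iff.mpr (hδne k))).mpr (le_of_lt this)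
    refine ⟨⟨(α - s k) / c, hx1⟩, hTP ?_, by field_simp; ring⟩
    rw [hTmem]
    intro r hr lam hlam
    have := h r hr lam hlam
    show v ((α - s k) / c) < _
    rw [map_div₀, hvc, div_lt_iff₀ (zero_lt_iff.mpr (hδne k))]
    exact this
  · rintro ⟨p, hp, rfl⟩
    intro r hr lam hlam
    have h1 := key p hp r hr lam hlam
    rw [show s k + c * (p : K) - s k = c * (p : K) by ring, map_mul, hvc, mul_comm]
    rw [mul_lt_mul_iff_left₀ (zero_lt_iff.mpr (hδne k))]
    exact h1
end

section
/- Let V be a valuation domain (of arbitrary rank) with quotient field K. Let E = {s_n}_{n∈ℕ} ⊆ K be a pseudo-convergent sequence. Then every pseudo-limit of E belongs to the polynomial closure of E; that is, Lim(E) ⊆ E̅. -/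
/-- The polynomial closure of a subset `S ⊆ K` with respect to the valuation
ring `V = {x | v x ≤ 1}`: all `x ∈ K` such that every polynomial `f ∈ K[X]`
that is integer-valued on `S` (i.e. `f ∈ Int(S,V)`) also satisfies `f(x) ∈ V`. -/
def polyClosure {K : Type*} [Field K] {Γ₀ : Type*} [LinearOrderedCommGroupWithZero Γ₀]
    (v : Valuation K Γ₀) (S : Set K) : Set K :=
  {x : K | ∀ f : Polynomial K, (∀ a ∈ S, v (f.eval a) ≤ 1) → v (f.eval x) ≤ 1}

/-!
STATEMENT 4.  Multiplicative convention: pseudo-convergent means the gauge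
`n ↦ v (s (n+1) - s n)` is strictly decreasing (additively: strictly
increasing).  `α` is a pseudo-limit of `E` iff `v (α - s n) = v (s (n+1) - s n)`
for all `n`.  Every pseudo-limit of `E` lies in the polynomial closure of
`E = range s`.
-/
theorem stmt_4 {K : Type*} [Field K] {Γ₀ : Type*} [LinearOrderedCommGroupWithZero Γ₀]
    (v : Valuation K Γ₀) (s : ℕ → K)
    (hE : StrictAnti fun n => v (s (n + 1) - s n)) (α : K)
    (hα : ∀ n, v (α - s n) = v (s (n + 1) - s n)) :
    α ∈ polyClosure v (Set.range s) := by
  set δ : ℕ → Γ₀ := fun n => v (s (n + 1) - s n) with hδ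
  have hδ0 : ∀ n, δ n ≠ 0 := by
    intro n h
    have := hE (Nat.lt_succ_self n)
    rw [h] at this
    exact absurd this (by simp)
  -- value of differences
  have hdiff : ∀ i j : ℕ, i < j → v (s j - s i) = δ i := by
    intro i j hij
    induction j with
    | zero => omega
    | succ j ih =>
      rcases Nat.lt_or_ge i j with h | h
      · have hvij := ih h
        have key : s (j + 1) - s i = (s (j + 1) - s j) + (s j - s i) := by ring
        rw [key, v.map_add_of_distinct_val, hvij]
        · exact max_eq_right (le_of_lt (show δ j < δ i from hE h))
        · rw [hvij]; exact ne_of_lt (show δ j < δ i from hE h)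
      · have : i = j := by omega
        subst this; rfl
  -- injectivity
  have hinj : Function.Injective s := by
    intro i j h
    by_contra hne
    rcases Nat.lt_or_ge i j with hij | hij
    · have := hdiff i j hij; rw [h, sub_self, v.map_zero] at this; exact hδ0 i this.symm
    · have hji : j < i := by omega
      have := hdiff j i hji; rw [h, sub_self, v.map_zero] at this; exact hδ0 j this.symm
  intro f hf
  set T : Finset ℕ := Finset.range (f.natDegree + 1) with hT
  have hinjT : Set.InjOn s ↑T := hinj.injOn
  have hdeg : f.degree < (T.card : WithBot ℕ) := by
    rw [hT, Finset.card_range]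
    exact lt_of_le_of_lt Polynomial.degree_le_natDegree (by exact_mod_cast Nat.lt_succ_self _)
  have hrep := Lagrange.eq_interpolate hinjT hdeg
  rw [hrep, Lagrange.interpolate_apply, Polynomial.eval_finset_sum]
  apply Valuation.map_sum_le
  intro i hi
  rw [Polynomial.eval_mul, Polynomial.eval_C, v.map_mul]
  have h1 : v (f.eval (s i)) ≤ 1 := hf _ ⟨i, rfl⟩
  have h2 : v ((Lagrange.basis T s i).eval α) ≤ 1 := by
    rw [Lagrange.basis, Polynomial.eval_prod, map_prod]
    apply Finset.prod_le_one (fun j _ => zero_le')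
    intro j hj
    have hji : j ≠ i := (Finset.mem_erase.mp hj).1
    rw [Lagrange.basisDivisor, Polynomial.eval_mul, Polynomial.eval_C, Polynomial.eval_sub,
      Polynomial.eval_X, Polynomial.eval_C, v.map_mul, map_inv₀]
    have hle : v (α - s j) ≤ v (s i - s j) := by
      rcases Nat.lt_or_ge j i with h | h
      · have : v (s i - s j) = δ j := hdiff j i h
        rw [this, hα j]
      · have hij : i < j := by omega
        have : v (s i - s j) = δ i := by
          rw [show s i - s j = -(s j - s i) by ring, v.map_neg]
          exact hdiff i j hij
        rw [this, hα j]
        exact le_of_lt (hE hij)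
    have hne : v (s i - s j) ≠ 0 := by
      rcases Nat.lt_or_ge j i with h | h
      · rw [hdiff j i h]; exact hδ0 j
      · have hij : i < j := by omega
        rw [show s i - s j = -(s j - s i) by ring, v.map_neg, hdiff i j hij]; exact hδ0 i
    calc (v (s i - s j))⁻¹ * v (α - s j) ≤ (v (s i - s j))⁻¹ * v (s i - s j) :=
          mul_le_mul_right hle _
      _ = 1 := inv_mul_cancel₀ hne
  calc v (f.eval (s i)) * v ((Lagrange.basis T s i).eval α) ≤ 1 * 1 := mul_le_mul' h1 h2
    _ = 1 := one_mul 1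
end

section
/- Let V be a valuation domain with quotient field K and associated valuation v. Let Λ be a well-ordered set whose order type is strictly greater than ω, and let E = {s_ν}_{ν∈Λ} ⊆ K be a pseudo-convergent sequence indexed by Λ (i.e. v(s_μ − s_ν) < v(s_ρ − s_μ) whenever ν < μ < ρ in Λ). Let E_in = {s_n}_{n∈ℕ} be the subsequence indexed by the first ω elements of Λ. Then E_in is pseudo-convergent, every s_ν with ν outside the first ω elements of Λ is a pseudo-limit of E_in, and the polynomial closures of E and E_in coincide: E̅ = E̅_in. -/
/-!
STATEMENT 5.  `Λ` is a well-ordered set (a linear order with well-founded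
`<`).  The sequence `s : Λ → K` is pseudo-convergent: additively
`v(s_μ − s_ν) < v(s_ρ − s_μ)` for `ν < μ < ρ`, which in Mathlib's
multiplicative convention reads `v (s ρ - s μ) < v (s μ - s ν)`.
The map `ι : ℕ → Λ` enumerates the first `ω` elements of `Λ`: it is strictly
monotone and every element of `Λ` outside its range is above all `ι n`
(so `range ι` is an initial segment of order type `ω`); the hypothesis
`hgt` (some element lies outside `range ι`) says the order type of `Λ` is
strictly greater than `ω`.  Conclusions: `E_in = s ∘ ι` is pseudo-convergent
(its gauge is strictly decreasing, multiplicatively), each `s x` with `x`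
outside the first `ω` elements is a pseudo-limit of `E_in`, and the
polynomial closures of `E = range s` and `E_in` coincide.
-/
theorem stmt_5 {K : Type*} [Field K] {Γ₀ : Type*} [LinearOrderedCommGroupWithZero Γ₀]
    (v : Valuation K Γ₀) {Λ : Type*} [LinearOrder Λ] [WellFoundedLT Λ]
    (s : Λ → K)
    (hE : ∀ ⦃a b c : Λ⦄, a < b → b < c → v (s c - s b) < v (s b - s a))
    (ι : ℕ → Λ) (hι : StrictMono ι)
    (hinit : ∀ x : Λ, x ∉ Set.range ι → ∀ n, ι n < x)
    (hgt : ∃ x : Λ, x ∉ Set.range ι) :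
    (StrictAnti fun n => v (s (ι (n + 1)) - s (ι n))) ∧
    (∀ x : Λ, x ∉ Set.range ι →
      ∀ n, v (s x - s (ι n)) = v (s (ι (n + 1)) - s (ι n))) ∧
    polyClosure v (Set.range s) = polyClosure v (Set.range fun n => s (ι n)) := by
  classical
  set δ : ℕ → Γ₀ := fun n => v (s (ι (n + 1)) - s (ι n)) with hδdef
  have hanti : StrictAnti δ :=
    strictAnti_nat_of_succ_lt fun n =>
      hE (hι (Nat.lt_succ_self n)) (hι (Nat.lt_succ_self (n + 1)))
  have hδ0 : ∀ n, δ n ≠ 0 := by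
    intro n h
    have := hanti (Nat.lt_succ_self n)
    rw [h] at this
    exact not_lt_zero' this
  have hgauge : ∀ {m n : ℕ}, m < n → v (s (ι n) - s (ι m)) = δ m := by
    intro m n hmn
    rcases eq_or_lt_of_le (Nat.succ_le_of_lt hmn) with h | h
    · rw [← h]
    · have h1 : v (s (ι n) - s (ι (m + 1))) < v (s (ι (m + 1)) - s (ι m)) :=
        hE (hι (Nat.lt_succ_self m)) (hι h)
      have h2 : s (ι n) - s (ι m) = (s (ι n) - s (ι (m + 1))) + (s (ι (m + 1)) - s (ι m)) := by
        ring
      rw [h2, v.map_add_eq_of_lt_right h1]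
  have hlim : ∀ x ∉ Set.range ι, ∀ n, v (s x - s (ι n)) = δ n := by
    intro x hx n
    have h1 : v (s x - s (ι (n + 1))) < v (s (ι (n + 1)) - s (ι n)) :=
      hE (hι (Nat.lt_succ_self n)) (hinit x hx (n + 1))
    have h2 : s x - s (ι n) = (s x - s (ι (n + 1))) + (s (ι (n + 1)) - s (ι n)) := by ring
    rw [h2, v.map_add_eq_of_lt_right h1]
  have hgauge2 : ∀ {i j : ℕ}, i ≠ j → v (s (ι i) - s (ι j)) = δ (min i j) := by
    intro i j hij
    rcases hij.lt_or_gt with h | h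
    · rw [min_eq_left h.le, ← v.map_neg, neg_sub]
      exact hgauge h
    · rw [min_eq_right h.le]
      exact hgauge h
  have hne : ∀ {m n : ℕ}, m < n → s (ι m) ≠ s (ι n) := by
    intro m n hmn h
    apply hδ0 m
    rw [← hgauge hmn, h, sub_self, v.map_zero]
  have hinj : Function.Injective fun n => s (ι n) := by
    intro a b hab
    rcases lt_trichotomy a b with h | h | h
    · exact absurd hab (hne h)
    · exact h
    · exact absurd hab.symm (hne h)
  -- Core: a polynomial bounded on the first ω terms is bounded at every later term.
  have hcore : ∀ (f : Polynomial K), (∀ n : ℕ, v (f.eval (s (ι n))) ≤ 1) →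
      ∀ x ∉ Set.range ι, v (f.eval (s x)) ≤ 1 := by
    intro f hf x hx
    set d := f.natDegree with hd
    have hdeg : f.degree < (Finset.range (d + 1)).card := by
      rw [Finset.card_range]
      exact lt_of_le_of_lt f.degree_le_natDegree (by exact_mod_cast Nat.lt_succ_self d)
    have hvs : Set.InjOn (fun n => s (ι n)) (Finset.range (d + 1)) := hinj.injOn
    have hfeq := Lagrange.eq_interpolate hvs hdeg
    rw [hfeq, Lagrange.interpolate_apply, Polynomial.eval_finset_sum]
    apply v.map_sum_le
    intro i hi
    rw [Polynomial.eval_mul, Polynomial.eval_C, v.map_mul]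
    have hb : v ((Lagrange.basis (Finset.range (d + 1)) (fun n => s (ι n)) i).eval (s x)) ≤ 1 := by
      rw [Lagrange.basis, Polynomial.eval_prod, map_prod]
      refine Finset.prod_le_one (fun j _ => zero_le') ?_
      intro j hj
      rcases Finset.mem_erase.mp hj with ⟨hji, _⟩
      rw [Lagrange.basisDivisor]
      simp only [Polynomial.eval_mul, Polynomial.eval_C, Polynomial.eval_sub, Polynomial.eval_X]
      rw [v.map_mul, map_inv₀, hgauge2 (Ne.symm hji), hlim x hx j]
      rcases (Ne.symm hji).lt_or_gt with h | h
      · rw [min_eq_left h.le]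
        calc (δ i)⁻¹ * δ j ≤ (δ i)⁻¹ * δ i :=
              mul_le_mul_right (hanti h).le _
          _ = 1 := inv_mul_cancel₀ (hδ0 i)
      · rw [min_eq_right h.le, inv_mul_cancel₀ (hδ0 j)]
    calc v (f.eval (s (ι i))) *
          v ((Lagrange.basis (Finset.range (d + 1)) (fun n => s (ι n)) i).eval (s x))
        ≤ 1 * 1 := mul_le_mul' (hf i) hb
      _ = 1 := one_mul 1
  refine ⟨hanti, hlim, ?_⟩
  ext x
  simp only [polyClosure, Set.mem_setOf_eq]
  constructor
  · intro hxc f hf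
    apply hxc f
    rintro a ⟨n, rfl⟩
    by_cases hν : n ∈ Set.range ι
    · obtain ⟨m, rfl⟩ := hν
      exact hf _ ⟨m, rfl⟩
    · exact hcore f (fun m => hf _ ⟨m, rfl⟩) n hν
  · intro hxc f hf
    apply hxc f
    rintro a ⟨n, rfl⟩
    exact hf _ ⟨ι n, rfl⟩
end

section
/- Let V be a valuation domain with quotient field K and associated valuation v. Let E = {s_n}_{n∈ℕ} ⊆ K be a pseudo-convergent sequence with gauge {δ_n}_{n∈ℕ}. For each n ∈ ℕ define the polynomial H_n(X) := ∏_{i=0}^{n−1} (X − s_i)/(s_n − s_i) ∈ K[X]. Then for all j, n ∈ ℕ: H_n(s_j) = 0 if j < n, and H_n(s_j) is a unit of V (i.e. v(H_n(s_j)) = 0) if j ≥ n. In particular H_n ∈ Int(E,V) for every n. -/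
/-- The polynomial `H_n(X) = ∏_{i=0}^{n-1} (X - s_i)/(s_n - s_i) ∈ K[X]`. -/
noncomputable def Hpoly {K : Type*} [Field K] (s : ℕ → K) (n : ℕ) : Polynomial K :=
  ∏ i ∈ Finset.range n, Polynomial.C ((s n - s i)⁻¹) * (Polynomial.X - Polynomial.C (s i))

section Aux

variable {K : Type*} [Field K] {Γ₀ : Type*} [LinearOrderedCommGroupWithZero Γ₀]
  (v : Valuation K Γ₀) (s : ℕ → K)
  (hE : StrictAnti fun n => v (s (n + 1) - s n))

include hE in
lemma gauge_pos' (n : ℕ) : v (s (n + 1) - s n) ≠ 0 := by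
  intro h
  have := hE (Nat.lt_succ_self n)
  simp only [h] at this
  exact absurd this (by simp)

include hE in
lemma key_val {i j : ℕ} (h : i < j) : v (s j - s i) = v (s (i + 1) - s i) := by
  induction j with
  | zero => omega
  | succ j ih =>
    rcases Nat.lt_succ_iff_lt_or_eq.mp h with h' | rfl
    · have hij : v (s (j + 1) - s j) < v (s j - s i) := by
        rw [ih h']; exact hE h'
      have : s (j + 1) - s i = (s (j + 1) - s j) + (s j - s i) := by ring
      rw [this, Valuation.map_add_of_distinct_val v (ne_of_lt hij),
        max_eq_right hij.le, ih h']
    · rfl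

end Aux

/-!
STATEMENT 6.  Multiplicative convention: pseudo-convergent means the gauge
`n ↦ v (s (n + 1) - s n)` is strictly decreasing (additively: strictly
increasing).  For all `j, n`: `H_n(s_j) = 0` if `j < n`, and `H_n(s_j)` is a
unit of `V` (i.e. `v (H_n(s_j)) = 1`; additively the value is `0`) if
`j ≥ n`.  In particular every `H_n` is integer-valued on `E = range s`,
i.e. `H_n ∈ Int(E,V)` where `V = {x | v x ≤ 1}`.
-/
theorem stmt_6 {K : Type*} [Field K] {Γ₀ : Type*} [LinearOrderedCommGroupWithZero Γ₀]
    (v : Valuation K Γ₀) (s : ℕ → K)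
    (hE : StrictAnti fun n => v (s (n + 1) - s n)) :
    (∀ n j : ℕ, j < n → (Hpoly s n).eval (s j) = 0) ∧
    (∀ n j : ℕ, n ≤ j → v ((Hpoly s n).eval (s j)) = 1) ∧
    (∀ n : ℕ, ∀ a ∈ Set.range s, v ((Hpoly s n).eval a) ≤ 1) := by
  have heval : ∀ (n : ℕ) (a : K),
      (Hpoly s n).eval a = ∏ i ∈ Finset.range n, (s n - s i)⁻¹ * (a - s i) := by
    intro n a
    simp [Hpoly, Polynomial.eval_prod]
  have hzero : ∀ n j : ℕ, j < n → (Hpoly s n).eval (s j) = 0 := by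
    intro n j hj
    rw [heval]
    exact Finset.prod_eq_zero (Finset.mem_range.mpr hj) (by simp)
  have hunit : ∀ n j : ℕ, n ≤ j → v ((Hpoly s n).eval (s j)) = 1 := by
    intro n j hnj
    rw [heval, map_prod v]
    apply Finset.prod_eq_one
    intro i hi
    rw [Finset.mem_range] at hi
    rw [v.map_mul, Valuation.map_inv]
    have h1 : v (s n - s i) = v (s (i + 1) - s i) := key_val v s hE hi
    have h2 : v (s j - s i) = v (s (i + 1) - s i) := key_val v s hE (lt_of_lt_of_le hi hnj)
    rw [h1, h2]
    exact inv_mul_cancel₀ (gauge_pos' v s hE i)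
  refine ⟨hzero, hunit, ?_⟩
  rintro n a ⟨j, rfl⟩
  rcases lt_or_ge j n with h | h
  · rw [hzero n j h]; simp
  · rw [hunit n j h]
end

section
/- Let V be a valuation domain with quotient field K and associated valuation v. Let E = {s_n}_{n∈ℕ} ⊆ K be a pseudo-convergent sequence with gauge {δ_n}_{n∈ℕ}, set c_n := s_{n+1} − s_n, and for each n ≥ 1 let P_n be the largest prime ideal of V contained in c_n^{-1}Br(E). Then the polynomial closure of E is E̅ = Lim(E) ∪ ⋃_{n≥1} (s_n + c_n P_n), and moreover this union is disjoint: Lim(E) is disjoint from each s_n + c_n P_n, and (s_n + c_n P_n) ∩ (s_m + c_m P_m) = ∅ whenever n ≠ m. -/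
open Polynomial Finset

namespace Stmt7Aux

variable {K : Type*} [Field K] {Γ₀ : Type*} [LinearOrderedCommGroupWithZero Γ₀]
  {v : Valuation K Γ₀} {s : ℕ → K}

lemma delta_ne (hE : StrictAnti fun n => v (s (n + 1) - s n)) (n : ℕ) :
    v (s (n + 1) - s n) ≠ 0 := by
  intro h
  have h2 := hE (Nat.lt_succ_self n)
  simp only [h] at h2
  exact absurd h2 (not_lt_of_ge zero_le')

lemma diff_val (hE : StrictAnti fun n => v (s (n + 1) - s n)) {k m : ℕ} (h : k < m) :
    v (s m - s k) = v (s (k + 1) - s k) := by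
  induction m with
  | zero => omega
  | succ m ih =>
    rcases Nat.lt_or_ge k m with hk | hk
    · have h1 : s (m + 1) - s k = (s (m + 1) - s m) + (s m - s k) := by ring
      rw [h1, Valuation.map_add_eq_of_lt_right]
      · exact ih hk
      · rw [ih hk]; exact hE hk
    · have : k = m := by omega
      subst this; rfl

lemma diff_val_min (hE : StrictAnti fun n => v (s (n + 1) - s n)) {k m : ℕ} (h : k ≠ m) :
    v (s m - s k) = v (s (min k m + 1) - s (min k m)) := by
  rcases Nat.lt_or_ge k m with hk | hk
  · rw [Nat.min_eq_left hk.le]; exact diff_val hE hk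
  · have hm : m < k := by omega
    rw [Nat.min_eq_right hm.le, Valuation.map_sub_swap]; exact diff_val hE hm

lemma prod_Ico_lt (hE : StrictAnti fun n => v (s (n + 1) - s n)) {a b : ℕ} (h : a < b) :
    ∏ k ∈ Ico (a + 1) (b + 1), v (s (k + 1) - s k) < v (s (a + 1) - s a) ^ (b - a) := by
  induction b with
  | zero => omega
  | succ b ih =>
    rw [Finset.prod_Ico_succ_top (by omega : a + 1 ≤ b + 1)]
    rcases Nat.lt_or_ge a b with hab | hab
    · have h4 : b + 1 - a = (b - a) + 1 := by omega
      rw [h4, pow_succ]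
      calc (∏ k ∈ Ico (a+1) (b+1), v (s (k+1) - s k)) * v (s (b+1+1) - s (b+1))
          < v (s (a+1) - s a) ^ (b-a) * v (s (b+1+1) - s (b+1)) :=
            mul_lt_mul_of_pos_right (ih hab) (zero_lt_iff.2 (delta_ne hE (b+1)))
        _ < v (s (a+1) - s a) ^ (b-a) * v (s (a+1) - s a) :=
            mul_lt_mul_of_pos_left (hE (by omega : a < b+1)) (zero_lt_iff.2 (pow_ne_zero _ (delta_ne hE a)))
    · have hba : b = a := by omega
      subst hba
      rw [Finset.Ico_self, Finset.prod_empty, one_mul]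
      have h3 : b + 1 - b = 1 := by omega
      rw [h3, pow_one]
      exact hE (Nat.lt_succ_self b)

lemma exclusion (hE : StrictAnti fun n => v (s (n + 1) - s n)) {x : K}
    (hx : x ∈ polyClosure v (Set.range s)) {N M : ℕ} (hNM : N ≤ M)
    (hlow : ∀ k, k < N → v (x - s k) = v (s (k + 1) - s k))
    (H : v (s (N + 1) - s N) * ∏ k ∈ Ico (N + 1) (M + 1), v (s (k + 1) - s k)
       < v (x - s N) * ∏ k ∈ Ico (N + 1) (M + 1), v (x - s k)) : False := by
  set c : K := ∏ k ∈ range (M + 1), (s (k + 1) - s k) with hc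
  have hvc : v c = ∏ k ∈ range (M + 1), v (s (k + 1) - s k) := map_prod v _ _
  have hvcne : v c ≠ 0 := by
    rw [hvc]
    exact Finset.prod_ne_zero_iff.2 fun k _ => delta_ne hE k
  set f : K[X] := C c⁻¹ * ∏ k ∈ range (M + 1), (X - C (s k)) with hf
  have heval : ∀ y : K, v (f.eval y) = (v c)⁻¹ * ∏ k ∈ range (M + 1), v (y - s k) := by
    intro y
    rw [hf, eval_mul, eval_C, map_mul, map_inv₀, eval_prod]
    congr 1
    rw [map_prod]
    exact Finset.prod_congr rfl fun k _ => by rw [eval_sub, eval_X, eval_C]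
  have hint : ∀ a ∈ Set.range s, v (f.eval a) ≤ 1 := by
    rintro a ⟨m, rfl⟩
    rcases Nat.lt_or_ge m (M + 1) with hm | hm
    · have hz : ∏ k ∈ range (M + 1), (s m - s k) = 0 :=
        Finset.prod_eq_zero (Finset.mem_range.2 hm) (by simp)
      rw [heval]
      have : ∏ k ∈ range (M + 1), v (s m - s k) = 0 := by
        rw [← map_prod, hz, map_zero]
      rw [this, mul_zero]
      exact zero_le'
    · rw [heval]
      have hpe : ∏ k ∈ range (M + 1), v (s m - s k)
          = ∏ k ∈ range (M + 1), v (s (k + 1) - s k) :=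
        Finset.prod_congr rfl fun k hk =>
          diff_val hE (lt_of_lt_of_le (Finset.mem_range.1 hk) hm)
      rw [hpe, ← hvc, inv_mul_cancel₀ hvcne]
  -- now the value at x
  have hsplit : ∀ g : ℕ → Γ₀, ∏ k ∈ range (M + 1), g k
      = (∏ k ∈ range N, g k) * (g N * ∏ k ∈ Ico (N + 1) (M + 1), g k) := by
    intro g
    rw [range_eq_Ico, ← Finset.prod_Ico_consecutive _ (Nat.zero_le N) (by omega : N ≤ M + 1),
      Finset.prod_eq_prod_Ico_succ_bot (by omega : N < M + 1), ← range_eq_Ico]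
  have hlowprod : ∏ k ∈ range N, v (x - s k) = ∏ k ∈ range N, v (s (k + 1) - s k) :=
    Finset.prod_congr rfl fun k hk => hlow k (Finset.mem_range.1 hk)
  have hlpne : (∏ k ∈ range N, v (s (k + 1) - s k)) ≠ 0 :=
    Finset.prod_ne_zero_iff.2 fun k _ => delta_ne hE k
  have hgt : v c < ∏ k ∈ range (M + 1), v (x - s k) := by
    rw [hvc, hsplit (fun k => v (s (k + 1) - s k)), hsplit (fun k => v (x - s k)), hlowprod]
    exact mul_lt_mul_of_pos_left H (zero_lt_iff.2 hlpne)
  have hfx : 1 < v (f.eval x) := by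
    rw [heval]
    calc (1 : Γ₀) = (v c)⁻¹ * v c := (inv_mul_cancel₀ hvcne).symm
      _ < (v c)⁻¹ * ∏ k ∈ range (M + 1), v (x - s k) :=
        mul_lt_mul_of_pos_left hgt (zero_lt_iff.2 (inv_ne_zero hvcne))
  exact absurd (hx f hint) (not_le.2 hfx)

lemma up_const (hE : StrictAnti fun n => v (s (n + 1) - s n)) {x : K} {N : ℕ}
    (hlt : v (x - s N) < v (s (N + 1) - s N)) {k : ℕ} (hk : N < k) :
    v (x - s k) = v (s (N + 1) - s N) := by
  induction k with
  | zero => omega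
  | succ k ih =>
    rcases Nat.lt_or_ge N k with hNk | hNk
    · have h1 : x - s (k + 1) = (x - s k) - (s (k + 1) - s k) := by ring
      rw [h1, Valuation.map_sub_eq_of_lt_left]
      · exact ih hNk
      · rw [ih hNk]; exact hE hNk
    · have : k = N := by omega
      subst this
      have h1 : x - s (k + 1) = (x - s k) - (s (k + 1) - s k) := by ring
      rw [h1, v.map_sub_eq_of_lt_right hlt]

lemma case2_main (hE : StrictAnti fun n => v (s (n + 1) - s n)) {x : K}
    (hx : x ∈ polyClosure v (Set.range s)) {N m₀ l : ℕ} (hm₀ : N < m₀) (hl : 1 ≤ l)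
    (hlow : ∀ k, k < N → v (x - s k) = v (s (k + 1) - s k))
    (hlt : v (x - s N) < v (s (N + 1) - s N))
    (hkey : v (s (m₀ + 1) - s m₀) ^ l ≤ v (x - s N) * v (s (N + 1) - s N) ^ (l - 1)) :
    False := by
  set M : ℕ := m₀ + l with hM
  refine exclusion hE hx (by omega : N ≤ M) hlow ?_
  have hconst : ∏ k ∈ Ico (N + 1) (M + 1), v (x - s k)
      = v (s (N + 1) - s N) ^ (M - N) := by
    rw [Finset.prod_congr rfl fun k hk => up_const hE hlt (by
      have := (Finset.mem_Ico.1 hk).1; omega : N < k)]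
    rw [Finset.prod_const, Nat.card_Ico]
    congr 1
    omega
  rw [hconst]
  -- multiply both sides by δ_N ^ (l-1)
  have hδN := delta_ne hE N
  have hpowne : v (s (N + 1) - s N) ^ (l - 1) ≠ 0 := pow_ne_zero _ hδN
  rw [← mul_lt_mul_iff_of_pos_left (zero_lt_iff.2 hpowne)]
  have hsplit : ∏ k ∈ Ico (N + 1) (M + 1), v (s (k + 1) - s k)
      = (∏ k ∈ Ico (N + 1) (m₀ + 1), v (s (k + 1) - s k))
        * ∏ k ∈ Ico (m₀ + 1) (M + 1), v (s (k + 1) - s k) :=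
    (Finset.prod_Ico_consecutive _ (by omega) (by omega)).symm
  have hA := prod_Ico_lt hE hm₀
  have hB := prod_Ico_lt hE (by omega : m₀ < M)
  have hMm : M - m₀ = l := by omega
  rw [hMm] at hB
  calc v (s (N + 1) - s N) ^ (l - 1)
        * (v (s (N + 1) - s N) * ∏ k ∈ Ico (N + 1) (M + 1), v (s (k + 1) - s k))
      = v (s (N + 1) - s N) ^ l
        * ((∏ k ∈ Ico (N + 1) (m₀ + 1), v (s (k + 1) - s k))
          * ∏ k ∈ Ico (m₀ + 1) (M + 1), v (s (k + 1) - s k)) := by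
        rw [hsplit, ← mul_assoc, ← pow_succ]
        have h2 : l - 1 + 1 = l := by omega
        rw [h2]
    _ < v (s (N + 1) - s N) ^ l
        * (v (s (N + 1) - s N) ^ (m₀ - N) * v (s (m₀ + 1) - s m₀) ^ l) := by
        refine mul_lt_mul_of_pos_left ?_ (zero_lt_iff.2 (pow_ne_zero _ hδN))
        calc (∏ k ∈ Ico (N + 1) (m₀ + 1), v (s (k + 1) - s k))
              * ∏ k ∈ Ico (m₀ + 1) (M + 1), v (s (k + 1) - s k)
            < v (s (N + 1) - s N) ^ (m₀ - N)
              * ∏ k ∈ Ico (m₀ + 1) (M + 1), v (s (k + 1) - s k) :=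
              mul_lt_mul_of_pos_right hA (zero_lt_iff.2
                (Finset.prod_ne_zero_iff.2 fun k _ => delta_ne hE k))
          _ < v (s (N + 1) - s N) ^ (m₀ - N) * v (s (m₀ + 1) - s m₀) ^ l :=
              mul_lt_mul_of_pos_left hB (zero_lt_iff.2 (pow_ne_zero _ hδN))
    _ ≤ v (s (N + 1) - s N) ^ l
        * (v (s (N + 1) - s N) ^ (m₀ - N)
          * (v (x - s N) * v (s (N + 1) - s N) ^ (l - 1))) := by
        refine mul_le_mul_right (mul_le_mul_right hkey _) _
    _ = v (s (N + 1) - s N) ^ (l - 1)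
        * (v (x - s N) * v (s (N + 1) - s N) ^ (M - N)) := by
        have h1 : M - N = (m₀ - N) + l := by omega
        rw [h1, pow_add]
        ac_rfl

def IsLargestPrimeIn {K : Type*} [Field K] {Γ₀ : Type*} [LinearOrderedCommGroupWithZero Γ₀]
    (v : Valuation K Γ₀) (P : Ideal ↥v.valuationSubring) (S : Set K) : Prop :=
  P.IsPrime ∧ (∀ p : ↥v.valuationSubring, p ∈ P → (p : K) ∈ S) ∧
    ∀ Q : Ideal ↥v.valuationSubring, Q.IsPrime →
      (∀ q : ↥v.valuationSubring, q ∈ Q → (q : K) ∈ S) → Q ≤ P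

lemma subset_dir (hE : StrictAnti fun n => v (s (n + 1) - s n))
    (P : ℕ → Ideal ↥v.valuationSubring)
    (hP : ∀ n, IsLargestPrimeIn v (P n)
      {x : K | ∀ m, v ((s (n + 1) - s n) * x) < v (s (m + 1) - s m)})
    {x : K} (hx : x ∈ polyClosure v (Set.range s))
    (hlim : ¬ ∀ n, v (x - s n) = v (s (n + 1) - s n)) :
    ∃ n, ∃ p ∈ P n, x = s n + (s (n + 1) - s n) * (p : K) := by
  classical
  push_neg at hlim
  set N := Nat.find hlim with hNdef
  have hNspec : v (x - s N) ≠ v (s (N + 1) - s N) := Nat.find_spec hlim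
  have hlow : ∀ k, k < N → v (x - s k) = v (s (k + 1) - s k) := fun k hk =>
    not_not.1 (Nat.find_min hlim hk)
  rcases lt_or_gt_of_ne hNspec with hlt | hgt
  swap
  · refine (exclusion hE hx (le_refl N) hlow ?_).elim
    simp only [Finset.Ico_self, Finset.prod_empty, mul_one]
    exact hgt
  · have hcne : s (N + 1) - s N ≠ 0 := by
      intro h
      exact delta_ne hE N (by rw [h, map_zero])
    set p : K := (x - s N) / (s (N + 1) - s N) with hp
    have hcp : (s (N + 1) - s N) * p = x - s N := by
      rw [hp]; field_simp
    have hγ : v (x - s N) = v (s (N + 1) - s N) * v p := by rw [← hcp, map_mul]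
    have hvp1 : v p < 1 := by
      by_contra h
      push_neg at h
      have h2 : v (s (N + 1) - s N) ≤ v (x - s N) := by
        rw [hγ]; exact le_mul_of_one_le_right zero_le' h
      exact absurd hlt (not_lt.2 h2)
    set pp : ↥v.valuationSubring := ⟨p, hvp1.le⟩ with hppdef
    have hxeq : x = s N + (s (N + 1) - s N) * p := by rw [hcp]; ring
    by_cases hbr : ∀ m, v (x - s N) < v (s (m + 1) - s m)
    · by_cases hmem : pp ∈ P N
      · exact ⟨N, pp, hmem, hxeq⟩
      exfalso
      -- the radical of the ideal generated by pp is a prime contained in the breadth set,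
      -- unless it contains some element violating the breadth condition
      set Q : Ideal ↥v.valuationSubring :=
        { carrier := {a | ∃ n : ℕ, 1 ≤ n ∧ v (a : K) ^ n ≤ v p}
          add_mem' := by
            rintro a b ⟨na, hna1, hna⟩ ⟨nb, hnb1, hnb⟩
            rcases le_total (v (a : K)) (v (b : K)) with hab | hab
            · exact ⟨nb, hnb1, le_trans (pow_le_pow_left₀ zero_le'
                (v.map_add_le hab le_rfl) nb) hnb⟩
            · exact ⟨na, hna1, le_trans (pow_le_pow_left₀ zero_le'
                (v.map_add_le le_rfl hab) na) hna⟩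
          zero_mem' := ⟨1, le_rfl, by simp⟩
          smul_mem' := by
            rintro c a ⟨n, hn1, hn⟩
            refine ⟨n, hn1, le_trans (pow_le_pow_left₀ zero_le' ?_ n) hn⟩
            have : ((c • a : ↥v.valuationSubring) : K) = (c : K) * (a : K) := rfl
            rw [this, map_mul]
            exact mul_le_of_le_one_left zero_le' c.2 } with hQdef
      have hQprime : Q.IsPrime := by
        constructor
        · rw [Ideal.ne_top_iff_one]
          rintro ⟨n, hn1, hn⟩
          have h1 : ((1 : ↥v.valuationSubring) : K) = 1 := rfl
          rw [h1, map_one, one_pow] at hn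
          exact absurd (lt_of_le_of_lt hn hvp1) (lt_irrefl 1)
        · rintro a b ⟨n, hn1, hn⟩
          have hab : ((a * b : ↥v.valuationSubring) : K) = (a : K) * (b : K) := rfl
          rw [hab, map_mul, mul_pow] at hn
          rcases le_total (v (a : K)) (v (b : K)) with h | h
          · left
            refine ⟨2 * n, by omega, ?_⟩
            calc v (a : K) ^ (2 * n) = v (a : K) ^ n * v (a : K) ^ n := by
                  rw [← pow_add]; congr 1; omega
              _ ≤ v (a : K) ^ n * v (b : K) ^ n :=
                  mul_le_mul_right (pow_le_pow_left₀ zero_le' h n) _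
              _ ≤ v p := hn
          · right
            refine ⟨2 * n, by omega, ?_⟩
            calc v (b : K) ^ (2 * n) = v (b : K) ^ n * v (b : K) ^ n := by
                  rw [← pow_add]; congr 1; omega
              _ ≤ v (a : K) ^ n * v (b : K) ^ n :=
                  mul_le_mul_left (pow_le_pow_left₀ zero_le' h n) _
              _ ≤ v p := hn
      have hppQ : pp ∈ Q := ⟨1, le_rfl, by rw [pow_one]⟩
      have hnotall : ¬ ∀ q : ↥v.valuationSubring, q ∈ Q →
          (q : K) ∈ {y : K | ∀ m, v ((s (N + 1) - s N) * y) < v (s (m + 1) - s m)} := by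
        intro hall
        exact hmem ((hP N).2.2 Q hQprime hall hppQ)
      push_neg at hnotall
      obtain ⟨q, hqQ, hqset⟩ := hnotall
      simp only [Set.mem_setOf_eq, not_forall, not_lt] at hqset
      obtain ⟨m, hm⟩ := hqset
      obtain ⟨l, hl1, hql⟩ := hqQ
      have hm₀ : N < max m (N + 1) := by omega
      refine case2_main hE hx hm₀ hl1 hlow hlt ?_
      have hstep1 : v (s (max m (N + 1) + 1) - s (max m (N + 1)))
          ≤ v (s (N + 1) - s N) * v (q : K) := by
        refine le_trans (hE.antitone (Nat.le_max_left m (N + 1))) ?_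
        rw [← map_mul]
        exact hm
      calc v (s (max m (N + 1) + 1) - s (max m (N + 1))) ^ l
          ≤ (v (s (N + 1) - s N) * v (q : K)) ^ l := pow_le_pow_left₀ zero_le' hstep1 l
        _ = v (s (N + 1) - s N) ^ l * v (q : K) ^ l := mul_pow _ _ _
        _ ≤ v (s (N + 1) - s N) ^ l * v p := mul_le_mul_right hql _
        _ = v (x - s N) * v (s (N + 1) - s N) ^ (l - 1) := by
          have hl' : v (s (N + 1) - s N) ^ l
              = v (s (N + 1) - s N) * v (s (N + 1) - s N) ^ (l - 1) := by
            conv_lhs => rw [show l = 1 + (l - 1) by omega]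
            rw [pow_add, pow_one]
          rw [hγ, hl']
          ac_rfl
    · exfalso
      push_neg at hbr
      obtain ⟨m, hm⟩ := hbr
      have hm₀ : N < max m (N + 1) := by omega
      refine case2_main hE hx hm₀ le_rfl hlow hlt ?_
      rw [pow_one, Nat.sub_self, pow_zero, mul_one]
      exact le_trans (hE.antitone (Nat.le_max_left m (N + 1))) hm

lemma pair_dichotomy (hE : StrictAnti fun n => v (s (n + 1) - s n)) {a b : Γ₀}
    (ha : a ≠ 0) (hb : b ≠ 0) {i j : ℕ} (hij : i < j) :
    (∃ Nn : ℕ, ∀ m, Nn ≤ m →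
        a * v (s (m + 1) - s m) ^ i < b * v (s (m + 1) - s m) ^ j)
    ∨ (∃ Nn : ℕ, ∀ m, Nn ≤ m →
        b * v (s (m + 1) - s m) ^ j < a * v (s (m + 1) - s m) ^ i) := by
  have hδ : ∀ m, v (s (m + 1) - s m) ≠ 0 := delta_ne hE
  have hsplit : ∀ m, v (s (m + 1) - s m) ^ j
      = v (s (m + 1) - s m) ^ (j - i) * v (s (m + 1) - s m) ^ i := by
    intro m
    rw [← pow_add]
    congr 1
    omega
  by_cases hcase : ∃ m₁, b * v (s (m₁ + 1) - s m₁) ^ j < a * v (s (m₁ + 1) - s m₁) ^ i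
  · obtain ⟨m₁, hm₁⟩ := hcase
    right
    refine ⟨m₁, fun m hm => ?_⟩
    rw [hsplit, ← mul_assoc] at hm₁ ⊢
    have h1 : b * v (s (m₁ + 1) - s m₁) ^ (j - i) < a := by
      have := (mul_lt_mul_iff_of_pos_right (zero_lt_iff.2 (pow_ne_zero i (hδ m₁)))).1 hm₁
      exact this
    have h2 : b * v (s (m + 1) - s m) ^ (j - i) ≤ b * v (s (m₁ + 1) - s m₁) ^ (j - i) :=
      mul_le_mul_right (pow_le_pow_left₀ zero_le' (hE.antitone hm) _) _
    exact mul_lt_mul_of_pos_right (lt_of_le_of_lt h2 h1)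
      (zero_lt_iff.2 (pow_ne_zero i (hδ m)))
  · push_neg at hcase
    left
    have huniq : ∀ m m', m < m' → a * v (s (m + 1) - s m) ^ i = b * v (s (m + 1) - s m) ^ j →
        a * v (s (m' + 1) - s m') ^ i = b * v (s (m' + 1) - s m') ^ j → False := by
      intro m m' hmm' h1 h2
      rw [hsplit, ← mul_assoc] at h1 h2
      have e1 : a = b * v (s (m + 1) - s m) ^ (j - i) :=
        mul_right_cancel₀ (pow_ne_zero i (hδ m)) h1
      have e2 : a = b * v (s (m' + 1) - s m') ^ (j - i) :=
        mul_right_cancel₀ (pow_ne_zero i (hδ m')) h2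
      have e3 : v (s (m + 1) - s m) ^ (j - i) = v (s (m' + 1) - s m') ^ (j - i) :=
        mul_left_cancel₀ hb (e1.symm.trans e2)
      have e4 : v (s (m' + 1) - s m') ^ (j - i) < v (s (m + 1) - s m) ^ (j - i) :=
        pow_lt_pow_left₀ (hE hmm') zero_le' (by omega)
      exact absurd e3.symm (ne_of_lt e4)
    by_cases heq : ∃ m₂, a * v (s (m₂ + 1) - s m₂) ^ i = b * v (s (m₂ + 1) - s m₂) ^ j
    · obtain ⟨m₂, hm₂⟩ := heq
      refine ⟨m₂ + 1, fun m hm => lt_of_le_of_ne (hcase m) ?_⟩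
      intro hcontra
      exact huniq m₂ m (by omega) hm₂ hcontra
    · push_neg at heq
      exact ⟨0, fun m _ => lt_of_le_of_ne (hcase m) (heq m)⟩

lemma finset_winner {ι : Type*} (A : ι → ℕ → Γ₀) (S : Finset ι) :
    S.Nonempty →
    (∀ i ∈ S, ∀ j ∈ S, i ≠ j →
      (∃ Nn, ∀ m, Nn ≤ m → A i m < A j m) ∨ (∃ Nn, ∀ m, Nn ≤ m → A j m < A i m)) →
    ∃ i₀ ∈ S, ∃ Nn, ∀ j ∈ S, j ≠ i₀ → ∀ m, Nn ≤ m → A j m < A i₀ m := by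
  classical
  induction S using Finset.induction_on with
  | empty => intro h; exact absurd h (by simp)
  | @insert a S haS ih =>
    intro _ hdich
    rcases S.eq_empty_or_nonempty with rfl | hSne
    · exact ⟨a, by simp, 0, by simp⟩
    · obtain ⟨i₀, hi₀S, Nn, hwin⟩ := ih hSne (fun i hi j hj hij =>
        hdich i (Finset.mem_insert_of_mem hi) j (Finset.mem_insert_of_mem hj) hij)
      have hai₀ : a ≠ i₀ := fun h => haS (h ▸ hi₀S)
      rcases hdich a (Finset.mem_insert_self a S) i₀ (Finset.mem_insert_of_mem hi₀S) hai₀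
        with ⟨Na, hNa⟩ | ⟨Na, hNa⟩
      · -- i₀ still wins
        refine ⟨i₀, Finset.mem_insert_of_mem hi₀S, max Nn Na, ?_⟩
        intro j hj hji₀ m hm
        rcases Finset.mem_insert.1 hj with rfl | hjS
        · exact hNa m (le_trans (le_max_right _ _) hm)
        · exact hwin j hjS hji₀ m (le_trans (le_max_left _ _) hm)
      · -- a wins
        refine ⟨a, Finset.mem_insert_self a S, max Nn Na, ?_⟩
        intro j hj hja m hm
        rcases Finset.mem_insert.1 hj with rfl | hjS
        · exact absurd rfl hja
        · by_cases hji₀ : j = i₀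
          · subst hji₀
            exact hNa m (le_trans (le_max_right _ _) hm)
          · exact lt_trans (hwin j hjS hji₀ m (le_trans (le_max_left _ _) hm))
              (hNa m (le_trans (le_max_right _ _) hm))


lemma my_map_sum_eq {ι : Type*} (v : Valuation K Γ₀) {S : Finset ι} {f : ι → K} {j : ι}
    (hj : j ∈ S) (h0 : v (f j) ≠ 0) (hlt : ∀ i ∈ S, i ≠ j → v (f i) < v (f j)) :
    v (∑ i ∈ S, f i) = v (f j) := by
  classical
  rw [Finset.sum_eq_add_sum_sdiff_singleton_of_mem hj]
  refine Valuation.map_add_eq_of_lt_left _ (Valuation.map_sum_lt _ h0 fun i hi => ?_)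
  obtain ⟨hiS, hine⟩ := Finset.mem_sdiff.1 hi
  exact hlt i hiS (by simpa using hine)

open scoped Classical in
lemma limit_mem (hE : StrictAnti fun n => v (s (n + 1) - s n)) {α : K}
    (hα : ∀ n, v (α - s n) = v (s (n + 1) - s n)) :
    α ∈ polyClosure v (Set.range s) := by
  intro f hf
  by_contra hcon
  push_neg at hcon
  set g : K[X] := f.comp (X + C α) with hg
  have hfeval : ∀ y : K, f.eval y = g.eval (y - α) := by
    intro y
    rw [hg, eval_comp]
    simp
  have hgsum : ∀ y : K, g.eval y = ∑ i ∈ g.support, g.coeff i * y ^ i := by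
    intro y
    rw [eval_eq_sum]
    rfl
  set S := g.support.filter (fun i => i ≠ 0) with hS
  by_cases hSne : S.Nonempty
  swap
  · -- essentially constant polynomial
    rw [Finset.not_nonempty_iff_eq_empty, hS, Finset.filter_eq_empty_iff] at hSne
    have hconst : ∀ y z : K, g.eval y = g.eval z := by
      intro y z
      rw [hgsum, hgsum]
      refine Finset.sum_congr rfl fun i hi => ?_
      have : i = 0 := not_not.1 (hSne hi)
      subst this
      simp
    have h1 : f.eval α = f.eval (s 0) := by
      rw [hfeval, hfeval]
      exact hconst _ _
    rw [h1] at hcon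
    exact absurd (hf (s 0) ⟨0, rfl⟩) (not_le.2 hcon)
  · have hδ : ∀ m, v (s (m + 1) - s m) ≠ 0 := delta_ne hE
    set A : ℕ → ℕ → Γ₀ := fun i m => v (g.coeff i) * v (s (m + 1) - s m) ^ i with hA
    have hdich : ∀ i ∈ S, ∀ j ∈ S, i ≠ j →
        (∃ Nn, ∀ m, Nn ≤ m → A i m < A j m) ∨ (∃ Nn, ∀ m, Nn ≤ m → A j m < A i m) := by
      intro i hi j hj hij
      have hci : v (g.coeff i) ≠ 0 := by
        rw [v.ne_zero_iff]
        exact mem_support_iff.1 (Finset.mem_of_mem_filter i hi)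
      have hcj : v (g.coeff j) ≠ 0 := by
        rw [v.ne_zero_iff]
        exact mem_support_iff.1 (Finset.mem_of_mem_filter j hj)
      rcases Nat.lt_or_ge i j with h | h
      · exact pair_dichotomy hE hci hcj h
      · have h' : j < i := by omega
        rcases pair_dichotomy hE hcj hci h' with hc | hc
        · right; exact hc
        · left; exact hc
    obtain ⟨i₀, hi₀S, Nn, hwin⟩ := finset_winner A S hSne hdich
    have hi₀ne : i₀ ≠ 0 := (Finset.mem_filter.1 hi₀S).2
    have hi₀supp : g.coeff i₀ ≠ 0 := mem_support_iff.1 (Finset.mem_of_mem_filter i₀ hi₀S)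
    -- key evaluation
    have hkey : ∀ m, Nn ≤ m →
        v (f.eval (s m) - f.eval α) = v (g.coeff i₀) * v (s (m + 1) - s m) ^ i₀ := by
      intro m hm
      have hw : v (s m - α) = v (s (m + 1) - s m) := by
        rw [Valuation.map_sub_swap]
        exact hα m
      have hwne : s m - α ≠ 0 := by
        intro h
        exact hδ m (by rw [← hw, h, map_zero])
      have hsum : f.eval (s m) - f.eval α
          = ∑ i ∈ S, g.coeff i * (s m - α) ^ i := by
        rw [hfeval, hfeval, sub_self, hgsum, hgsum]
        rw [← Finset.sum_filter_add_sum_filter_not g.support (fun i => i ≠ 0)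
          (fun i => g.coeff i * (s m - α) ^ i)]
        have h0 : ∑ i ∈ g.support.filter (fun i => ¬ i ≠ 0), g.coeff i * (s m - α) ^ i
            = ∑ i ∈ g.support, g.coeff i * (0 : K) ^ i := by
          rcases Finset.eq_empty_or_nonempty (g.support.filter (fun i => ¬ i ≠ 0))
            with he | hne
          · rw [he, Finset.sum_empty]
            symm
            refine Finset.sum_eq_zero fun i hi => ?_
            rcases Nat.eq_zero_or_pos i with rfl | hipos
            · exfalso
              have : (0 : ℕ) ∈ g.support.filter (fun i => ¬ i ≠ 0) := by
                simp only [Finset.mem_filter, not_not, and_true]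
                exact hi
              rw [he] at this
              exact absurd this (Finset.notMem_empty 0)
            · rw [zero_pow (by omega), mul_zero]
          · obtain ⟨i, hi⟩ := hne
            have hi0 : i = 0 := not_not.1 (Finset.mem_filter.1 hi).2
            subst hi0
            have hfl : g.support.filter (fun i => ¬ i ≠ 0) = {0} := by
              apply Finset.eq_singleton_iff_unique_mem.2
              exact ⟨hi, fun j hj => not_not.1 (Finset.mem_filter.1 hj).2⟩
            rw [hfl, Finset.sum_singleton]
            symm
            rw [Finset.sum_eq_single_of_mem 0 (Finset.mem_filter.1 hi).1]
            · simp
            · intro j _ hj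
              rw [zero_pow hj, mul_zero]
        rw [h0]
        ring
      rw [hsum]
      have h0' : v (g.coeff i₀ * (s m - α) ^ i₀) ≠ 0 := by
        rw [map_mul, map_pow]
        exact mul_ne_zero (v.ne_zero_iff.2 hi₀supp)
          (pow_ne_zero _ (v.ne_zero_iff.2 hwne))
      have hlt' : ∀ i ∈ S, i ≠ i₀ → v (g.coeff i * (s m - α) ^ i)
          < v (g.coeff i₀ * (s m - α) ^ i₀) := by
        intro i hiS hine
        have := hwin i hiS hine m hm
        rw [map_mul, map_pow, map_mul, map_pow, hw]
        exact this
      rw [my_map_sum_eq v hi₀S h0' hlt']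
      rw [map_mul, map_pow, hw]
    -- contradiction
    have hconm : ∀ m, Nn ≤ m → v (f.eval (s m) - f.eval α) = v (f.eval α) := by
      intro m hm
      exact v.map_sub_eq_of_lt_right (lt_of_le_of_lt (hf (s m) ⟨m, rfl⟩) hcon)
    have e1 := (hkey Nn le_rfl).symm.trans (hconm Nn le_rfl)
    have e2 := (hkey (Nn + 1) (by omega)).symm.trans (hconm (Nn + 1) (by omega))
    have e3 : v (g.coeff i₀) * v (s (Nn + 1) - s Nn) ^ i₀
        = v (g.coeff i₀) * v (s (Nn + 1 + 1) - s (Nn + 1)) ^ i₀ := e1.trans e2.symm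
    have e4 : v (s (Nn + 1) - s Nn) ^ i₀ = v (s (Nn + 1 + 1) - s (Nn + 1)) ^ i₀ :=
      mul_left_cancel₀ (v.ne_zero_iff.2 hi₀supp) e3
    have e5 : v (s (Nn + 1 + 1) - s (Nn + 1)) ^ i₀ < v (s (Nn + 1) - s Nn) ^ i₀ :=
      pow_lt_pow_left₀ (hE (Nat.lt_succ_self Nn)) zero_le' hi₀ne
    exact absurd e4.symm (ne_of_lt e5)

lemma coeff_prod_bound (w : ℕ → K) {r : Γ₀} :
    ∀ T : Finset ℕ, (∀ l ∈ T, v (w l) ≤ r) → ∀ j,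
      v ((∏ l ∈ T, (X - C (w l))).coeff j) ≤ r ^ (T.card - j) := by
  classical
  intro T
  induction T using Finset.induction_on with
  | empty =>
    intro _ j
    rcases Nat.eq_zero_or_pos j with rfl | hj
    · simp
    · simp only [Finset.prod_empty, Finset.card_empty, Nat.zero_sub, pow_zero]
      rw [Polynomial.coeff_one]
      simp only [if_neg (by omega : ¬ j = 0)]
      rw [map_zero]
      exact zero_le'
  | @insert a T haT ih =>
    intro hw j
    have hwa : v (w a) ≤ r := hw a (Finset.mem_insert_self a T)
    have hwT : ∀ l ∈ T, v (w l) ≤ r := fun l hl => hw l (Finset.mem_insert_of_mem hl)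
    have hdeg : (∏ l ∈ T, (X - C (w l))).natDegree ≤ T.card := by
      refine le_trans (Polynomial.natDegree_prod_le _ _) (le_of_eq ?_)
      simp [natDegree_X_sub_C]
    rw [Finset.prod_insert haT, Finset.card_insert_of_notMem haT, sub_mul, coeff_sub]
    set Q : K[X] := ∏ l ∈ T, (X - C (w l)) with hQ
    rcases Nat.eq_zero_or_pos j with rfl | hj
    · rw [Polynomial.mul_coeff_zero, Polynomial.coeff_X_zero, zero_mul, zero_sub,
        coeff_C_mul, Valuation.map_neg, map_mul]
      calc v (w a) * v (Q.coeff 0) ≤ r * r ^ (T.card - 0) :=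
            mul_le_mul' hwa (ih hwT 0)
        _ = r ^ (T.card + 1 - 0) := by rw [← pow_succ']; simp
    · obtain ⟨j', rfl⟩ : ∃ j', j = j' + 1 := ⟨j - 1, by omega⟩
      rw [Polynomial.coeff_X_mul, coeff_C_mul]
      refine v.map_sub_le ?_ ?_
      · refine le_trans (ih hwT j') (le_of_eq ?_)
        congr 1
        omega
      · rw [map_mul]
        rcases Nat.lt_or_ge j' T.card with hj' | hj'
        · calc v (w a) * v (Q.coeff (j' + 1)) ≤ r * r ^ (T.card - (j' + 1)) :=
              mul_le_mul' hwa (ih hwT (j' + 1))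
            _ = r ^ (T.card + 1 - (j' + 1)) := by rw [← pow_succ']; congr 1; omega
        · have : Q.coeff (j' + 1) = 0 :=
            Polynomial.coeff_eq_zero_of_natDegree_lt (by omega)
          rw [this, map_zero, mul_zero]
          exact zero_le'

lemma pow_le_pow_le_one {a : Γ₀} (ha : a ≤ 1) {i j : ℕ} (hij : i ≤ j) : a ^ j ≤ a ^ i := by
  obtain ⟨k, rfl⟩ := Nat.exists_eq_add_of_le hij
  rw [pow_add]
  exact mul_le_of_le_one_right zero_le' (pow_le_one₀ zero_le' ha)

open scoped Classical in
lemma union_mem (hE : StrictAnti fun n => v (s (n + 1) - s n))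
    (P : ℕ → Ideal ↥v.valuationSubring)
    (hP : ∀ n, IsLargestPrimeIn v (P n)
      {x : K | ∀ m, v ((s (n + 1) - s n) * x) < v (s (m + 1) - s m)})
    {n : ℕ} {pp : ↥v.valuationSubring} (hpp : pp ∈ P n) :
    s n + (s (n + 1) - s n) * (pp : K) ∈ polyClosure v (Set.range s) := by
  intro f hf
  set D := max f.natDegree 1 with hD
  have hD1 : 1 ≤ D := le_max_right _ _
  have hfD : f.natDegree ≤ D := le_max_left _ _
  have hδ : ∀ m, v (s (m + 1) - s m) ≠ 0 := delta_ne hE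
  set r : Γ₀ := v (s (n + 1) - s n) with hr
  set ρ : Γ₀ := v (s (n + D + 1) - s (n + D)) with hρ
  have hrne : r ≠ 0 := hδ n
  have hρne : ρ ≠ 0 := hδ (n + D)
  have hρr : ρ < r := hE (by omega : n < n + D)
  set c : K := s (n + 1) - s n with hc
  have hcne : c ≠ 0 := fun h => hrne (by rw [hr, h, map_zero])
  -- the auxiliary element t
  set t : K := (s (n + D + 1) - s (n + D)) / c with ht
  have hvt : v t = ρ / r := by rw [ht, map_div₀]
  have htle : v t ≤ 1 := by
    rw [hvt, div_eq_mul_inv]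
    calc ρ * r⁻¹ ≤ r * r⁻¹ := mul_le_mul_left hρr.le _
      _ = 1 := mul_inv_cancel₀ hrne
  set tt : ↥v.valuationSubring := ⟨t, htle⟩ with htt
  have httP : tt ∉ P n := by
    intro h
    have h2 := (hP n).2.1 tt h (n + D)
    rw [← hc] at h2
    have hct : c * (tt : K) = s (n + D + 1) - s (n + D) := by
      show c * t = _
      rw [ht]
      field_simp
    rw [hct] at h2
    exact lt_irrefl _ h2
  -- the key bound on v p
  have hp_le : v (pp : K) ≤ (ρ / r) ^ D := by
    rw [← hvt, ← map_pow]
    by_contra hcon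
    push_neg at hcon
    have hpne : v (pp : K) ≠ 0 := by
      intro h
      rw [h] at hcon
      exact absurd hcon (not_lt_of_ge zero_le')
    have hpne' : (pp : K) ≠ 0 := v.ne_zero_iff.1 hpne
    set u : K := t ^ D / (pp : K) with hu
    have hvu : v u ≤ 1 := by
      rw [hu, map_div₀, div_eq_mul_inv]
      calc v (t ^ D) * (v (pp : K))⁻¹ ≤ v (pp : K) * (v (pp : K))⁻¹ :=
            mul_le_mul_left hcon.le _
        _ = 1 := mul_inv_cancel₀ hpne
    have hueq : (⟨u, hvu⟩ * pp : ↥v.valuationSubring) = tt ^ D := by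
      apply Subtype.ext
      have h1 : ((⟨u, hvu⟩ * pp : ↥v.valuationSubring) : K) = u * (pp : K) := rfl
      have h2 : ((tt ^ D : ↥v.valuationSubring) : K) = t ^ D := by
        rw [SubmonoidClass.coe_pow]
      rw [h1, h2, hu]
      field_simp
    have hpow : tt ^ D ∈ P n := hueq ▸ Ideal.mul_mem_left _ _ hpp
    exact httP ((hP n).1.mem_of_pow_mem D hpow)
  -- Taylor expansion around s n
  set g : K[X] := f.comp (X + C (s n)) with hg
  have hgeval : ∀ z : K, g.eval z = f.eval (z + s n) := by
    intro z
    rw [hg, eval_comp]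
    simp
  have hgdeg : g.natDegree ≤ D := by
    rw [hg, natDegree_comp, natDegree_X_add_C, mul_one]
    exact hfD
  -- interpolation nodes
  set y : ℕ → K := fun k => s (n + k) - s n with hy
  have hyinj : Set.InjOn y ↑(Finset.range (D + 1)) := by
    intro k _ l _ heq
    by_contra hne
    have h1 : y k - y l = s (n + k) - s (n + l) := by rw [hy]; ring
    have h2 : v (y k - y l) ≠ 0 := by
      rw [h1]
      have := diff_val_min hE (by omega : n + l ≠ n + k)
      rw [this]
      exact hδ _
    rw [heq, sub_self, map_zero] at h2
    exact h2 rfl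
  have hglt : g.degree < (Finset.range (D + 1)).card := by
    rw [Finset.card_range]
    exact lt_of_le_of_lt degree_le_natDegree (by exact_mod_cast Nat.lt_succ_of_le hgdeg)
  have hginterp := Lagrange.eq_interpolate hyinj hglt
  -- coefficient bounds
  have hcoeff : ∀ j, v (g.coeff j) ≤ (ρ ^ D)⁻¹ * r ^ (D - j) := by
    intro j
    conv_lhs => rw [hginterp]
    rw [Lagrange.interpolate_apply, Polynomial.finset_sum_coeff]
    refine Valuation.map_sum_le v ?_
    intro i hi
    have hbasis : Lagrange.basis (Finset.range (D + 1)) y i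
        = C (∏ l ∈ (Finset.range (D + 1)).erase i, (y i - y l)⁻¹)
          * ∏ l ∈ (Finset.range (D + 1)).erase i, (X - C (y l)) := by
      rw [Lagrange.basis]
      simp_rw [Lagrange.basisDivisor]
      rw [Finset.prod_mul_distrib, map_prod]
    rw [coeff_C_mul, hbasis, coeff_C_mul, ← mul_assoc, map_mul, map_mul]
    have hgyi : v (g.eval (y i)) ≤ 1 := by
      have : y i + s n = s (n + i) := by rw [hy]; ring
      rw [hgeval, this]
      exact hf _ ⟨n + i, rfl⟩
    have hinvbound : v (∏ l ∈ (Finset.range (D + 1)).erase i, (y i - y l)⁻¹)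
        ≤ (ρ ^ D)⁻¹ := by
      rw [map_prod]
      simp_rw [map_inv₀]
      rw [Finset.prod_inv_distrib]
      have hprod : ρ ^ D ≤ ∏ l ∈ (Finset.range (D + 1)).erase i, v (y i - y l) := by
        have hcard : ((Finset.range (D + 1)).erase i).card = D := by
          rw [Finset.card_erase_of_mem hi, Finset.card_range]
          omega
        calc ρ ^ D = ∏ _l ∈ (Finset.range (D + 1)).erase i, ρ := by
              rw [Finset.prod_const, hcard]
          _ ≤ ∏ l ∈ (Finset.range (D + 1)).erase i, v (y i - y l) := by
              refine Finset.prod_le_prod' fun l hl => ?_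
              have hli : l ≠ i := Finset.ne_of_mem_erase hl
              have h1 : y i - y l = s (n + i) - s (n + l) := by rw [hy]; ring
              rw [h1, diff_val_min hE (by omega : n + l ≠ n + i)]
              have hminlt : min (n + l) (n + i) < n + D := by
                have hiD : i < D + 1 := Finset.mem_range.1 hi
                have hlD : l < D + 1 := Finset.mem_range.1 (Finset.mem_of_mem_erase hl)
                omega
              exact (hE hminlt).le
      have hppos : (0 : Γ₀) < ∏ l ∈ (Finset.range (D + 1)).erase i, v (y i - y l) :=
        lt_of_lt_of_le (zero_lt_iff.2 (pow_ne_zero _ hρne)) hprod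
      rw [inv_le_inv₀ hppos (zero_lt_iff.2 (pow_ne_zero _ hρne))]
      exact hprod
    have hcoefbound : v ((∏ l ∈ (Finset.range (D + 1)).erase i, (X - C (y l))).coeff j)
        ≤ r ^ (D - j) := by
      have hwb : ∀ l ∈ (Finset.range (D + 1)).erase i, v (y l) ≤ r := by
        intro l _
        rcases Nat.eq_zero_or_pos l with rfl | hl
        · rw [hy]
          simp only [Nat.add_zero, sub_self, map_zero]
          exact zero_le'
        · rw [hy]
          have : v (s (n + l) - s n) = v (s (n + 1) - s n) := diff_val hE (by omega)
          rw [this]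
      have hcard2 : ((Finset.range (D + 1)).erase i).card = D := by
        rw [Finset.card_erase_of_mem hi, Finset.card_range]
        omega
      have h := coeff_prod_bound y ((Finset.range (D + 1)).erase i) hwb j
      rwa [hcard2] at h
    calc v (g.eval (y i)) * v (∏ l ∈ (Finset.range (D + 1)).erase i, (y i - y l)⁻¹)
          * v ((∏ l ∈ (Finset.range (D + 1)).erase i, (X - C (y l))).coeff j)
        ≤ 1 * (ρ ^ D)⁻¹ * r ^ (D - j) :=
          mul_le_mul' (mul_le_mul' hgyi hinvbound) hcoefbound
      _ = (ρ ^ D)⁻¹ * r ^ (D - j) := by rw [one_mul]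
  -- final evaluation
  have hdivle1 : ρ / r ≤ 1 := by
    rw [div_eq_mul_inv]
    calc ρ * r⁻¹ ≤ r * r⁻¹ := mul_le_mul_left hρr.le _
      _ = 1 := mul_inv_cancel₀ hrne
  have hxval : f.eval (s n + (s (n + 1) - s n) * (pp : K)) = g.eval (c * (pp : K)) := by
    rw [hgeval]
    congr 1
    rw [hc]
    ring
  rw [hxval, eval_eq_sum_range' (Nat.lt_succ_of_le hgdeg) (c * (pp : K))]
  refine Valuation.map_sum_le v ?_
  intro i hi
  rw [map_mul, map_pow, map_mul]
  rcases Nat.eq_zero_or_pos i with rfl | hipos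
  · rw [pow_zero, mul_one, coeff_zero_eq_eval_zero, hgeval]
    rw [zero_add]
    exact hf (s n) ⟨n, rfl⟩
  · have hiD : i ≤ D := by
      have := Finset.mem_range.1 hi
      omega
    have hvpi : v (pp : K) ^ i ≤ ρ ^ D * (r ^ D)⁻¹ := by
      calc v (pp : K) ^ i ≤ ((ρ / r) ^ D) ^ i := pow_le_pow_left₀ zero_le' hp_le i
        _ = (ρ / r) ^ (D * i) := by rw [← pow_mul]
        _ ≤ (ρ / r) ^ D := pow_le_pow_le_one hdivle1 (Nat.le_mul_of_pos_right D hipos)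
        _ = ρ ^ D * (r ^ D)⁻¹ := by rw [div_pow, div_eq_mul_inv]
    calc v (g.coeff i) * (v c * v (pp : K)) ^ i
        = v (g.coeff i) * (v c ^ i * v (pp : K) ^ i) := by rw [mul_pow]
      _ ≤ ((ρ ^ D)⁻¹ * r ^ (D - i)) * (r ^ i * (ρ ^ D * (r ^ D)⁻¹)) := by
          refine mul_le_mul' (hcoeff i) (mul_le_mul' (le_of_eq (by rw [hr])) hvpi)
      _ = ((r ^ (D - i) * r ^ i) * ((ρ ^ D)⁻¹ * ρ ^ D)) * (r ^ D)⁻¹ := by ac_rfl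
      _ = 1 := by
          rw [← pow_add]
          have hDi : D - i + i = D := by omega
          rw [hDi, inv_mul_cancel₀ (pow_ne_zero _ hρne), mul_one,
            mul_inv_cancel₀ (pow_ne_zero _ hrne)]

end Stmt7Aux

/-!
STATEMENT 7 (main description of the polynomial closure of a
pseudo-convergent sequence).  Multiplicative convention: the gauge
`n ↦ v (s (n+1) - s n)` is strictly decreasing (additively: strictly
increasing).  The sequence `{s_n}_{n ≥ 1}` of the paper is modelled as
`s : ℕ → K` (so `s 0 = s_1`, and the union `⋃_{n ≥ 1}` over all indices of
the sequence becomes a union over all `n : ℕ`).  With `c_n := s_{n+1} − s_n`,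
the set `c_n⁻¹·Br(E)` is `{x : K | ∀ m, v (c_n * x) < v (s (m+1) - s m)}`
and `P n` is its largest prime ideal.  Then the polynomial closure of
`E = range s` equals the union of the set `Lim(E)` of pseudo-limits of `E`
and of the sets `s_n + c_n·P_n`, and this union is disjoint.
-/
theorem stmt_7 {K : Type*} [Field K] {Γ₀ : Type*} [LinearOrderedCommGroupWithZero Γ₀]
    (v : Valuation K Γ₀) (s : ℕ → K)
    (hE : StrictAnti fun n => v (s (n + 1) - s n))
    (P : ℕ → Ideal ↥v.valuationSubring)
    (hP : ∀ n, IsLargestPrimeIn v (P n)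
      {x : K | ∀ m, v ((s (n + 1) - s n) * x) < v (s (m + 1) - s m)}) :
    (polyClosure v (Set.range s) =
      {α : K | ∀ n, v (α - s n) = v (s (n + 1) - s n)} ∪
        ⋃ n : ℕ, {x : K | ∃ p ∈ P n, x = s n + (s (n + 1) - s n) * (p : K)}) ∧
    (∀ n : ℕ, Disjoint {α : K | ∀ m, v (α - s m) = v (s (m + 1) - s m)}
        {x : K | ∃ p ∈ P n, x = s n + (s (n + 1) - s n) * (p : K)}) ∧
    (∀ n m : ℕ, n ≠ m →
      Disjoint {x : K | ∃ p ∈ P n, x = s n + (s (n + 1) - s n) * (p : K)}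
        {x : K | ∃ p ∈ P m, x = s m + (s (m + 1) - s m) * (p : K)}) := by
  refine ⟨?_, ?_, ?_⟩
  · apply Set.Subset.antisymm
    · intro x hx
      by_cases hlim : ∀ n, v (x - s n) = v (s (n + 1) - s n)
      · exact Set.mem_union_left _ hlim
      · obtain ⟨n, p, hp, hxeq⟩ := Stmt7Aux.subset_dir hE P hP hx hlim
        exact Set.mem_union_right _ (Set.mem_iUnion.2 ⟨n, p, hp, hxeq⟩)
    · rintro x (hα | hmem)
      · exact Stmt7Aux.limit_mem hE hα
      · obtain ⟨n, p, hp, rfl⟩ := Set.mem_iUnion.1 hmem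
        exact Stmt7Aux.union_mem hE P hP hp
  · -- Lim(E) disjoint from s n + c n P n
    intro n
    rw [Set.disjoint_left]
    rintro α hα ⟨p, hp, rfl⟩
    have h1 := hα n
    have h2 := (hP n).2.1 p hp n
    simp only [add_sub_cancel_left] at h1
    rw [h1] at h2
    exact lt_irrefl _ h2
  · -- pairwise disjoint
    intro n m hnm
    rw [Set.disjoint_left]
    rintro x ⟨p, hp, rfl⟩ ⟨q, hq, hx⟩
    have key : s n - s m = (s (m + 1) - s m) * (q : K) - (s (n + 1) - s n) * (p : K) := by
      linear_combination hx
    have h1 : v (s n - s m) = v (s (min m n + 1) - s (min m n)) :=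
      Stmt7Aux.diff_val_min hE (Ne.symm hnm)
    have h2 : v (s n - s m) < v (s (min m n + 1) - s (min m n)) := by
      rw [key, sub_eq_add_neg]
      refine v.map_add_lt ((hP m).2.1 q hq (min m n)) ?_
      rw [Valuation.map_neg]
      exact (hP n).2.1 p hp (min m n)
    rw [h1] at h2
    exact lt_irrefl _ h2
end

section
/- Let V be a valuation domain with quotient field K whose rank is strictly greater than 1 (equivalently, V has a nonzero prime ideal that is not maximal). Then the polynomial closure on K is not a topological closure: there is no topology on K such that for every subset S ⊆ K the topological closure of S equals the polynomial closure S̅. -/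
open Polynomial

section Aux

variable {K : Type*} [Field K] {Γ₀ : Type*} [LinearOrderedCommGroupWithZero Γ₀]

/-- If `a ≠ 0` and `a < 1` then `(a^2)⁻¹ * a > 1`. -/
lemma aux_inv_sq_mul_not_le {a : Γ₀} (ha : a ≠ 0) (hlt : a < 1) :
    ¬(a ^ 2)⁻¹ * a ≤ 1 := by
  intro h
  have h2 : a ≤ a ^ 2 := by
    calc a = a ^ 2 * ((a ^ 2)⁻¹ * a) := by
            rw [← mul_assoc, mul_inv_cancel₀ (pow_ne_zero 2 ha), one_mul]
      _ ≤ a ^ 2 * 1 := mul_le_mul_right h _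
      _ = a ^ 2 := mul_one _
  have h3 : (1 : Γ₀) ≤ a := by
    have h4 := mul_le_mul_right h2 a⁻¹
    rwa [inv_mul_cancel₀ ha, pow_two, ← mul_assoc, inv_mul_cancel₀ ha, one_mul] at h4
  exact absurd hlt (not_lt.2 h3)

variable (v : Valuation K Γ₀) {t s : K}

/-- Monotonicity of powers of an element of value `< 1`. -/
lemma aux_pow_le (hvtlt : v t < 1) {m k : ℕ} (h : m ≤ k) : v t ^ k ≤ v t ^ m := by
  have hk : v t ^ k = v t ^ m * v t ^ (k - m) := by
    rw [← pow_add]; congr 1; omega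
  rw [hk]
  exact mul_le_of_le_one_right' (pow_le_one' hvtlt.le _)

/-- Exact value of differences of powers of `t`. -/
lemma aux_sub_pow (hvtlt : v t < 1) {a b : ℕ} (hab : a < b) :
    v (t ^ a - t ^ b) = v t ^ a := by
  have hfac : t ^ a - t ^ b = t ^ a * (1 - t ^ (b - a)) := by
    have hb : a + (b - a) = b := by omega
    rw [mul_sub, mul_one, ← pow_add, hb]
  have hlt : v (t ^ (b - a)) < 1 := by
    rw [v.map_pow]
    calc v t ^ (b - a) ≤ v t ^ 1 := aux_pow_le v hvtlt (by omega)
      _ = v t := pow_one _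
      _ < 1 := hvtlt
  rw [hfac, v.map_mul, v.map_pow, v.map_one_sub_of_lt hlt, mul_one]

lemma aux_sub_pow_min (hvtlt : v t < 1) {a b : ℕ} (hab : a ≠ b) :
    v (t ^ a - t ^ b) = v t ^ min a b := by
  rcases Nat.lt_or_ge a b with h | h
  · rw [aux_sub_pow v hvtlt h, Nat.min_eq_left h.le]
  · have h' : b < a := by omega
    rw [v.map_sub_swap, aux_sub_pow v hvtlt h', Nat.min_eq_right h'.le]

/-- Value of `t + s - t^j` for `j ≥ 2`, when `v s < v t < 1`. -/
lemma aux_x0_sub (hvtlt : v t < 1) (hvst : v s < v t) {j : ℕ} (hj : 2 ≤ j) :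
    v (t + s - t ^ j) = v t := by
  have h1 : t + s - t ^ j = s + (t ^ 1 - t ^ j) := by rw [pow_one]; ring
  have h2 : v (t ^ 1 - t ^ j) = v t := by
    rw [aux_sub_pow v hvtlt (by omega : 1 < j), pow_one]
  rw [h1, v.map_add_eq_of_lt_right (by rw [h2]; exact hvst), h2]

/-- `t + s` is not in the polynomial closure of `{t^k : k ≥ 2}`. -/
lemma aux_h2 (hvt0 : v t ≠ 0) (hvtlt : v t < 1) (hvst : v s < v t) :
    t + s ∉ polyClosure v ((fun k : ℕ => t ^ k) '' {k : ℕ | 2 ≤ k}) := by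
  intro hmem
  have heval : ∀ a : K, (C (t ^ 2)⁻¹ * (X - C (t ^ 2))).eval a = (t ^ 2)⁻¹ * (a - t ^ 2) := by
    intro a; simp
  have hadm : ∀ a ∈ (fun k : ℕ => t ^ k) '' {k : ℕ | 2 ≤ k},
      v ((C (t ^ 2)⁻¹ * (X - C (t ^ 2))).eval a) ≤ 1 := by
    rintro a ⟨k, hk, rfl⟩
    rw [heval, v.map_mul, map_inv₀, v.map_pow]
    have h1 : v (t ^ k - t ^ 2) ≤ v t ^ 2 := by
      refine v.map_sub_le ?_ ?_
      · rw [v.map_pow]; exact aux_pow_le v hvtlt hk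
      · rw [v.map_pow]
    calc (v t ^ 2)⁻¹ * v (t ^ k - t ^ 2) ≤ (v t ^ 2)⁻¹ * v t ^ 2 := mul_le_mul_right h1 _
      _ = 1 := inv_mul_cancel₀ (pow_ne_zero 2 hvt0)
  have hbad := hmem _ hadm
  rw [heval, v.map_mul, map_inv₀, v.map_pow, aux_x0_sub v hvtlt hvst le_rfl] at hbad
  exact aux_inv_sq_mul_not_le hvt0 hvtlt hbad

/-- `t + s` is not in the polynomial closure of `{t}`. -/
lemma aux_h3 (hvs0 : v s ≠ 0) (hvs1 : v s < 1) :
    t + s ∉ polyClosure v {t} := by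
  intro hmem
  have hadm : ∀ a ∈ ({t} : Set K), v ((C (s ^ 2)⁻¹ * (X - C t)).eval a) ≤ 1 := by
    intro a ha
    rw [Set.mem_singleton_iff] at ha
    subst ha
    simp
  have hbad := hmem _ hadm
  have he : (C (s ^ 2)⁻¹ * (X - C t)).eval (t + s) = (s ^ 2)⁻¹ * s := by
    simp [add_sub_cancel_left]
  rw [he, v.map_mul, map_inv₀, v.map_pow] at hbad
  exact aux_inv_sq_mul_not_le hvs0 hvs1 hbad

/-- The main catching lemma: `t + s` is in the polynomial closure of `{t^k : k ≥ 1}`. -/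
lemma aux_h1 (hvt0 : v t ≠ 0) (hvtlt : v t < 1) (hkey : ∀ k : ℕ, v s < v t ^ k) :
    t + s ∈ polyClosure v ((fun k : ℕ => t ^ k) '' {k : ℕ | 2 ≤ k} ∪ {t}) := by
  classical
  have hvst : v s < v t := by simpa using hkey 1
  intro f hf
  have hfk : ∀ k : ℕ, 1 ≤ k → v (f.eval (t ^ k)) ≤ 1 := by
    intro k hk
    rcases Nat.lt_or_ge k 2 with h | h
    · have hk1 : k = 1 := by omega
      subst hk1
      apply hf
      right
      simp
    · exact hf _ (Or.inl ⟨k, h, rfl⟩)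
  set n := f.natDegree with hn
  have hne : ∀ {a b : ℕ}, a < b → t ^ a ≠ t ^ b := by
    intro a b hab heq
    have h0 := aux_sub_pow v hvtlt hab
    rw [heq, sub_self, v.map_zero] at h0
    exact pow_ne_zero a hvt0 h0.symm
  have hinj : Set.InjOn (fun k : ℕ => t ^ k) (Finset.Icc 1 (n + 1)) := by
    intro a _ b _ hab
    by_contra hcon
    rcases Nat.lt_or_ge a b with h | h
    · exact hne h hab
    · exact hne (show b < a by omega) hab.symm
  have hdeg : f.degree < (Finset.Icc 1 (n + 1)).card := by
    rw [Nat.card_Icc]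
    refine lt_of_le_of_lt f.degree_le_natDegree ?_
    exact_mod_cast (by omega : n < n + 1 + 1 - 1)
  have hrep := Lagrange.eq_interpolate hinj hdeg
  have hevalx : f.eval (t + s) = ∑ i ∈ Finset.Icc 1 (n + 1),
      f.eval (t ^ i) * (Lagrange.basis (Finset.Icc 1 (n + 1)) (fun k : ℕ => t ^ k) i).eval
        (t + s) := by
    conv_lhs => rw [hrep]
    rw [Lagrange.interpolate_apply, Polynomial.eval_finset_sum]
    exact Finset.sum_congr rfl fun i _ => by rw [eval_mul, eval_C]
  rw [hevalx]
  apply v.map_sum_le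
  intro i hi
  have hi1 : 1 ≤ i := (Finset.mem_Icc.1 hi).1
  rw [v.map_mul]
  -- bound on the evaluated Lagrange basis polynomial
  set E : Finset ℕ := (Finset.Icc 1 (n + 1)).erase i with hE
  have hbasis :
      v ((Lagrange.basis (Finset.Icc 1 (n + 1)) (fun k : ℕ => t ^ k) i).eval (t + s)) ≤ 1 := by
    rw [Lagrange.basis, Polynomial.eval_prod, map_prod]
    have hfac : ∀ j ∈ E,
        v ((Lagrange.basisDivisor (t ^ i) (t ^ j)).eval (t + s))
          = (v (t ^ i - t ^ j))⁻¹ * v (t + s - t ^ j) := by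
      intro j _
      have : (Lagrange.basisDivisor (t ^ i) (t ^ j)).eval (t + s)
          = (t ^ i - t ^ j)⁻¹ * (t + s - t ^ j) := by
        simp [Lagrange.basisDivisor]
      rw [this, v.map_mul, map_inv₀]
    rw [Finset.prod_congr rfl hfac, Finset.prod_mul_distrib, Finset.prod_inv_distrib]
    set D : Γ₀ := ∏ j ∈ E, v (t ^ i - t ^ j) with hD
    set Nm : Γ₀ := ∏ j ∈ E, v (t + s - t ^ j) with hNm
    have hjE : ∀ j ∈ E, j ≠ i ∧ 1 ≤ j := by
      intro j hj
      have h1 := Finset.mem_erase.1 hj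
      exact ⟨h1.1, (Finset.mem_Icc.1 h1.2).1⟩
    have hD0 : D ≠ 0 := by
      rw [hD]
      refine Finset.prod_ne_zero_iff.2 fun j hj => ?_
      rw [aux_sub_pow_min v hvtlt (fun h => (hjE j hj).1 h.symm)]
      exact pow_ne_zero _ hvt0
    have hND : Nm ≤ D := by
      rcases Nat.lt_or_ge i 2 with hilt | hige
      · -- i = 1 : the two products agree factorwise
        have hi1' : i = 1 := by omega
        refine le_of_eq (Finset.prod_congr rfl fun j hj => ?_)
        have hj2 : 2 ≤ j := by
          rcases hjE j hj with ⟨hji, hj1⟩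
          rcases Nat.lt_or_ge j 2 with h | h
          · omega
          · exact h
        rw [aux_x0_sub v hvtlt hvst hj2, hi1',
          aux_sub_pow v hvtlt (by omega : 1 < j), pow_one]
      · -- 2 ≤ i : numerator ≤ v s < v t ^ N ≤ denominator
        have h1E : 1 ∈ E := by
          rw [hE, Finset.mem_erase]
          exact ⟨by omega, Finset.mem_Icc.2 ⟨le_rfl, by omega⟩⟩
        have hNum : Nm ≤ v s := by
          rw [hNm, ← Finset.mul_prod_erase E _ h1E]
          have hrest : ∏ j ∈ E.erase 1, v (t + s - t ^ j) ≤ 1 := by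
            refine Finset.prod_le_one' fun j hj => ?_
            have hj' := Finset.mem_erase.1 hj
            have hj2 : 2 ≤ j := by
              rcases hjE j hj'.2 with ⟨hji, hj1⟩
              have := hj'.1
              omega
            rw [aux_x0_sub v hvtlt hvst hj2]
            exact hvtlt.le
          calc v (t + s - t ^ 1) * ∏ j ∈ E.erase 1, v (t + s - t ^ j)
              ≤ v (t + s - t ^ 1) * 1 := mul_le_mul_right hrest _
            _ = v s := by
                rw [mul_one, pow_one, show t + s - t = s by ring]
        have hDen : v t ^ (∑ j ∈ E, (i + j)) ≤ D := by
          rw [← Finset.prod_pow_eq_pow_sum, hD]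
          refine Finset.prod_le_prod' fun j hj => ?_
          rw [aux_sub_pow_min v hvtlt (fun h => (hjE j hj).1 h.symm)]
          exact aux_pow_le v hvtlt (by omega : min i j ≤ i + j)
        calc Nm ≤ v s := hNum
          _ ≤ v t ^ (∑ j ∈ E, (i + j)) := (hkey _).le
          _ ≤ D := hDen
    calc D⁻¹ * Nm ≤ D⁻¹ * D := mul_le_mul_right hND _
      _ = 1 := inv_mul_cancel₀ hD0
  calc v (f.eval (t ^ i)) *
      v ((Lagrange.basis (Finset.Icc 1 (n + 1)) (fun k : ℕ => t ^ k) i).eval (t + s))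
      ≤ 1 * 1 := mul_le_mul' (hfk i hi1) hbasis
    _ = 1 := one_mul 1

end Aux

/-!
STATEMENT 8.  `V = v.valuationSubring` has rank strictly greater than `1`,
expressed (as in the statement) by the existence of a nonzero prime ideal of
`V` that is not maximal.  Then there is no topology on `K` whose closure
operator is the polynomial closure.
-/
theorem stmt_8 {K : Type*} [Field K] {Γ₀ : Type*} [LinearOrderedCommGroupWithZero Γ₀]
    (v : Valuation K Γ₀)
    (hrank : ∃ P' : Ideal ↥v.valuationSubring, P'.IsPrime ∧ P' ≠ ⊥ ∧ ¬P'.IsMaximal) :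
    ¬∃ τ : TopologicalSpace K, ∀ S : Set K, @closure K τ S = polyClosure v S := by
  rintro ⟨τ, hτ⟩
  obtain ⟨P, hP, hP0, hPm⟩ := hrank
  have hle : P ≤ IsLocalRing.maximalIdeal v.valuationSubring :=
    IsLocalRing.le_maximalIdeal hP.ne_top
  have hne : P ≠ IsLocalRing.maximalIdeal v.valuationSubring := by
    intro h
    exact hPm (h ▸ IsLocalRing.maximalIdeal.isMaximal _)
  obtain ⟨tbar, htmem, htP⟩ := SetLike.exists_of_lt (lt_of_le_of_ne hle hne)
  obtain ⟨sbar, hsmem, hs0⟩ := Submodule.exists_mem_ne_zero_of_ne_bot hP0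
  set t : K := (tbar : K) with ht
  set s : K := (sbar : K) with hs
  have hs0' : s ≠ 0 := fun h => hs0 (Subtype.ext h)
  have ht0 : t ≠ 0 := by
    intro h
    exact htP (by rw [show tbar = 0 from Subtype.ext h]; exact P.zero_mem)
  have hvt0 : v t ≠ 0 := (Valuation.ne_zero_iff v).2 ht0
  have hvs0 : v s ≠ 0 := (Valuation.ne_zero_iff v).2 hs0'
  have hvt1 : v t ≤ 1 := tbar.2
  have hvtlt : v t < 1 := by
    rcases lt_or_eq_of_le hvt1 with h | h
    · exact h
    · exfalso
      have hunit : IsUnit tbar := by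
        refine IsUnit.of_mul_eq_one (a := tbar) ⟨t⁻¹, ?_⟩ ?_
        · rw [Valuation.mem_valuationSubring_iff, map_inv₀, h, inv_one]
        · exact Subtype.ext (by
            show t * t⁻¹ = 1
            field_simp)
      exact ((IsLocalRing.mem_maximalIdeal tbar).1 htmem) hunit
  have hkey : ∀ k : ℕ, v s < v t ^ k := by
    intro k
    by_contra hcon
    push_neg at hcon
    have hy : v (t ^ k * s⁻¹) ≤ 1 := by
      rw [v.map_mul, map_inv₀, v.map_pow]
      calc v t ^ k * (v s)⁻¹ ≤ v s * (v s)⁻¹ := mul_le_mul_left hcon _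
        _ = 1 := mul_inv_cancel₀ hvs0
    have htkP : tbar ^ k ∈ P := by
      have heq : tbar ^ k = sbar * ⟨t ^ k * s⁻¹, hy⟩ := by
        ext
        push_cast
        field_simp
        rw [ht, hs]; ring
      rw [heq]
      exact Ideal.mul_mem_right _ _ hsmem
    exact htP (hP.mem_of_pow_mem k htkP)
  have hvs1 : v s < 1 := by simpa using hkey 0
  have hvst : v s < v t := by simpa using hkey 1
  -- the three facts about polynomial closures
  have h1 := aux_h1 v hvt0 hvtlt hkey
  have h2 := aux_h2 v hvt0 hvtlt hvst
  have h3 := aux_h3 (t := t) v hvs0 hvs1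
  -- contradiction with `closure_union`
  have hu : @closure K τ ((fun k : ℕ => t ^ k) '' {k : ℕ | 2 ≤ k} ∪ {t})
      = @closure K τ ((fun k : ℕ => t ^ k) '' {k : ℕ | 2 ≤ k}) ∪ @closure K τ {t} := by
    letI := τ
    exact closure_union
  have hx2 : t + s ∈ @closure K τ ((fun k : ℕ => t ^ k) '' {k : ℕ | 2 ≤ k}) ∪
      @closure K τ {t} := by
    rw [← hu, hτ]
    exact h1
  rcases hx2 with h | h
  · rw [hτ] at h
    exact h2 h
  · rw [hτ] at h
    exact h3 h
end

section
/- Let V be a valuation domain with quotient field K, maximal ideal M and associated valuation v, and suppose V has a nonzero nonmaximal prime ideal P'. Let t ∈ V∖P' be a nonunit, and let P be the largest prime ideal of V strictly contained in tV. Let E := {t^n}_{n≥1} and E' := {t^n}_{n≥2}. Then the polynomial closures satisfy E̅ = E̅' ∪ (t + P), with (t + P) ∩ E̅' = ∅; in particular, for every nonzero p ∈ P, the element t + p lies in E̅ but not in E̅' ∪ {t}, so E̅ ≠ E̅' ∪ {t} = E̅' ∪ (closure of {t}). -/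
open Polynomial

section Aux

variable {K : Type*} [Field K] {Γ₀ : Type*} [LinearOrderedCommGroupWithZero Γ₀]
  {v : Valuation K Γ₀}

theorem aux_val_sub_pow_lt {t : K} (hγ1 : v t < 1) {a b : ℕ} (hab : a < b) :
    v (t ^ a - t ^ b) = v t ^ a := by
  have h1 : t ^ a - t ^ b = t ^ a * (1 - t ^ (b - a)) := by
    rw [mul_sub, mul_one, ← pow_add]
    congr 2
    omega
  have h2 : v (t ^ (b - a)) < 1 := by
    rw [v.map_pow]
    calc v t ^ (b - a) ≤ v t ^ 1 := pow_le_pow_right_of_le_one' hγ1.le (by omega)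
      _ = v t := pow_one _
      _ < 1 := hγ1
  rw [h1, v.map_mul, v.map_pow, v.map_one_sub_of_lt h2, mul_one]

theorem aux_val_sub_pow {t : K} (hγ1 : v t < 1) {a b : ℕ} (hab : a ≠ b) :
    v (t ^ a - t ^ b) = v t ^ min a b := by
  rcases lt_or_gt_of_ne hab with h | h
  · rw [min_eq_left h.le]
    exact aux_val_sub_pow_lt hγ1 h
  · rw [min_eq_right h.le, Valuation.map_sub_swap]
    exact aux_val_sub_pow_lt hγ1 h

/-- Key lemma: if `v p ≤ v t ^ n` for all `n`, then any polynomial which is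
integer-valued on `{t^n : n ≥ 1}` is integer-valued at `t + p`.  Proved by
Lagrange interpolation at the nodes `t, t², …, t^(d+1)`. -/
theorem aux_mem_cl {t : K} (hγ0 : v t ≠ 0) (hγ1 : v t < 1)
    {p : K} (hp : ∀ n : ℕ, v p ≤ v t ^ n) (f : K[X])
    (hf : ∀ n : ℕ, 1 ≤ n → v (f.eval (t ^ n)) ≤ 1) :
    v (f.eval (t + p)) ≤ 1 := by
  classical
  set γ := v t with hγ
  have hγpos : (0 : Γ₀) < γ := zero_lt_iff.mpr hγ0
  have honeinv : (1 : Γ₀) ≤ γ⁻¹ := by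
    rw [one_le_inv_iff₀]
    exact ⟨hγpos, hγ1.le⟩
  set d := f.natDegree with hd
  set N := (d + 1) * (d + 1) with hN
  set s : Finset ℕ := Finset.range (d + 1) with hs
  set x : ℕ → K := fun k => t ^ (k + 1) with hxdef
  have hinj : Set.InjOn x s := by
    intro a _ b _ hab
    by_contra hne
    have h1 : v (x a - x b) = γ ^ min (a + 1) (b + 1) := aux_val_sub_pow hγ1 (by omega)
    rw [hab, sub_self, v.map_zero] at h1
    exact pow_ne_zero _ hγ0 h1.symm
  have hdeg : f.degree < (s.card : ℕ) := by
    rw [hs, Finset.card_range]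
    exact lt_of_le_of_lt Polynomial.degree_le_natDegree (by exact_mod_cast Nat.lt_succ_self d)
  have hrep := Lagrange.eq_interpolate (v := x) hinj hdeg
  have hplt : v p < γ := lt_of_le_of_lt (hp 2) (by
    calc γ ^ 2 = γ * γ := by rw [pow_two]
      _ < γ * 1 := mul_lt_mul_of_le_of_lt_of_nonneg_of_pos le_rfl hγ1 zero_le' hγpos
      _ = γ := mul_one γ)
  have hyj : ∀ j : ℕ, 1 ≤ j → v (t + p - x j) = γ := by
    intro j hj
    have h1 : t + p - x j = (t ^ 1 - t ^ (j + 1)) + p := by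
      simp only [hxdef, pow_one]; ring
    have h2 : v (t ^ 1 - t ^ (j + 1)) = γ := by
      rw [aux_val_sub_pow_lt hγ1 (by omega : 1 < j + 1), pow_one]
    rw [h1, Valuation.map_add_eq_of_lt_left _ (h2 ▸ hplt), h2]
  have hBD : ∀ a b y : K, (Lagrange.basisDivisor a b).eval y = (a - b)⁻¹ * (y - b) := by
    intro a b y
    simp [Lagrange.basisDivisor]
  conv_lhs => rw [hrep]
  rw [Lagrange.interpolate_apply, Polynomial.eval_finset_sum]
  apply Valuation.map_sum_le
  intro k hk
  rw [Polynomial.eval_mul, Polynomial.eval_C, v.map_mul]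
  have hfk : v (f.eval (x k)) ≤ 1 := hf (k + 1) (by omega)
  have hbasis : v ((Lagrange.basis s x k).eval (t + p)) ≤ 1 := by
    rw [Lagrange.basis, Polynomial.eval_prod, map_prod]
    rcases Nat.eq_zero_or_pos k with rfl | hk1
    · have hone : ∀ j ∈ s.erase 0, v ((Lagrange.basisDivisor (x 0) (x j)).eval (t + p)) = 1 := by
        intro j hj
        have hj0 : j ≠ 0 := (Finset.mem_erase.mp hj).1
        rw [hBD, v.map_mul, v.map_inv]
        have h1 : v (x 0 - x j) = γ := by
          have := aux_val_sub_pow_lt (v := v) hγ1 (a := 1) (b := j + 1) (by omega)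
          rw [pow_one] at this
          simpa [hxdef] using this
        have h2 : v (t + p - x j) = γ := hyj j (by omega)
        rw [h1, h2, inv_mul_cancel₀ hγ0]
      rw [Finset.prod_congr rfl hone, Finset.prod_const_one]
    · have h0mem : (0 : ℕ) ∈ s.erase k := by
        refine Finset.mem_erase.mpr ⟨by omega, ?_⟩
        rw [hs, Finset.mem_range]; omega
      rw [← Finset.mul_prod_erase _ _ h0mem]
      have hf0 : v ((Lagrange.basisDivisor (x k) (x 0)).eval (t + p)) ≤ γ ^ N * γ⁻¹ := by
        rw [hBD, v.map_mul, v.map_inv]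
        have h1 : v (x k - x 0) = γ := by
          rw [Valuation.map_sub_swap]
          have := aux_val_sub_pow_lt (v := v) hγ1 (a := 1) (b := k + 1) (by omega)
          rw [pow_one] at this
          simpa [hxdef] using this
        have h2 : t + p - x 0 = p := by
          simp only [hxdef, pow_one]; ring
        rw [h1, h2, mul_comm]
        exact mul_le_mul_left (hp N) _
      have hrest : ∀ j ∈ (s.erase k).erase 0,
          v ((Lagrange.basisDivisor (x k) (x j)).eval (t + p)) ≤ γ⁻¹ ^ d := by
        intro j hj
        have h1 := Finset.mem_erase.mp hj
        have h2 := Finset.mem_erase.mp h1.2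
        have hj0 : j ≠ 0 := h1.1
        have hjk : j ≠ k := h2.1
        have hjd : j < d + 1 := by
          have := h2.2; rw [hs, Finset.mem_range] at this; exact this
        rw [hBD, v.map_mul, v.map_inv]
        have hv1 : v (x k - x j) = γ ^ (min k j + 1) := by
          have := aux_val_sub_pow (v := v) hγ1 (a := k + 1) (b := j + 1) (by omega)
          have hmin : min (k + 1) (j + 1) = min k j + 1 := by omega
          rw [hmin] at this
          exact this
        have hv2 : v (t + p - x j) = γ := hyj j (by omega)
        rw [hv1, hv2]
        have hsimp : (γ ^ (min k j + 1))⁻¹ * γ = γ⁻¹ ^ min k j := by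
          rw [pow_succ, mul_inv, inv_pow, mul_assoc, inv_mul_cancel₀ hγ0, mul_one]
        rw [hsimp]
        exact pow_le_pow_right₀ honeinv (by omega)
      calc v ((Lagrange.basisDivisor (x k) (x 0)).eval (t + p)) *
            ∏ j ∈ (s.erase k).erase 0, v ((Lagrange.basisDivisor (x k) (x j)).eval (t + p))
          ≤ (γ ^ N * γ⁻¹) * (γ⁻¹ ^ d) ^ ((s.erase k).erase 0).card :=
            mul_le_mul' hf0 (Finset.prod_le_pow_card _ _ _ hrest)
        _ = γ ^ N * γ⁻¹ ^ (d * ((s.erase k).erase 0).card + 1) := by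
            rw [mul_assoc, ← pow_mul, ← pow_succ']
        _ ≤ γ ^ N * γ⁻¹ ^ N := by
            apply mul_le_mul_right
            apply pow_le_pow_right₀ honeinv
            have hc : ((s.erase k).erase 0).card ≤ d := by
              calc ((s.erase k).erase 0).card ≤ (s.erase k).card := Finset.card_le_card
                    (Finset.erase_subset _ _)
                _ = d := by rw [Finset.card_erase_of_mem hk, hs, Finset.card_range]; omega
            have := Nat.mul_le_mul_left d hc
            have hNe : N = d * d + 2 * d + 1 := by rw [hN]; ring
            omega
        _ = 1 := by
            rw [inv_pow, mul_inv_cancel₀ (pow_ne_zero _ hγ0)]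
  calc v (f.eval (x k)) * v ((Lagrange.basis s x k).eval (t + p)) ≤ 1 * 1 :=
        mul_le_mul' hfk hbasis
    _ = 1 := one_mul 1

end Aux

/-!
STATEMENT 9.  `V = v.valuationSubring` has a nonzero nonmaximal prime ideal
`P'`, `t ∈ V∖P'` is a nonunit, and `P` is the largest prime ideal of `V`
strictly contained in `tV = Ideal.span {t}`.  With `E = {tⁿ : n ≥ 1}` and
`E' = {tⁿ : n ≥ 2}` (as subsets of `K`):
`E̅ = E̅' ∪ (t + P)`, the set `t + P` is disjoint from `E̅'`, for every
nonzero `p ∈ P` the element `t + p` lies in `E̅` but not in `E̅' ∪ {t}`,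
and hence `E̅ ≠ E̅' ∪ {t}`; moreover `{t}` is polynomially closed, so
`E̅' ∪ {t} = E̅' ∪ (closure of {t})`.
-/
theorem stmt_9 {K : Type*} [Field K] {Γ₀ : Type*} [LinearOrderedCommGroupWithZero Γ₀]
    (v : Valuation K Γ₀)
    (P' : Ideal ↥v.valuationSubring) (hP' : P'.IsPrime) (hP'0 : P' ≠ ⊥)
    (hP'M : ¬P'.IsMaximal)
    (t : ↥v.valuationSubring) (htP' : t ∉ P') (htu : ¬IsUnit t)
    (P : Ideal ↥v.valuationSubring)
    (hP : P.IsPrime ∧ P < Ideal.span {t} ∧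
      ∀ Q : Ideal ↥v.valuationSubring, Q.IsPrime → Q < Ideal.span {t} → Q ≤ P) :
    (polyClosure v {x : K | ∃ n : ℕ, 1 ≤ n ∧ x = (t : K) ^ n} =
        polyClosure v {x : K | ∃ n : ℕ, 2 ≤ n ∧ x = (t : K) ^ n} ∪
          {x : K | ∃ p ∈ P, x = (t : K) + (p : K)}) ∧
    Disjoint {x : K | ∃ p ∈ P, x = (t : K) + (p : K)}
      (polyClosure v {x : K | ∃ n : ℕ, 2 ≤ n ∧ x = (t : K) ^ n}) ∧
    (∀ p : ↥v.valuationSubring, p ∈ P → p ≠ 0 →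
      (t : K) + (p : K) ∈ polyClosure v {x : K | ∃ n : ℕ, 1 ≤ n ∧ x = (t : K) ^ n} ∧
      (t : K) + (p : K) ∉
        polyClosure v {x : K | ∃ n : ℕ, 2 ≤ n ∧ x = (t : K) ^ n} ∪ {(t : K)}) ∧
    polyClosure v {x : K | ∃ n : ℕ, 1 ≤ n ∧ x = (t : K) ^ n} ≠
      polyClosure v {x : K | ∃ n : ℕ, 2 ≤ n ∧ x = (t : K) ^ n} ∪ {(t : K)} ∧
    polyClosure v {(t : K)} = {(t : K)} := by
  classical
  set E : Set K := {x : K | ∃ n : ℕ, 1 ≤ n ∧ x = (t : K) ^ n} with hE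
  set E' : Set K := {x : K | ∃ n : ℕ, 2 ≤ n ∧ x = (t : K) ^ n} with hE'
  set T : Set K := {x : K | ∃ p ∈ P, x = (t : K) + (p : K)} with hT
  -- basic facts about `γ = v t`
  have ht0 : t ≠ 0 := fun h => htP' (h ▸ P'.zero_mem)
  have ht0K : (t : K) ≠ 0 := fun h => ht0 (by exact_mod_cast h)
  set γ := v (t : K) with hγdef
  have hγ0 : γ ≠ 0 := fun h => ht0K ((Valuation.zero_iff v).mp h)
  have hγpos : (0 : Γ₀) < γ := zero_lt_iff.mpr hγ0
  have hγle : γ ≤ 1 := t.2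
  have hγ1 : γ < 1 := by
    rcases lt_or_eq_of_le hγle with h | h
    · exact h
    · exfalso
      apply htu
      have hmem : (t : K)⁻¹ ∈ v.valuationSubring := by
        rw [Valuation.mem_valuationSubring_iff, v.map_inv, ← hγdef, h, inv_one]
      refine IsUnit.of_mul_eq_one (a := t) ⟨(t : K)⁻¹, hmem⟩ (Subtype.ext ?_)
      push_cast
      exact mul_inv_cancel₀ ht0K
  have hanti : ∀ {m n : ℕ}, m ≤ n → γ ^ n ≤ γ ^ m := fun h =>
    pow_le_pow_right_of_le_one' hγ1.le h
  have hltpow : ∀ m n : ℕ, m < n → γ ^ n < γ ^ m := by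
    intro m n h
    calc γ ^ n ≤ γ ^ (m + 1) := hanti (by omega)
      _ = γ ^ m * γ := pow_succ γ m
      _ < γ ^ m * 1 := mul_lt_mul_of_le_of_lt_of_nonneg_of_pos le_rfl hγ1 zero_le'
            (zero_lt_iff.mpr (pow_ne_zero _ hγ0))
      _ = γ ^ m := mul_one _
  -- divisibility in the valuation subring
  have hdvd : ∀ a b : ↥v.valuationSubring, v (b : K) ≤ v (a : K) → a ∣ b := by
    intro a b h
    by_cases ha : (a : K) = 0
    · have hb0 : (b : K) = 0 := by
        rw [ha, v.map_zero, le_zero_iff] at h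
        exact (Valuation.zero_iff v).mp h
      have hbz : b = 0 := by exact_mod_cast hb0
      have haz : a = 0 := by exact_mod_cast ha
      rw [hbz, haz]
    · have ha0 : v (a : K) ≠ 0 := fun h0 => ha ((Valuation.zero_iff v).mp h0)
      have hmem : (b : K) / (a : K) ∈ v.valuationSubring := by
        rw [Valuation.mem_valuationSubring_iff, v.map_div, div_eq_mul_inv]
        calc v (b : K) * (v (a : K))⁻¹ ≤ v (a : K) * (v (a : K))⁻¹ := mul_le_mul_left h _
          _ = 1 := mul_inv_cancel₀ ha0
      refine ⟨⟨(b : K) / (a : K), hmem⟩, Subtype.ext ?_⟩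
      push_cast
      rw [mul_comm, div_mul_cancel₀ _ ha]
  -- elements of P have value below every power of γ
  have hval : ∀ p ∈ P, ∀ n : ℕ, v (p : K) ≤ γ ^ n := by
    intro p hp n
    rcases ValuationRing.dvd_total (t ^ n) p with h | h
    · obtain ⟨c, rfl⟩ := h
      push_cast
      rw [v.map_mul, v.map_pow]
      exact mul_le_of_le_one_right' c.2
    · exfalso
      obtain ⟨c, hc⟩ := h
      have h1 : t ^ n ∈ P := by rw [hc]; exact Ideal.mul_mem_right _ _ hp
      have h2 : t ∈ P := hP.1.mem_of_pow_mem n h1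
      exact hP.2.1.not_ge ((Ideal.span_singleton_le_iff_mem P).mpr h2)
  -- elements of value below every power of γ are in P
  have hPmem : ∀ z : K, (∀ n : ℕ, v z ≤ γ ^ n) → ∃ p ∈ P, z = (p : K) := by
    intro z hz
    have hz1 : v z ≤ 1 := by simpa using hz 0
    set J : Ideal ↥v.valuationSubring := ⨅ n : ℕ, Ideal.span {t ^ (n + 1)} with hJ
    have hmemJ : ∀ w : ↥v.valuationSubring, w ∈ J ↔ ∀ n : ℕ, v (w : K) ≤ γ ^ (n + 1) := by
      intro w
      rw [hJ, Submodule.mem_iInf]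
      refine forall_congr' fun n => ?_
      rw [Ideal.mem_span_singleton]
      constructor
      · rintro ⟨c, rfl⟩
        push_cast
        rw [v.map_mul, v.map_pow]
        exact mul_le_of_le_one_right' c.2
      · intro h
        refine hdvd _ _ ?_
        push_cast
        rw [v.map_pow]
        exact h
    have hsq : ∀ n : ℕ, γ ^ (n + 1) ≠ 0 := fun n => pow_ne_zero _ hγ0
    have hJprime : J.IsPrime := by
      constructor
      · intro h
        have h1 : (1 : ↥v.valuationSubring) ∈ J := h ▸ Submodule.mem_top
        have h2 := (hmemJ 1).mp h1 0
        rw [OneMemClass.coe_one, v.map_one, pow_one] at h2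
        exact absurd (lt_of_le_of_lt h2 hγ1) (lt_irrefl 1)
      · intro a b hab
        by_contra hcon
        push_neg at hcon
        obtain ⟨ha, hb⟩ := hcon
        rw [hmemJ] at ha hb
        push_neg at ha hb
        obtain ⟨m, hm⟩ := ha
        obtain ⟨n, hn⟩ := hb
        have hab2 := (hmemJ _).mp hab (m + n + 1)
        have hlt : γ ^ (m + n + 1 + 1) < v ((a : K) * (b : K)) := by
          have e : γ ^ (m + n + 1 + 1) = γ ^ (m + 1) * γ ^ (n + 1) := by
            rw [← pow_add]; congr 1; omega
          rw [e, v.map_mul]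
          exact mul_lt_mul'' hm hn zero_le' zero_le'
        rw [show v ((a * b : ↥v.valuationSubring) : K) = v ((a : K) * (b : K)) by push_cast; rfl]
          at hab2
        exact absurd hab2 (not_le.mpr hlt)
    have hJle : J ≤ Ideal.span {t} := by
      intro w hw
      rw [Ideal.mem_span_singleton]
      refine hdvd _ _ ?_
      have := (hmemJ w).mp hw 0
      rwa [pow_one] at this
    have hJne : J ≠ Ideal.span {t} := by
      intro h
      have h1 : t ∈ J := h ▸ Ideal.mem_span_singleton_self t
      have h2 := (hmemJ t).mp h1 1
      exact absurd h2 (not_le.mpr (by simpa [pow_one] using hltpow 1 2 one_lt_two))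
    have hJP : J ≤ P := hP.2.2 J hJprime (lt_of_le_of_ne hJle hJne)
    refine ⟨⟨z, hz1⟩, hJP ((hmemJ _).mpr fun n => hz (n + 1)), rfl⟩
  -- monotonicity of closure
  have hmono : polyClosure v E' ⊆ polyClosure v E := by
    intro y hy f hf
    refine hy f ?_
    rintro a ⟨n, hn, rfl⟩
    exact hf _ ⟨n, by omega, rfl⟩
  -- membership of t + p in the closure of E, for p ∈ P
  have hTsub : ∀ p : ↥v.valuationSubring, p ∈ P →
      (t : K) + (p : K) ∈ polyClosure v E := by
    intro p hpP f hf
    exact aux_mem_cl hγ0 hγ1 (fun n => hval p hpP n) f (fun n hn => hf _ ⟨n, hn, rfl⟩)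
  -- Claim 2: disjointness
  have hdisj : Disjoint T (polyClosure v E') := by
    rw [Set.disjoint_left]
    rintro x ⟨p, hpP, rfl⟩ hxcl
    set f : K[X] := X * (X - C ((t : K) ^ 2)) * C (((t : K))⁻¹ ^ 3) with hfdef
    have hgood : ∀ a ∈ E', v (f.eval a) ≤ 1 := by
      rintro a ⟨n, hn, rfl⟩
      have heval : f.eval ((t : K) ^ n)
          = (t : K) ^ n * ((t : K) ^ n - (t : K) ^ 2) * ((t : K))⁻¹ ^ 3 := by
        simp [hfdef]
      rw [heval, v.map_mul, v.map_mul, v.map_pow, v.map_pow, v.map_inv]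
      have e2 : v ((t : K) ^ n - (t : K) ^ 2) ≤ γ ^ 2 :=
        v.map_sub_le (by rw [v.map_pow]; exact hanti hn) (le_of_eq (v.map_pow _ 2))
      calc γ ^ n * v ((t : K) ^ n - (t : K) ^ 2) * (γ⁻¹) ^ 3
          ≤ γ ^ n * γ ^ 2 * (γ⁻¹) ^ 3 := mul_le_mul_left (mul_le_mul_right e2 _) _
        _ = γ ^ (n - 1) := by
            rw [← pow_add, inv_pow, show n + 2 = (n - 1) + 3 by omega, pow_add, mul_assoc,
              mul_inv_cancel₀ (pow_ne_zero _ hγ0), mul_one]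
        _ ≤ 1 := pow_le_one' hγ1.le _
    have hcontra := hxcl f hgood
    have hvp : v (p : K) < γ :=
      lt_of_le_of_lt (hval p hpP 2) (by simpa [pow_one] using hltpow 1 2 one_lt_two)
    have hv1 : v ((t : K) + (p : K)) = γ := Valuation.map_add_eq_of_lt_left _ hvp
    have hv2 : v ((t : K) + (p : K) - (t : K) ^ 2) = γ := by
      have e : (t : K) + (p : K) - (t : K) ^ 2 = ((t : K) ^ 1 - (t : K) ^ 2) + (p : K) := by
        ring
      have h2 : v ((t : K) ^ 1 - (t : K) ^ 2) = γ := by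
        rw [aux_val_sub_pow_lt hγ1 one_lt_two, pow_one]
      rw [e, Valuation.map_add_eq_of_lt_left _ (by rw [h2]; exact hvp), h2]
    have heval : f.eval ((t : K) + (p : K))
        = ((t : K) + (p : K)) * ((t : K) + (p : K) - (t : K) ^ 2) * ((t : K))⁻¹ ^ 3 := by
      simp [hfdef]
    rw [heval, v.map_mul, v.map_mul, v.map_pow, v.map_inv, hv1, hv2] at hcontra
    have he : γ * γ * (γ⁻¹) ^ 3 = γ⁻¹ := by
      rw [← pow_two, inv_pow, show γ ^ 3 = γ ^ 2 * γ from pow_succ γ 2, mul_inv,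
        mul_inv_cancel_left₀ (pow_ne_zero 2 hγ0)]
    rw [he] at hcontra
    exact absurd hcontra (not_le.mpr (one_lt_inv_iff₀.mpr ⟨hγpos, hγ1⟩))
  -- Claim 1: the closure identity
  have hclaim1 : polyClosure v E = polyClosure v E' ∪ T := by
    apply Set.Subset.antisymm
    · intro x hx
      by_cases hδ : γ ≤ v (x - (t : K))
      · -- x is in the closure of E'
        refine Or.inl ?_
        intro g hg
        set h : K[X] := g * (X - C (t : K)) * C ((t : K))⁻¹ with hhdef
        have hgood : ∀ a ∈ E, v (h.eval a) ≤ 1 := by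
          rintro a ⟨n, hn, rfl⟩
          have heval : h.eval ((t : K) ^ n)
              = g.eval ((t : K) ^ n) * ((t : K) ^ n - (t : K)) * ((t : K))⁻¹ := by
            simp [hhdef]
          rcases eq_or_lt_of_le hn with h1 | h1
          · rw [heval, ← h1]
            simp
          · have e1 : v ((t : K) ^ n - (t : K)) = γ := by
              have := aux_val_sub_pow (v := v) hγ1 (a := n) (b := 1) (by omega)
              rw [pow_one, min_eq_right (by omega : 1 ≤ n), pow_one] at this
              exact this
            rw [heval, v.map_mul, v.map_mul, v.map_inv, e1, mul_assoc,
              mul_inv_cancel₀ hγ0, mul_one]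
            exact hg _ ⟨n, h1, rfl⟩
        have hx1 := hx h hgood
        have heval : h.eval x = g.eval x * (x - (t : K)) * ((t : K))⁻¹ := by
          simp [hhdef]
        rw [heval, v.map_mul, v.map_mul, v.map_inv] at hx1
        have hδpos : (0 : Γ₀) < v (x - (t : K)) := lt_of_lt_of_le hγpos hδ
        rw [mul_comm] at hx1
        have h2 : v (g.eval x) * v (x - (t : K)) ≤ γ := (inv_mul_le_one₀ hγpos).mp hx1
        have h3 : v (g.eval x) * v (x - (t : K)) ≤ 1 * v (x - (t : K)) := by
          rw [one_mul]; exact le_trans h2 hδ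
        exact le_of_mul_le_mul_right h3 hδpos
      · -- x ∈ t + P
        refine Or.inr ?_
        have hδ' : v (x - (t : K)) < γ := lt_of_not_ge hδ
        have hδ2 : v (x - (t : K) ^ 2) = γ := by
          have e : x - (t : K) ^ 2 = (x - (t : K)) + ((t : K) ^ 1 - (t : K) ^ 2) := by ring
          have h2 : v ((t : K) ^ 1 - (t : K) ^ 2) = γ := by
            rw [aux_val_sub_pow_lt hγ1 one_lt_two, pow_one]
          rw [e, Valuation.map_add_eq_of_lt_right _ (by rw [h2]; exact hδ'), h2]
        have hbound : ∀ m : ℕ, v (x - (t : K)) ≤ γ ^ (m + 1) := by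
          intro m
          set fm : K[X] := (X - C (t : K)) * (X - C ((t : K) ^ 2)) ^ m *
            C (((t : K))⁻¹ ^ (2 * m + 1)) with hfmdef
          have hgood : ∀ a ∈ E, v (fm.eval a) ≤ 1 := by
            rintro a ⟨n, hn, rfl⟩
            have heval : fm.eval ((t : K) ^ n) = ((t : K) ^ n - (t : K)) *
                ((t : K) ^ n - (t : K) ^ 2) ^ m * ((t : K))⁻¹ ^ (2 * m + 1) := by
              simp [hfmdef]
            rcases eq_or_lt_of_le hn with h1 | h1
            · rw [heval, ← h1]
              simp
            · have e1 : v ((t : K) ^ n - (t : K)) = γ := by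
                have := aux_val_sub_pow (v := v) hγ1 (a := n) (b := 1) (by omega)
                rw [pow_one, min_eq_right (by omega : 1 ≤ n), pow_one] at this
                exact this
              have e2 : v ((t : K) ^ n - (t : K) ^ 2) ≤ γ ^ 2 :=
                v.map_sub_le (by rw [v.map_pow]; exact hanti h1) (le_of_eq (v.map_pow _ 2))
              rw [heval, v.map_mul, v.map_mul, v.map_pow, v.map_pow, v.map_inv, e1]
              calc γ * v ((t : K) ^ n - (t : K) ^ 2) ^ m * (γ⁻¹) ^ (2 * m + 1)
                  ≤ γ * (γ ^ 2) ^ m * (γ⁻¹) ^ (2 * m + 1) :=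
                    mul_le_mul_left (mul_le_mul_right (pow_le_pow_left' e2 m) _) _
                _ = 1 := by
                    rw [← pow_mul, ← pow_succ', inv_pow]
                    exact mul_inv_cancel₀ (pow_ne_zero _ hγ0)
          have key := hx fm hgood
          have heval : fm.eval x = (x - (t : K)) * (x - (t : K) ^ 2) ^ m *
              ((t : K))⁻¹ ^ (2 * m + 1) := by
            simp [hfmdef]
          rw [heval, v.map_mul, v.map_mul, v.map_pow, v.map_pow, v.map_inv, hδ2] at key
          have e3 : v (x - (t : K)) * γ ^ m * (γ⁻¹) ^ (2 * m + 1)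
              = v (x - (t : K)) * (γ ^ (m + 1))⁻¹ := by
            rw [inv_pow, ← show γ ^ m * γ ^ (m + 1) = γ ^ (2 * m + 1) from
              by rw [← pow_add]; congr 1; omega, mul_inv, mul_assoc,
              mul_inv_cancel_left₀ (pow_ne_zero m hγ0)]
          rw [e3, mul_comm] at key
          exact (inv_mul_le_one₀ (zero_lt_iff.mpr (pow_ne_zero _ hγ0))).mp key
        obtain ⟨p, hpP, hpz⟩ := hPmem (x - (t : K)) (by
          intro n
          cases n with
          | zero => simpa using le_trans hδ'.le hγle
          | succ m => exact hbound m)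
        exact ⟨p, hpP, by rw [← hpz]; ring⟩
    · rintro x (hx | ⟨p, hpP, rfl⟩)
      · exact hmono hx
      · exact hTsub p hpP
  -- Claim 3
  have hclaim3 : ∀ p : ↥v.valuationSubring, p ∈ P → p ≠ 0 →
      (t : K) + (p : K) ∈ polyClosure v E ∧
        (t : K) + (p : K) ∉ polyClosure v E' ∪ {(t : K)} := by
    intro p hpP hp0
    refine ⟨hTsub p hpP, ?_⟩
    rintro (h | h)
    · exact Set.disjoint_left.mp hdisj ⟨p, hpP, rfl⟩ h
    · rw [Set.mem_singleton_iff] at h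
      have h1 : (p : K) = 0 := by
        have h2 : (t : K) + (p : K) = (t : K) + 0 := by rw [add_zero]; exact h
        exact add_left_cancel h2
      exact hp0 (by exact_mod_cast h1)
  -- Claim 4
  have hP'lt : P' < Ideal.span {t} := by
    refine lt_of_le_of_ne ?_ ?_
    · intro a ha
      rcases ValuationRing.dvd_total t a with h | h
      · exact Ideal.mem_span_singleton.mpr h
      · exfalso
        obtain ⟨c, hc⟩ := h
        exact htP' (hc ▸ Ideal.mul_mem_right _ _ ha)
    · intro h
      exact htP' (h ▸ Ideal.mem_span_singleton_self t)
  have hP'P : P' ≤ P := hP.2.2 P' hP' hP'lt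
  obtain ⟨p₀, hp₀P', hp₀⟩ := Submodule.exists_mem_ne_zero_of_ne_bot hP'0
  have hclaim4 : polyClosure v E ≠ polyClosure v E' ∪ {(t : K)} := by
    intro heq
    have h3 := hclaim3 p₀ (hP'P hp₀P') hp₀
    rw [heq] at h3
    exact h3.2 h3.1
  -- Claim 5
  have hclaim5 : polyClosure v {(t : K)} = {(t : K)} := by
    apply Set.Subset.antisymm
    · intro y hy
      by_contra hne
      have hyt : y - (t : K) ≠ 0 := sub_ne_zero.mpr (fun h => hne (by simp [h]))
      set f : K[X] := (X - C (t : K)) * C ((y - (t : K))⁻¹ * ((t : K))⁻¹) with hfdef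
      have hgood : ∀ a ∈ ({(t : K)} : Set K), v (f.eval a) ≤ 1 := by
        rintro a ha
        rw [Set.mem_singleton_iff] at ha
        subst ha
        simp [hfdef]
      have h1 := hy f hgood
      have heval : f.eval y = ((t : K))⁻¹ := by
        simp only [hfdef, Polynomial.eval_mul, Polynomial.eval_sub, Polynomial.eval_X,
          Polynomial.eval_C]
        rw [← mul_assoc, mul_inv_cancel₀ hyt, one_mul]
      rw [heval, v.map_inv] at h1
      exact absurd h1 (not_le.mpr (one_lt_inv_iff₀.mpr ⟨hγpos, hγ1⟩))
    · intro y hy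
      rw [Set.mem_singleton_iff] at hy
      subst hy
      intro f hf
      exact hf _ rfl
  exact ⟨hclaim1, hdisj, hclaim3, hclaim4, hclaim5⟩
end

section
/- Let V be a valuation domain with quotient field K, maximal ideal M and associated valuation v, and suppose V has a nonzero nonmaximal prime ideal P'. Let t ∈ V∖P' be a nonunit. Then: (1) the sequence E := {t^n}_{n≥1} is pseudo-convergent with gauge δ_n = n·v(t); (2) the breadth ideal Br(E) equals the largest prime ideal P of V contained in tV, and P ≠ (0); (3) for every n ≥ 1, (t^{n+1} − t^n)^{-1}P = P. -/
/-!
STATEMENT 10.  Multiplicative convention: additively the gauge is strictly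
increasing, multiplicatively it is strictly decreasing (`StrictAnti`).
The sequence `E = {tⁿ}_{n ≥ 1}` is modelled as `s : ℕ → K`, `s n = t^(n+1)`
(so `s 0 = t¹`); its gauge at the paper's index `n ≥ 1` is
`δ_n = v(t^{n+1} − tⁿ) = n·v(t)`, i.e. multiplicatively
`v (s (n+1) - s n) = (v t)^(n+1)` for all `n : ℕ`.  Its breadth ideal
`Br(E) = {x | v x > δ_n ∀ n}` (additively) is
`{x : K | ∀ n, v x < v ((t:K)^(n+2) - (t:K)^(n+1))}` (multiplicatively);
it equals (the set of elements of) the largest prime ideal `P` of `V`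
(strictly) contained in `tV = Ideal.span {t}`, `P ≠ (0)`, and for every
`n ≥ 1` one has `(t^{n+1} − tⁿ)⁻¹·P = P` as subsets of `K`.
-/
theorem stmt_10 {K : Type*} [Field K] {Γ₀ : Type*} [LinearOrderedCommGroupWithZero Γ₀]
    (v : Valuation K Γ₀)
    (P' : Ideal ↥v.valuationSubring) (hP' : P'.IsPrime) (hP'0 : P' ≠ ⊥)
    (hP'M : ¬P'.IsMaximal)
    (t : ↥v.valuationSubring) (htP' : t ∉ P') (htu : ¬IsUnit t)
    (P : Ideal ↥v.valuationSubring)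
    (hP : P.IsPrime ∧ P < Ideal.span {t} ∧
      ∀ Q : Ideal ↥v.valuationSubring, Q.IsPrime → Q < Ideal.span {t} → Q ≤ P) :
    -- (1) `E = {tⁿ}_{n≥1}` is pseudo-convergent with gauge `δ_n = n·v(t)`
    (StrictAnti fun n : ℕ => v ((t : K) ^ (n + 2) - (t : K) ^ (n + 1))) ∧
    (∀ n : ℕ, v ((t : K) ^ (n + 2) - (t : K) ^ (n + 1)) = v (t : K) ^ (n + 1)) ∧
    -- (2) `Br(E) = P` and `P ≠ (0)`
    ({x : K | ∀ n : ℕ, v x < v ((t : K) ^ (n + 2) - (t : K) ^ (n + 1))} =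
      {x : K | ∃ p ∈ P, (p : K) = x}) ∧
    P ≠ ⊥ ∧
    -- (3) `(t^{n+1} − tⁿ)⁻¹·P = P` for every `n ≥ 1`
    (∀ n : ℕ, 1 ≤ n →
      (fun x : K => ((t : K) ^ (n + 1) - (t : K) ^ n)⁻¹ * x) ''
          {x : K | ∃ p ∈ P, (p : K) = x} =
        {x : K | ∃ p ∈ P, (p : K) = x}) := by
  obtain ⟨hPprime, hPlt, hPmax⟩ := hP
  set a := v (t : K) with ha_def
  have ht0 : (t : K) ≠ 0 := by
    intro h
    exact htP' (by rw [show t = 0 from Subtype.ext h]; exact P'.zero_mem)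
  have ha0 : a ≠ 0 := fun h => ht0 ((Valuation.zero_iff v).1 h)
  have hpowne : ∀ n : ℕ, a ^ n ≠ 0 := fun n => pow_ne_zero n ha0
  have ha1 : a < 1 := by
    have h1 := (Valuation.mem_valuationSubring_iff v _).1 t.2
    rcases lt_or_eq_of_le h1 with h | h
    · exact h
    · exfalso
      have hmem : (t : K)⁻¹ ∈ v.valuationSubring := by
        rw [Valuation.mem_valuationSubring_iff, map_inv₀, h, inv_one]
      exact htu (IsUnit.of_mul_eq_one ⟨_, hmem⟩ (Subtype.ext (by
        simp [mul_inv_cancel₀ ht0])))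
  have hsub : v ((t : K) - 1) = 1 := by
    rw [v.map_sub_swap]; exact v.map_one_sub_of_lt ha1
  have hgauge : ∀ n : ℕ, v ((t : K) ^ (n + 2) - (t : K) ^ (n + 1)) = a ^ (n + 1) := by
    intro n
    have h : (t : K) ^ (n + 2) - (t : K) ^ (n + 1) = (t : K) ^ (n + 1) * ((t : K) - 1) := by
      ring
    rw [h, v.map_mul, v.map_pow, hsub, mul_one]
  have hstep : ∀ n : ℕ, a ^ (n + 1) < a ^ n := by
    intro n
    calc a ^ (n + 1) = a ^ n * a := pow_succ a n
    _ < a ^ n * 1 := mul_lt_mul_of_le_of_lt_of_nonneg_of_pos le_rfl ha1 zero_le' (zero_lt_iff.2 (hpowne n))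
    _ = a ^ n := mul_one _
  have hanti : StrictAnti fun n : ℕ => v ((t : K) ^ (n + 2) - (t : K) ^ (n + 1)) := by
    apply strictAnti_nat_of_succ_lt
    intro n
    simpa only [hgauge] using hstep (n + 1)
  -- t ∉ P
  have htP : t ∉ P := by
    intro h
    exact hPlt.not_ge (Ideal.span_le.2 (Set.singleton_subset_iff.2 h))
  -- every element of P is divisible by arbitrary powers of t
  have hdvd : ∀ p ∈ P, ∀ n : ℕ, ∃ q ∈ P, p = t ^ n * q := by
    intro p hp n
    induction n with
    | zero => exact ⟨p, hp, by simp⟩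
    | succ n ih =>
      obtain ⟨q, hq, rfl⟩ := ih
      obtain ⟨r, hr⟩ := Ideal.mem_span_singleton.1 (hPlt.le hq)
      have hrP : r ∈ P := by
        rcases hPprime.mem_or_mem (hr ▸ hq) with h | h
        · exact absurd h htP
        · exact h
      exact ⟨r, hrP, by rw [hr, pow_succ, mul_assoc]⟩
  have hPS : ∀ p ∈ P, ∀ n : ℕ, v (p : K) < a ^ (n + 1) := by
    intro p hp n
    obtain ⟨q, hq, rfl⟩ := hdvd p hp (n + 2)
    have hq1 : v (q : K) ≤ 1 := (Valuation.mem_valuationSubring_iff v _).1 q.2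
    have hcoe : ((t ^ (n + 2) * q : ↥v.valuationSubring) : K) = (t : K) ^ (n + 2) * (q : K) := by
      push_cast; ring
    calc v ((t ^ (n + 2) * q : ↥v.valuationSubring) : K)
        = a ^ (n + 2) * v (q : K) := by rw [hcoe, v.map_mul, v.map_pow]
      _ ≤ a ^ (n + 2) * 1 := mul_le_mul_right hq1 _
      _ = a ^ (n + 2) := mul_one _
      _ < a ^ (n + 1) := hstep (n + 1)
  -- the candidate ideal Q
  let Q : Ideal ↥v.valuationSubring :=
  { carrier := {p | ∀ n : ℕ, v (p : K) < a ^ (n + 1)}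
    add_mem' := fun hx hy n => lt_of_le_of_lt (by push_cast; exact v.map_add _ _)
      (max_lt (hx n) (hy n))
    zero_mem' := fun n => by
      simpa using zero_lt_iff.2 (hpowne (n + 1))
    smul_mem' := by
      intro c x hx n
      have hc1 : v (c : K) ≤ 1 := (Valuation.mem_valuationSubring_iff v _).1 c.2
      have hcoe : ((c • x : ↥v.valuationSubring) : K) = (c : K) * (x : K) := rfl
      calc v ((c • x : ↥v.valuationSubring) : K) = v (c : K) * v (x : K) := by
            rw [hcoe, v.map_mul]
        _ ≤ 1 * v (x : K) := mul_le_mul_left hc1 _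
        _ = v (x : K) := one_mul _
        _ < a ^ (n + 1) := hx n }
  have hQmem : ∀ p : ↥v.valuationSubring, p ∈ Q ↔ ∀ n : ℕ, v (p : K) < a ^ (n + 1) :=
    fun p => Iff.rfl
  have hQprime : Q.IsPrime := by
    constructor
    · intro h
      have h1 : (1 : ↥v.valuationSubring) ∈ Q := h ▸ Submodule.mem_top
      have h2 : (1 : Γ₀) < a := by simpa using (hQmem _).1 h1 0
      exact absurd (h2.trans ha1) (lt_irrefl 1)
    · intro x y hxy
      by_contra h
      push_neg at h
      obtain ⟨hx, hy⟩ := h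
      obtain ⟨n, hn⟩ := not_forall.1 ((hQmem x).not.1 hx)
      obtain ⟨m, hm⟩ := not_forall.1 ((hQmem y).not.1 hy)
      rw [not_lt] at hn hm
      have h1 : a ^ (n + m + 2) ≤ v ((x * y : ↥v.valuationSubring) : K) := by
        have hcoe : ((x * y : ↥v.valuationSubring) : K) = (x : K) * (y : K) := rfl
        rw [hcoe, v.map_mul, show n + m + 2 = (n + 1) + (m + 1) by ring, pow_add]
        exact mul_le_mul' hn hm
      exact absurd ((hQmem _).1 hxy (n + m + 1)) (not_lt.2 h1)
  have htQ : t ∉ Q := by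
    intro h
    have h2 : a < a := by have h3 := (hQmem t).1 h 0; rwa [zero_add, pow_one] at h3
    exact lt_irrefl a h2
  have hQle : Q ≤ Ideal.span {t} := by
    intro p hp
    rw [Ideal.mem_span_singleton]
    have hvp : v (p : K) ≤ a := le_of_lt (by simpa using (hQmem p).1 hp 0)
    have hmem : (p : K) * (t : K)⁻¹ ∈ v.valuationSubring := by
      rw [Valuation.mem_valuationSubring_iff, v.map_mul, map_inv₀]
      calc v (p : K) * (v (t : K))⁻¹ ≤ a * a⁻¹ := mul_le_mul_left hvp _
        _ = 1 := mul_inv_cancel₀ ha0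
    refine ⟨⟨(p : K) * (t : K)⁻¹, hmem⟩, Subtype.ext ?_⟩
    push_cast
    rw [mul_comm ((p : K)) _, ← mul_assoc, mul_inv_cancel₀ ht0, one_mul]
  have hQlt : Q < Ideal.span {t} :=
    lt_of_le_of_ne hQle (fun h => htQ (by rw [h]; exact Ideal.mem_span_singleton_self t))
  have hQP : Q = P :=
    le_antisymm (hPmax Q hQprime hQlt) (fun p hp => (hQmem p).2 (hPS p hp))
  -- the breadth set equality
  have hset : {x : K | ∀ n : ℕ, v x < v ((t : K) ^ (n + 2) - (t : K) ^ (n + 1))} =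
      {x : K | ∃ p ∈ P, (p : K) = x} := by
    ext x
    simp only [Set.mem_setOf_eq, hgauge]
    constructor
    · intro hx
      have hx1 : v x ≤ 1 := le_of_lt (lt_of_lt_of_le (hx 0) (by simpa using ha1.le))
      refine ⟨⟨x, (Valuation.mem_valuationSubring_iff v _).2 hx1⟩, ?_, rfl⟩
      rw [← hQP]
      exact (hQmem _).2 hx
    · rintro ⟨p, hp, rfl⟩
      exact hPS p hp
  -- P ≠ ⊥
  have hPbot : P ≠ ⊥ := by
    obtain ⟨p', hp'P', hp'0⟩ := Submodule.exists_mem_ne_zero_of_ne_bot hP'0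
    have hp'K : (p' : K) ≠ 0 := fun h => hp'0 (Subtype.ext h)
    have hvp' : v (p' : K) ≠ 0 := fun h => hp'K ((Valuation.zero_iff v).1 h)
    have hle : ∀ n : ℕ, v (p' : K) ≤ a ^ (n + 1) := by
      intro n
      by_contra h
      push_neg at h
      have hmem : (t : K) ^ (n + 1) * (p' : K)⁻¹ ∈ v.valuationSubring := by
        rw [Valuation.mem_valuationSubring_iff, v.map_mul, map_inv₀, v.map_pow]
        calc a ^ (n + 1) * (v (p' : K))⁻¹ ≤ v (p' : K) * (v (p' : K))⁻¹ :=
              mul_le_mul_left h.le _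
          _ = 1 := mul_inv_cancel₀ hvp'
      have hdvd' : p' ∣ t ^ (n + 1) := by
        refine ⟨⟨(t : K) ^ (n + 1) * (p' : K)⁻¹, hmem⟩, Subtype.ext ?_⟩
        push_cast
        rw [mul_comm ((t : K) ^ (n + 1)) _, ← mul_assoc, mul_inv_cancel₀ hp'K, one_mul]
      obtain ⟨c, hc⟩ := hdvd'
      have : t ^ (n + 1) ∈ P' := hc ▸ Ideal.mul_mem_right _ _ hp'P'
      exact htP' (hP'.mem_of_pow_mem _ this)
    have hmemQ : p' ∈ Q := by
      refine (hQmem p').2 fun n => ?_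
      exact lt_of_le_of_lt (hle (n + 1)) (hstep (n + 1))
    intro hbot
    rw [hQP, hbot] at hmemQ
    exact hp'0 ((Submodule.mem_bot _).1 hmemQ)
  refine ⟨hanti, hgauge, hset, hPbot, ?_⟩
  -- (3)
  intro n _
  have hSrep : {x : K | ∃ p ∈ P, (p : K) = x} = {x : K | ∀ m : ℕ, v x < a ^ (m + 1)} := by
    rw [← hset]; ext x; simp only [Set.mem_setOf_eq, hgauge]
  rw [hSrep]
  set u : K := (t : K) ^ (n + 1) - (t : K) ^ n with hu_def
  have hu : v u = a ^ n := by
    have h : u = (t : K) ^ n * ((t : K) - 1) := by rw [hu_def]; ring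
    rw [h, v.map_mul, v.map_pow, hsub, mul_one]
  have hu0 : u ≠ 0 := fun h => hpowne n (by rw [← hu, h, map_zero])
  ext x
  simp only [Set.mem_image, Set.mem_setOf_eq]
  constructor
  · rintro ⟨y, hy, rfl⟩
    intro m
    have hvy := hy (n + m)
    have h1 : v (u⁻¹ * y) = (a ^ n)⁻¹ * v y := by rw [v.map_mul, map_inv₀, hu]
    rw [h1]
    calc (a ^ n)⁻¹ * v y < (a ^ n)⁻¹ * a ^ (n + m + 1) :=
          mul_lt_mul_of_le_of_lt_of_nonneg_of_pos le_rfl hvy zero_le' (zero_lt_iff.2 (inv_ne_zero (hpowne n)))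
      _ = a ^ (m + 1) := by
          rw [show n + m + 1 = n + (m + 1) by ring, pow_add, inv_mul_cancel_left₀ (hpowne n)]
  · intro hx
    refine ⟨u * x, fun m => ?_, by rw [inv_mul_cancel_left₀ hu0]⟩
    have h1 : v (u * x) = a ^ n * v x := by rw [v.map_mul, hu]
    rw [h1]
    calc a ^ n * v x < 1 * a ^ (m + 1) :=
          mul_lt_mul_of_le_of_lt_of_nonneg_of_pos (pow_le_one₀ zero_le' ha1.le) (hx m) zero_le' zero_lt_one
      _ = a ^ (m + 1) := one_mul _
end

section
/- Let V be a valuation domain with quotient field K and associated valuation v. Let E = {s_n}_{n∈ℕ} and F = {t_n}_{n∈ℕ} be pseudo-convergent sequences in K with gauges {δ_n}_{n∈ℕ} and {η_n}_{n∈ℕ} respectively; set c_n := s_{n+1} − s_n and, for each k, let P_k be the largest prime ideal of V contained in c_k^{-1}Br(E). Then the polynomial closures of E and F are equal (E̅ = F̅) if and only if δ_n = η_n for every n ∈ ℕ and, for every k, v(t_k − s_k) > λ(δ_r − δ_k) + δ_k for every r ≥ k and every positive integer λ (equivalently, t_k − s_k ∈ c_k P_k for every k). -/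
namespace Stmt11Aux
open Polynomial Finset

variable {K : Type*} [Field K] {Γ₀ : Type*} [LinearOrderedCommGroupWithZero Γ₀]
variable {v : Valuation K Γ₀} {σ : ℕ → K}


lemma le_of_mul_le_mul_left₀ {Γ₀ : Type*} [LinearOrderedCommGroupWithZero Γ₀] {a b c : Γ₀}
    (hc : c ≠ 0) (h : c * a ≤ c * b) : a ≤ b :=
  (mul_le_mul_iff_right₀ (zero_lt_iff.2 hc)).1 h

lemma mul_lt_mul_strict_left₀ {Γ₀ : Type*} [LinearOrderedCommGroupWithZero Γ₀] {a b c : Γ₀}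
    (hc : c ≠ 0) (h : a < b) : c * a < c * b :=
  mul_lt_mul_of_pos_left h (zero_lt_iff.2 hc)

section PC
variable (hσ : StrictAnti fun n => v (σ (n + 1) - σ n))
include hσ

lemma gauge_ne_zero (n : ℕ) : v (σ (n + 1) - σ n) ≠ 0 := by
  intro h0
  have h1 := hσ (Nat.lt_succ_self n)
  simp only at h1
  rw [h0] at h1
  exact not_lt_zero' h1

lemma gauge_dist {n m : ℕ} (h : n < m) : v (σ m - σ n) = v (σ (n + 1) - σ n) := by
  induction m, h using Nat.le_induction with
  | base => rfl
  | succ k hk ih =>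
    have h1 : σ (k + 1) - σ n = (σ (k + 1) - σ k) + (σ k - σ n) := by ring
    have h2 : v (σ (k + 1) - σ k) < v (σ k - σ n) := by
      rw [ih]; exact hσ (by omega)
    rw [h1, Valuation.map_add_eq_of_lt_right _ h2, ih]

lemma sub_val_ne_zero {n m : ℕ} (h : n ≠ m) : v (σ m - σ n) ≠ 0 := by
  rcases h.lt_or_gt with h' | h'
  · rw [gauge_dist hσ h']; exact gauge_ne_zero hσ n
  · rw [Valuation.map_sub_swap, gauge_dist hσ h']; exact gauge_ne_zero hσ m

lemma nodes_ne {n m : ℕ} (h : n ≠ m) : σ m ≠ σ n := by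
  intro he
  exact sub_val_ne_zero hσ h (by rw [he, sub_self, Valuation.map_zero])

/-- Core Lagrange bound: if `f` is bounded by 1 on the nodes `σ 0, …, σ D` (`D = natDegree f`)
and for each node the product of distances from `x` is at most the product of distances from
that node, then `f` is bounded by 1 at `x`. -/
lemma eval_le_one_of_nodes (x : K) (f : K[X])
    (hb : ∀ i, v (f.eval (σ i)) ≤ 1)
    (hterm : ∀ i ∈ range (f.natDegree + 1),
      (∏ j ∈ (range (f.natDegree + 1)).erase i, v (x - σ j))
        ≤ ∏ j ∈ (range (f.natDegree + 1)).erase i, v (σ i - σ j)) :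
    v (f.eval x) ≤ 1 := by
  classical
  set D := f.natDegree with hD
  have hinj : Set.InjOn σ (range (D + 1) : Finset ℕ) := by
    intro a _ b _ hab
    by_contra hne
    exact nodes_ne hσ (Ne.symm hne) hab
  have hdeg : f.degree < (range (D + 1)).card := by
    rw [card_range]
    exact lt_of_le_of_lt f.degree_le_natDegree (by exact_mod_cast Nat.lt_succ_self D)
  have hrep := Lagrange.eq_interpolate hinj hdeg
  rw [hrep, Lagrange.interpolate_apply, eval_finset_sum]
  refine v.map_sum_le fun i hi => ?_
  rw [eval_mul, eval_C, v.map_mul]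
  have hbasis : v (eval x (Lagrange.basis (range (D + 1)) σ i))
      = (∏ j ∈ (range (D + 1)).erase i, (v (σ i - σ j))⁻¹)
        * ∏ j ∈ (range (D + 1)).erase i, v (x - σ j) := by
    rw [Lagrange.basis, eval_prod, map_prod, ← prod_mul_distrib]
    refine prod_congr rfl fun j hj => ?_
    rw [Lagrange.basisDivisor, eval_mul, eval_C, v.map_mul, Valuation.map_inv]
    simp
  rw [hbasis, prod_inv_distrib]
  have hden : (∏ j ∈ (range (D + 1)).erase i, v (σ i - σ j)) ≠ 0 := by
    rw [Finset.prod_ne_zero_iff]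
    intro j hj
    exact sub_val_ne_zero hσ (mem_erase.1 hj).1
  calc v (f.eval (σ i)) * ((∏ j ∈ (range (D + 1)).erase i, v (σ i - σ j))⁻¹
          * ∏ j ∈ (range (D + 1)).erase i, v (x - σ j))
      ≤ 1 * ((∏ j ∈ (range (D + 1)).erase i, v (σ i - σ j))⁻¹
          * ∏ j ∈ (range (D + 1)).erase i, v (σ i - σ j)) := by
        refine mul_le_mul' (hb i) (mul_le_mul_right (hterm i hi) _)
    _ = 1 := by rw [inv_mul_cancel₀ hden, mul_one]

/-- A pseudo-limit-type point is in the polynomial closure. -/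
lemma pl_eval_le_one (x : K) (hx : ∀ i, v (x - σ i) ≤ v (σ (i + 1) - σ i))
    (f : K[X]) (hb : ∀ i, v (f.eval (σ i)) ≤ 1) : v (f.eval x) ≤ 1 := by
  refine eval_le_one_of_nodes hσ x f hb fun i hi => ?_
  refine Finset.prod_le_prod' fun j hj => ?_
  obtain ⟨hji, hjr⟩ := mem_erase.1 hj
  rcases hji.lt_or_gt with h | h
  · rw [gauge_dist hσ h]
    exact hx j
  · rw [Valuation.map_sub_swap v (σ i) (σ j), gauge_dist hσ h]
    exact (hx j).trans (hσ.antitone h.le)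

/-- A sharp-spike point (sharply close to `σ 0`) is in the polynomial closure. -/
lemma sharp_eval_le_one (x : K)
    (hx : ∀ r lam : ℕ, 1 ≤ lam →
      v (x - σ 0) < (v (σ (r + 1) - σ r) / v (σ 1 - σ 0)) ^ lam * v (σ 1 - σ 0))
    (f : K[X]) (hb : ∀ i, v (f.eval (σ i)) ≤ 1) : v (f.eval x) ≤ 1 := by
  have hδ0 : v (σ 1 - σ 0) ≠ 0 := gauge_ne_zero hσ 0
  have hγ0 : v (x - σ 0) < v (σ 1 - σ 0) := by
    have h := hx 0 1 le_rfl
    rwa [div_self hδ0, one_pow, one_mul] at h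
  have hq : ∀ j : ℕ, 0 < j → v (x - σ j) = v (σ 1 - σ 0) := by
    intro j hj
    have h1 : x - σ j = (x - σ 0) - (σ j - σ 0) := by ring
    have h2 : v (σ j - σ 0) = v (σ 1 - σ 0) := gauge_dist hσ hj
    rw [h1, Valuation.map_sub_eq_of_lt_right _ (by rw [h2]; exact hγ0), h2]
  refine eval_le_one_of_nodes hσ x f hb fun i hi => ?_
  set D := f.natDegree with hD
  rcases Nat.eq_zero_or_pos i with rfl | hipos
  · refine Finset.prod_le_prod' fun j hj => ?_
    obtain ⟨hji, hjr⟩ := mem_erase.1 hj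
    have hj0 : 0 < j := Nat.pos_of_ne_zero hji
    rw [hq j hj0, Valuation.map_sub_swap v (σ 0) (σ j), gauge_dist hσ hj0]
  · have hiD : i ≤ D := by have := mem_range.1 hi; omega
    have hD1 : 1 ≤ D := le_trans hipos hiD
    have hδD : v (σ (D + 1) - σ D) ≠ 0 := gauge_ne_zero hσ D
    have h0mem : (0 : ℕ) ∈ (range (D + 1)).erase i :=
      mem_erase.2 ⟨(hipos.ne' : i ≠ 0).symm, mem_range.2 (by omega)⟩
    have hnum : (∏ j ∈ (range (D + 1)).erase i, v (x - σ j))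
        = v (x - σ 0) * v (σ 1 - σ 0) ^ (D - 1) := by
      rw [← Finset.mul_prod_erase _ _ h0mem]
      congr 1
      have hcongr : ∀ j ∈ (((range (D + 1)).erase i).erase 0), v (x - σ j) = v (σ 1 - σ 0) := by
        intro j hj
        exact hq j (Nat.pos_of_ne_zero (mem_erase.1 hj).1)
      rw [Finset.prod_congr rfl hcongr, Finset.prod_const, card_erase_of_mem h0mem,
        card_erase_of_mem hi, card_range]
      congr 1
    have hden : v (σ (D + 1) - σ D) ^ D ≤ ∏ j ∈ (range (D + 1)).erase i, v (σ i - σ j) := by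
      have h1 : ∏ j ∈ (range (D + 1)).erase i, v (σ (D + 1) - σ D)
          ≤ ∏ j ∈ (range (D + 1)).erase i, v (σ i - σ j) := by
        refine Finset.prod_le_prod' fun j hj => ?_
        obtain ⟨hji, hjr⟩ := mem_erase.1 hj
        have hjD : j ≤ D := by have := mem_range.1 hjr; omega
        rcases hji.lt_or_gt with h | h
        · rw [gauge_dist hσ h]
          exact hσ.antitone hjD
        · rw [Valuation.map_sub_swap v (σ i) (σ j), gauge_dist hσ h]
          exact hσ.antitone hiD
      rwa [Finset.prod_const, card_erase_of_mem hi, card_range] at h1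
    have harith : (v (σ (D + 1) - σ D) / v (σ 1 - σ 0)) ^ D * v (σ 1 - σ 0)
        * v (σ 1 - σ 0) ^ (D - 1) = v (σ (D + 1) - σ D) ^ D := by
      have h1 : v (σ 1 - σ 0) * v (σ 1 - σ 0) ^ (D - 1) = v (σ 1 - σ 0) ^ D := by
        rw [← pow_succ']
        congr 1
        omega
      rw [mul_assoc, h1, div_pow, div_mul_cancel₀]
      exact pow_ne_zero _ hδ0
    have key : v (x - σ 0) * v (σ 1 - σ 0) ^ (D - 1) < v (σ (D + 1) - σ D) ^ D := by
      have hb2 := hx D D hD1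
      calc v (x - σ 0) * v (σ 1 - σ 0) ^ (D - 1)
          = v (σ 1 - σ 0) ^ (D - 1) * v (x - σ 0) := mul_comm _ _
        _ < v (σ 1 - σ 0) ^ (D - 1)
            * ((v (σ (D + 1) - σ D) / v (σ 1 - σ 0)) ^ D * v (σ 1 - σ 0)) :=
          mul_lt_mul_strict_left₀ (pow_ne_zero _ hδ0) hb2
        _ = (v (σ (D + 1) - σ D) / v (σ 1 - σ 0)) ^ D * v (σ 1 - σ 0)
            * v (σ 1 - σ 0) ^ (D - 1) := mul_comm _ _
        _ = v (σ (D + 1) - σ D) ^ D := harith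
    rw [hnum]
    exact le_trans key.le hden

/-- The basic integrality inequalities coming from the polynomials
`∏ (X - σ i) ^ m i / c`. -/
lemma int_ineq (x : K)
    (hx : ∀ f : K[X], (∀ i, v (f.eval (σ i)) ≤ 1) → v (f.eval x) ≤ 1)
    (N : ℕ) (m : ℕ → ℕ) (hm : ∀ i, i ∈ range (N + 1) → 1 ≤ m i) :
    (∏ i ∈ range (N + 1), v (x - σ i) ^ m i)
      ≤ ∏ i ∈ range (N + 1), v (σ (i + 1) - σ i) ^ m i := by
  classical
  set c : K := ∏ i ∈ range (N + 1), (σ (i + 1) - σ i) ^ m i with hc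
  have hvc : v c = ∏ i ∈ range (N + 1), v (σ (i + 1) - σ i) ^ m i := by
    rw [hc]
    rw [map_prod v (fun i => (σ (i + 1) - σ i) ^ m i) (range (N + 1))]
    exact Finset.prod_congr rfl fun i _ => v.map_pow _ _
  have hvc0 : v c ≠ 0 := by
    rw [hvc, Finset.prod_ne_zero_iff]
    exact fun i _ => pow_ne_zero _ (gauge_ne_zero hσ i)
  set g : K[X] := C c⁻¹ * ∏ i ∈ range (N + 1), (X - C (σ i)) ^ m i with hg
  have hevalg : ∀ y : K, v (g.eval y) = (v c)⁻¹ * ∏ i ∈ range (N + 1), v (y - σ i) ^ m i := by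
    intro y
    rw [hg, eval_mul, eval_C, v.map_mul, Valuation.map_inv, eval_prod,
      map_prod v (fun i => Polynomial.eval y ((X - C (σ i)) ^ m i)) (range (N + 1))]
    congr 1
    refine prod_congr rfl fun i _ => ?_
    rw [eval_pow, v.map_pow, eval_sub, eval_X, eval_C]
  have hbound : ∀ a, v (g.eval (σ a)) ≤ 1 := by
    intro a
    rcases le_or_gt a N with ha | ha
    · have hz : g.eval (σ a) = 0 := by
        rw [hg, eval_mul, eval_prod]
        refine mul_eq_zero_of_right _ (Finset.prod_eq_zero (i := a) (mem_range.2 (by omega)) ?_)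
        rw [eval_pow, eval_sub, eval_X, eval_C, sub_self, zero_pow]
        have h1 := hm a (mem_range.2 (by omega))
        omega
      rw [hz, Valuation.map_zero]
      exact zero_le'
    · rw [hevalg]
      have heq : ∏ i ∈ range (N + 1), v (σ a - σ i) ^ m i = v c := by
        rw [hvc]
        refine prod_congr rfl fun i hi => ?_
        have hiN := mem_range.1 hi
        rw [gauge_dist hσ (by omega : i < a)]
      rw [heq, inv_mul_cancel₀ hvc0]
  have hfin := hx g hbound
  rw [hevalg] at hfin
  rw [← hvc]
  calc (∏ i ∈ range (N + 1), v (x - σ i) ^ m i)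
      = v c * ((v c)⁻¹ * ∏ i ∈ range (N + 1), v (x - σ i) ^ m i) := by
        rw [← mul_assoc, mul_inv_cancel₀ hvc0, one_mul]
    _ ≤ v c * 1 := mul_le_mul_right hfin _
    _ = v c := mul_one _

end PC

/-- `x` is a pseudo-limit of the sequence `σ`. -/
def IsLimit (v : Valuation K Γ₀) (σ : ℕ → K) (x : K) : Prop :=
  ∀ n, v (x - σ n) = v (σ (n + 1) - σ n)

/-- `x` has a sharp spike at position `h` of the sequence `σ`. -/
def IsSpike (v : Valuation K Γ₀) (σ : ℕ → K) (x : K) (h : ℕ) : Prop :=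
  (∀ n, n < h → v (x - σ n) = v (σ (n + 1) - σ n)) ∧
  (∀ ρ lam : ℕ, h ≤ ρ → 1 ≤ lam →
    v (x - σ h) < (v (σ (ρ + 1) - σ ρ) / v (σ (h + 1) - σ h)) ^ lam
      * v (σ (h + 1) - σ h)) ∧
  (∀ n, h < n → v (x - σ n) = v (σ (h + 1) - σ h))

section PC2
variable (hσ : StrictAnti fun n => v (σ (n + 1) - σ n))
include hσ

set_option maxHeartbeats 1000000 in
/-- Any element of the polynomial closure of a pseudo-convergent sequence is either a
pseudo-limit or has a sharp spike. -/
lemma profile (x : K)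
    (hx : ∀ f : K[X], (∀ i, v (f.eval (σ i)) ≤ 1) → v (f.eval x) ≤ 1) :
    IsLimit v σ x ∨ ∃ h : ℕ, IsSpike v σ x h := by
  classical
  by_cases hall : ∀ i, v (x - σ i) = v (σ (i + 1) - σ i)
  · exact Or.inl hall
  right
  push_neg at hall
  have hfind : ∃ n, v (x - σ n) ≠ v (σ (n + 1) - σ n) := hall
  set h := Nat.find hfind with hh
  have hdev : v (x - σ h) ≠ v (σ (h + 1) - σ h) := Nat.find_spec hfind
  have hhead : ∀ i, i < h → v (x - σ i) = v (σ (i + 1) - σ i) := by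
    intro i hi
    have := Nat.find_min hfind hi
    exact not_not.1 this
  have hδh : v (σ (h + 1) - σ h) ≠ 0 := gauge_ne_zero hσ h
  have hA0 : (∏ i ∈ range h, v (σ (i + 1) - σ i)) ≠ 0 := by
    rw [Finset.prod_ne_zero_iff]
    exact fun i _ => gauge_ne_zero hσ i
  -- first inequality : q h ≤ δ h
  have hle : v (x - σ h) ≤ v (σ (h + 1) - σ h) := by
    have h1 := int_ineq hσ x hx h (fun _ => 1) (fun i _ => le_rfl)
    simp only [pow_one] at h1
    rw [prod_range_succ, prod_range_succ, Finset.prod_congr rfl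
      (fun i hi => hhead i (mem_range.1 hi))] at h1
    exact le_of_mul_le_mul_left₀ hA0 h1
  have hlt : v (x - σ h) < v (σ (h + 1) - σ h) := hle.lt_of_ne hdev
  have htail : ∀ i, h < i → v (x - σ i) = v (σ (h + 1) - σ h) := by
    intro i hi
    have h1 : x - σ i = (x - σ h) - (σ i - σ h) := by ring
    have h2 : v (σ i - σ h) = v (σ (h + 1) - σ h) := gauge_dist hσ hi
    rw [h1, Valuation.map_sub_eq_of_lt_right _ (by rw [h2]; exact hlt), h2]
  refine ⟨h, hhead, ?_, htail⟩
  intro ρ lam hρ hlam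
  rcases eq_or_lt_of_le hρ with rfl | hρlt
  · rw [div_self hδh, one_pow, one_mul]
    exact hlt
  -- h < ρ
  have hδρ : v (σ (ρ + 1) - σ ρ) ≠ 0 := gauge_ne_zero hσ ρ
  have h1 := int_ineq hσ x hx ρ (fun i => if i = ρ then lam + 1 else 1)
    (fun i _ => by split <;> omega)
  rw [prod_range_succ, prod_range_succ] at h1
  rw [if_pos rfl] at h1
  have hmother : ∀ i ∈ range ρ, v (x - σ i) ^ (if i = ρ then lam + 1 else 1)
      = v (x - σ i) := by
    intro i hi
    rw [if_neg (by have := mem_range.1 hi; omega), pow_one]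
  have hmother' : ∀ i ∈ range ρ, v (σ (i + 1) - σ i) ^ (if i = ρ then lam + 1 else 1)
      = v (σ (i + 1) - σ i) := by
    intro i hi
    rw [if_neg (by have := mem_range.1 hi; omega), pow_one]
  rw [Finset.prod_congr rfl hmother, Finset.prod_congr rfl hmother'] at h1
  -- split range ρ at h + 1
  have hsplit : ∀ F : ℕ → Γ₀, (∏ i ∈ range ρ, F i)
      = (∏ i ∈ range (h + 1), F i) * ∏ i ∈ Ico (h + 1) ρ, F i := by
    intro F
    simp only [range_eq_Ico]
    exact (Finset.prod_Ico_consecutive _ (by omega) (by omega)).symm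
  rw [hsplit (fun i => v (x - σ i)), hsplit (fun i => v (σ (i + 1) - σ i))] at h1
  rw [prod_range_succ, prod_range_succ, Finset.prod_congr rfl
      (fun i hi => hhead i (mem_range.1 hi))] at h1
  have hmidL : ∏ i ∈ Ico (h + 1) ρ, v (x - σ i) = v (σ (h + 1) - σ h) ^ (ρ - (h + 1)) := by
    rw [Finset.prod_congr rfl (fun i hi => htail i (mem_Ico.1 hi).1), Finset.prod_const,
      Nat.card_Ico]
  have hqρ : v (x - σ ρ) = v (σ (h + 1) - σ h) := htail ρ hρlt
  rw [hmidL, hqρ] at h1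
  -- bound the middle product on the right
  have hmidR : ∏ i ∈ Ico (h + 1) ρ, v (σ (i + 1) - σ i)
      ≤ v (σ (h + 1) - σ h) ^ (ρ - (h + 1)) := by
    rw [← Nat.card_Ico (h+1) ρ, ← Finset.prod_const]
    refine Finset.prod_le_prod' fun i hi => hσ.antitone (le_trans (Nat.le_succ h) (mem_Ico.1 hi).1)
  set A := ∏ i ∈ range h, v (σ (i + 1) - σ i) with hA
  set dh := v (σ (h + 1) - σ h) with hdh
  set dρ := v (σ (ρ + 1) - σ ρ) with hdρ
  set qh := v (x - σ h) with hqh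
  set cmid := ρ - (h + 1) with hcmid
  have h2 : A * qh * dh ^ cmid * dh ^ (lam + 1)
      ≤ A * dh * dh ^ cmid * dρ ^ (lam + 1) := by
    refine h1.trans ?_
    exact mul_le_mul_left (mul_le_mul_right hmidR (A * dh)) _
  have h3 : qh * dh ^ (lam + 1) ≤ dh * dρ ^ (lam + 1) := by
    have hc0 : A * dh ^ cmid ≠ 0 := mul_ne_zero hA0 (pow_ne_zero _ hδh)
    refine le_of_mul_le_mul_left₀ hc0 ?_
    have e1 : A * dh ^ cmid * (qh * dh ^ (lam + 1)) = A * qh * dh ^ cmid * dh ^ (lam + 1) := by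
      simp only [mul_comm, mul_left_comm, mul_assoc]
    have e2 : A * dh * dh ^ cmid * dρ ^ (lam + 1)
        = A * dh ^ cmid * (dh * dρ ^ (lam + 1)) := by
      simp only [mul_comm, mul_left_comm, mul_assoc]
    rw [e1, ← e2]
    exact h2
  have hinv : (dh ^ (lam + 1)) ≠ 0 := pow_ne_zero _ hδh
  have h4 : qh ≤ (dρ / dh) ^ (lam + 1) * dh := by
    have e2 : (dρ / dh) ^ (lam + 1) * dh = dh * dρ ^ (lam + 1) * (dh ^ (lam + 1))⁻¹ := by
      rw [div_pow, div_eq_mul_inv]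
      simp only [mul_comm, mul_left_comm, mul_assoc]
    rw [e2]
    calc qh = qh * dh ^ (lam + 1) * (dh ^ (lam + 1))⁻¹ := by
          rw [mul_assoc, mul_inv_cancel₀ hinv, mul_one]
      _ ≤ dh * dρ ^ (lam + 1) * (dh ^ (lam + 1))⁻¹ := mul_le_mul_left h3 _
  have h5 : (dρ / dh) ^ (lam + 1) * dh < (dρ / dh) ^ lam * dh := by
    have hr1 : dρ / dh < 1 := by
      rw [div_lt_iff₀ (zero_lt_iff.2 hδh), one_mul]
      exact hσ hρlt
    have hr0 : (dρ / dh) ^ lam ≠ 0 := pow_ne_zero _ (div_ne_zero hδρ hδh)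
    have hpow : (dρ / dh) ^ (lam + 1) < (dρ / dh) ^ lam := by
      rw [pow_succ]
      calc (dρ / dh) ^ lam * (dρ / dh) < (dρ / dh) ^ lam * 1 :=
            mul_lt_mul_strict_left₀ hr0 hr1
        _ = (dρ / dh) ^ lam := mul_one _
    calc (dρ / dh) ^ (lam + 1) * dh = dh * (dρ / dh) ^ (lam + 1) := mul_comm _ _
      _ < dh * (dρ / dh) ^ lam := mul_lt_mul_strict_left₀ hδh hpow
      _ = (dρ / dh) ^ lam * dh := mul_comm _ _
  exact lt_of_le_of_lt h4 h5

lemma spike_lt_all {x : K} {h : ℕ} (hx : IsSpike v σ x h) (m : ℕ) :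
    v (x - σ h) < v (σ (m + 1) - σ m) := by
  rcases le_or_gt h m with hm | hm
  · have h1 := hx.2.1 m 1 hm le_rfl
    rwa [pow_one, div_mul_cancel₀ _ (gauge_ne_zero hσ h)] at h1
  · have h1 := hx.2.1 h 1 le_rfl le_rfl
    rw [div_self (gauge_ne_zero hσ h), one_pow, one_mul] at h1
    exact lt_of_lt_of_le h1 (hσ.antitone hm.le)

lemma spike_unique {x : K} {h h' : ℕ} (hx : IsSpike v σ x h) (hx' : IsSpike v σ x h') :
    h = h' := by
  by_contra hne
  rcases Ne.lt_or_gt hne with hlt | hlt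
  · exact absurd (hx'.1 h hlt) (ne_of_lt (spike_lt_all hσ hx h))
  · exact absurd (hx.1 h' hlt) (ne_of_lt (spike_lt_all hσ hx' h'))

lemma limit_not_spike {x : K} {h : ℕ} (hx : IsLimit v σ x) (hx' : IsSpike v σ x h) : False :=
  absurd (hx h) (ne_of_lt (spike_lt_all hσ hx' h))

lemma spike_spike_dist {x y : K} {h h' : ℕ} (hx : IsSpike v σ x h) (hy : IsSpike v σ y h')
    (hlt : h < h') : v (x - y) = v (σ (h + 1) - σ h) := by
  have hid : x - y = (x - σ h') - (y - σ h') := by ring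
  have h1 : v (x - σ h') = v (σ (h + 1) - σ h) := hx.2.2 h' hlt
  have h2 : v (y - σ h') < v (x - σ h') := by
    rw [h1]
    exact spike_lt_all hσ hy h
  rw [hid, Valuation.map_sub_eq_of_lt_left _ h2, h1]

lemma limit_spike_dist {x y : K} {h' : ℕ} (hx : IsLimit v σ x) (hy : IsSpike v σ y h') :
    v (x - y) = v (σ (h' + 1) - σ h') := by
  have hid : x - y = (x - σ (h' + 1)) - (y - σ (h' + 1)) := by ring
  have h1 : v (y - σ (h' + 1)) = v (σ (h' + 1) - σ h') := hy.2.2 (h' + 1) (Nat.lt_succ_self _)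
  have h2 : v (x - σ (h' + 1)) < v (y - σ (h' + 1)) := by
    rw [h1, hx (h' + 1)]
    exact hσ (Nat.lt_succ_self h')
  rw [hid, Valuation.map_sub_eq_of_lt_right _ h2, h1]

lemma spike_spike_same_lt {x y : K} {h : ℕ} (hx : IsSpike v σ x h) (hy : IsSpike v σ y h)
    (m : ℕ) : v (x - y) < v (σ (m + 1) - σ m) := by
  have hid : x - y = (x - σ h) - (y - σ h) := by ring
  calc v (x - y) ≤ max (v (x - σ h)) (v (y - σ h)) := by rw [hid]; exact v.map_sub _ _
    _ < v (σ (m + 1) - σ m) := max_lt (spike_lt_all hσ hx m) (spike_lt_all hσ hy m)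

lemma subseq_anti (φ : ℕ → ℕ) (hφ : StrictMono φ) :
    (∀ i, v (σ (φ (i + 1)) - σ (φ i)) = v (σ (φ i + 1) - σ (φ i))) ∧
      StrictAnti fun i => v ((σ ∘ φ) (i + 1) - (σ ∘ φ) i) := by
  have hg : ∀ i, v (σ (φ (i + 1)) - σ (φ i)) = v (σ (φ i + 1) - σ (φ i)) :=
    fun i => gauge_dist hσ (hφ (Nat.lt_succ_self i))
  refine ⟨hg, fun a b hab => ?_⟩
  show v (σ (φ (b + 1)) - σ (φ b)) < v (σ (φ (a + 1)) - σ (φ a))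
  rw [hg a, hg b]
  exact hσ (hφ hab)


omit hσ in
lemma pigeon (J : ℕ → ℕ) (hinj : Function.Injective J) (j1 : ℕ) (E : Finset ℕ)
    (hsmall : ∀ m, m ∉ E → J m < j1) : False := by
  classical
  have hcard : j1 + 1 ≤ (Finset.range (j1 + E.card + 1) \ E).card := by
    have h1 := Finset.le_card_sdiff E (Finset.range (j1 + E.card + 1))
    rw [Finset.card_range] at h1
    omega
  have hmaps : ∀ m ∈ Finset.range (j1 + E.card + 1) \ E, J m ∈ Finset.range j1 := by
    intro m hm
    rw [Finset.mem_sdiff] at hm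
    exact Finset.mem_range.2 (hsmall m hm.2)
  have h2 := Finset.card_le_card_of_injOn J hmaps hinj.injOn
  rw [Finset.card_range] at h2
  omega

variable (hσ : StrictAnti fun n => v (σ (n + 1) - σ n))
include hσ

set_option maxHeartbeats 1000000 in
lemma spike_surj {t : ℕ → K}
    (hprof : ∀ j, IsLimit v σ (t j) ∨ ∃ h, IsSpike v σ (t j) h)
    (hnospike : ∀ j, ∀ f : K[X], (∀ n, v (f.eval (t n)) ≤ 1) → v (f.eval (σ j)) ≤ 1)
    (k : ℕ) : ∃ j, IsSpike v σ (t j) k := by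
  classical
  by_contra hnk
  push_neg at hnk
  set φ : ℕ → ℕ := fun i => if i < k then i else i + 1 with hφdef
  have hφ : StrictMono φ := strictMono_nat_of_lt_succ (by
    intro i
    simp only [hφdef]
    split <;> split <;> omega)
  obtain ⟨hgφ, hφanti⟩ := subseq_anti hσ φ hφ
  have hcov : ∀ f : K[X], (∀ i, v (f.eval ((σ ∘ φ) i)) ≤ 1) →
      ∀ n, n ≠ k → v (f.eval (σ n)) ≤ 1 := by
    intro f hb n hn
    rcases lt_or_gt_of_ne hn with h | h
    · have h1 := hb n
      have e1 : φ n = n := by simp only [hφdef]; rw [if_pos h]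
      rwa [Function.comp_apply, e1] at h1
    · have h1 := hb (n - 1)
      have e1 : φ (n - 1) = n := by simp only [hφdef]; rw [if_neg (by omega)]; omega
      rwa [Function.comp_apply, e1] at h1
  have hbt : ∀ f : K[X], (∀ i, v (f.eval ((σ ∘ φ) i)) ≤ 1) → ∀ j, v (f.eval (t j)) ≤ 1 := by
    intro f hb j
    rcases hprof j with hlim | ⟨h, hsp⟩
    · refine pl_eval_le_one hφanti (t j) ?_ f hb
      intro i
      have e1 : v (t j - (σ ∘ φ) i) = v (σ (φ i + 1) - σ (φ i)) := hlim (φ i)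
      rw [e1]
      have e2 : v ((σ ∘ φ) (i + 1) - (σ ∘ φ) i) = v (σ (φ i + 1) - σ (φ i)) := hgφ i
      rw [e2]
    · have hhk : h ≠ k := fun he => hnk j (he ▸ hsp)
      set ψ : ℕ → ℕ := fun i => if i = 0 then h else max h k + i with hψdef
      have hψ0 : ψ 0 = h := by simp [hψdef]
      have hψpos : ∀ i, 0 < i → ψ i = max h k + i := by
        intro i hi
        simp only [hψdef]
        rw [if_neg hi.ne']
      have hψ : StrictMono ψ := strictMono_nat_of_lt_succ (by
        intro i
        rcases Nat.eq_zero_or_pos i with rfl | hi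
        · rw [hψ0, hψpos 1 one_pos]
          have := le_max_left h k
          omega
        · rw [hψpos i hi, hψpos (i + 1) (by omega)]
          omega)
      obtain ⟨hgψ, hψanti⟩ := subseq_anti hσ ψ hψ
      have hψge : ∀ r, h ≤ ψ r := by
        intro r
        rcases Nat.eq_zero_or_pos r with rfl | hr
        · rw [hψ0]
        · rw [hψpos r hr]
          have := le_max_left h k
          omega
      have hψne : ∀ i, ψ i ≠ k := by
        intro i
        rcases Nat.eq_zero_or_pos i with rfl | hi
        · rw [hψ0]; exact hhk
        · rw [hψpos i hi]
          have := le_max_right h k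
          omega
      refine sharp_eval_le_one hψanti (t j) ?_ f ?_
      · intro r lam hlam
        have e0 : v ((σ ∘ ψ) 1 - (σ ∘ ψ) 0) = v (σ (h + 1) - σ h) := by
          have := hgψ 0
          rwa [hψ0] at this
        have er : v ((σ ∘ ψ) (r + 1) - (σ ∘ ψ) r) = v (σ (ψ r + 1) - σ (ψ r)) := hgψ r
        have e0' : t j - (σ ∘ ψ) 0 = t j - σ h := by rw [Function.comp_apply, hψ0]
        rw [e0, er, e0']
        exact hsp.2.1 (ψ r) lam (hψge r) hlam
      · intro i
        exact hcov f hb (ψ i) (hψne i)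
  have hclosure : ∀ f : K[X], (∀ i, v (f.eval ((σ ∘ φ) i)) ≤ 1) → v (f.eval (σ k)) ≤ 1 :=
    fun f hb => hnospike k f (hbt f hb)
  have hφk : φ k = k + 1 := by simp only [hφdef]; rw [if_neg (lt_irrefl k)]
  rcases profile hφanti (σ k) hclosure with hlim | ⟨h, hsp⟩
  · have h1 : v (σ k - σ (φ k)) = v (σ (φ (k + 1)) - σ (φ k)) := hlim k
    rw [hgφ k, hφk, Valuation.map_sub_swap] at h1
    exact absurd h1.symm (ne_of_lt (hσ (Nat.lt_succ_self k)))
  · have h1 := hsp.2.1 h 1 le_rfl le_rfl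
    rw [div_self (gauge_ne_zero hφanti h), one_pow, one_mul] at h1
    have h2 : v (σ k - σ (φ h)) < v (σ (φ h + 1) - σ (φ h)) := by
      have e1 : v ((σ ∘ φ) (h + 1) - (σ ∘ φ) h) = v (σ (φ h + 1) - σ (φ h)) := hgφ h
      rwa [e1] at h1
    rcases lt_or_ge h k with hA | hA
    · have e1 : φ h = h := by simp only [hφdef]; rw [if_pos hA]
      rw [e1, gauge_dist hσ hA] at h2
      exact lt_irrefl _ h2
    · have e1 : φ h = h + 1 := by simp only [hφdef]; rw [if_neg (by omega)]
      rw [e1, Valuation.map_sub_swap, gauge_dist hσ (by omega : k < h + 1)] at h2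
      exact absurd h2 (not_lt_of_gt (hσ (by omega : k < h + 1)))

set_option maxHeartbeats 1600000 in
lemma necessity {t : ℕ → K}
    (hF : StrictAnti fun n => v (t (n + 1) - t n))
    (hts : ∀ j, ∀ f : K[X], (∀ n, v (f.eval (σ n)) ≤ 1) → v (f.eval (t j)) ≤ 1)
    (hst : ∀ k, ∀ f : K[X], (∀ n, v (f.eval (t n)) ≤ 1) → v (f.eval (σ k)) ≤ 1) :
    (∀ n, v (σ (n + 1) - σ n) = v (t (n + 1) - t n)) ∧
      ∀ k r : ℕ, k ≤ r → ∀ lam : ℕ, 1 ≤ lam →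
        v (t k - σ k) < (v (σ (r + 1) - σ r) / v (σ (k + 1) - σ k)) ^ lam
          * v (σ (k + 1) - σ k) := by
  classical
  have hprof : ∀ j, IsLimit v σ (t j) ∨ ∃ h, IsSpike v σ (t j) h :=
    fun j => profile hσ (t j) (hts j)
  have hsurj : ∀ k, ∃ j, IsSpike v σ (t j) k := spike_surj hσ hprof hst
  choose J hJ using hsurj
  have hJinj : Function.Injective J := by
    intro m m' he
    exact spike_unique hσ (hJ m) (he ▸ hJ m')
  have httdist : ∀ a b : ℕ, a < b → v (t a - t b) = v (t (a + 1) - t a) := by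
    intro a b hab
    rw [Valuation.map_sub_swap]
    exact gauge_dist hF hab
  have hnolim : ∀ j, ¬IsLimit v σ (t j) := by
    intro j0 hlim
    have hkey : ∀ m, v (t j0 - t (J m)) = v (σ (m + 1) - σ m) :=
      fun m => limit_spike_dist hσ hlim (hJ m)
    have hne : ∀ m, J m ≠ j0 := fun m he => limit_not_spike hσ hlim (he ▸ hJ m)
    by_cases hex : ∃ m0, j0 < J m0
    · obtain ⟨m0, hm0⟩ := hex
      refine pigeon J hJinj j0 {m0} ?_
      intro m hm
      have hmm0 : m ≠ m0 := Finset.notMem_singleton.1 hm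
      rcases lt_trichotomy (J m) j0 with h | h | h
      · exact h
      · exact absurd h (hne m)
      · exfalso
        have e3 : v (t j0 - t (J m)) = v (t j0 - t (J m0)) := by
          rw [httdist j0 (J m) h, httdist j0 (J m0) hm0]
        have e4 : v (σ (m + 1) - σ m) = v (σ (m0 + 1) - σ m0) := by
          rw [← hkey m, e3, hkey m0]
        exact hmm0 (hσ.injective e4)
    · push_neg at hex
      refine pigeon J hJinj j0 ∅ ?_
      intro m _
      have h1 := hex m
      have h2 := hne m
      omega
  have hspall : ∀ j, ∃ h, IsSpike v σ (t j) h := by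
    intro j
    rcases hprof j with h | h
    · exact absurd h (hnolim j)
    · exact h
  choose P hP using hspall
  have hPJ : ∀ m, P (J m) = m := fun m => spike_unique hσ (hP (J m)) (hJ m)
  have hdist2 : ∀ a b, P a < P b → v (t a - t b) = v (σ (P a + 1) - σ (P a)) :=
    fun a b h => spike_spike_dist hσ (hP a) (hP b) h
  have hdist2' : ∀ a b, P b < P a → v (t a - t b) = v (σ (P b + 1) - σ (P b)) := by
    intro a b h
    rw [Valuation.map_sub_swap]
    exact hdist2 b a h
  have haux : ∀ a b, a < b → P a ≠ P b := by
    intro a b hab he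
    have hsb : IsSpike v σ (t b) (P a) := he ▸ hP b
    have hlta : ∀ m, v (t a - t b) < v (σ (m + 1) - σ m) :=
      spike_spike_same_lt hσ (hP a) hsb
    refine pigeon J hJinj a {P a} ?_
    intro m hm
    have hmh : m ≠ P a := Finset.notMem_singleton.1 hm
    rcases lt_trichotomy (J m) a with hlt | heq | hgt
    · exact hlt
    · exfalso
      apply hmh
      rw [← hPJ m, heq]
    · exfalso
      have hdist : ∃ mm, v (t a - t (J m)) = v (σ (mm + 1) - σ mm) := by
        rcases lt_trichotomy (P a) m with hc | hc | hc
        · exact ⟨P a, spike_spike_dist hσ (hP a) (hJ m) hc⟩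
        · exact absurd hc.symm hmh
        · refine ⟨m, ?_⟩
          rw [Valuation.map_sub_swap]
          exact spike_spike_dist hσ (hJ m) (hP a) hc
      obtain ⟨mm, hmm⟩ := hdist
      have e5 : v (t a - t b) = v (t a - t (J m)) := by
        rw [httdist a b hab, httdist a (J m) hgt]
      have h6 := hlta mm
      rw [e5, hmm] at h6
      exact lt_irrefl _ h6
  have hPmono : StrictMono P := by
    intro a b hab
    rcases lt_trichotomy (P a) (P b) with h | h | h
    · exact h
    · exact absurd h (haux a b hab)
    · exfalso
      have hc1 : b < max a b + 1 := by have := le_max_right a b; omega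
      have hc2 : a < max a b + 1 := by have := le_max_left a b; omega
      have e1 : v (t a - t b) = v (σ (P b + 1) - σ (P b)) := hdist2' a b h
      have e2 : v (t a - t b) = v (t a - t (max a b + 1)) := by
        rw [httdist a b hab, httdist a _ hc2]
      rcases lt_trichotomy (P a) (P (max a b + 1)) with hc | hc | hc
      · have e3 := hdist2 a _ hc
        have e4 : P b = P a := hσ.injective (by rw [← e1, e2, e3])
        exact (ne_of_lt h) e4
      · exact haux a _ hc2 hc
      · have e3 := hdist2' a _ hc
        have e4 : P b = P (max a b + 1) := hσ.injective (by rw [← e1, e2, e3])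
        exact haux b _ hc1 e4
  have hPid : ∀ k, P k = k := by
    intro k
    induction k using Nat.strong_induction_on with
    | _ k ih =>
      have h2 : J k ≤ k := by
        have h3 : J k ≤ P (J k) := hPmono.le_apply
        rwa [hPJ k] at h3
      rcases lt_or_eq_of_le h2 with h3 | h3
      · exfalso
        have h4 := ih (J k) h3
        have h5 := hPJ k
        omega
      · have h6 := hPJ k
        rwa [h3] at h6
  constructor
  · intro n
    have h1 : v (t n - t (n + 1)) = v (σ (P n + 1) - σ (P n)) :=
      hdist2 n (n + 1) (by rw [hPid n, hPid (n + 1)]; omega)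
    rw [hPid n] at h1
    rw [← h1, Valuation.map_sub_swap]
  · intro k r hkr lam hlam
    have hsp := hP k
    rw [hPid k] at hsp
    exact hsp.2.1 r lam hkr hlam

end PC2
end Stmt11Aux

/-!
STATEMENT 11.  Multiplicative convention: the gauges
`δ : n ↦ v (s (n+1) - s n)` and `η : n ↦ v (t (n+1) - t n)` are strictly
decreasing (additively: strictly increasing).  The polynomial closures of
`E = range s` and `F = range t` are equal iff `δ_n = η_n` for all `n` and,
for every `k`, every `r ≥ k` and every positive integer `λ`,
`v(t_k − s_k) > λ(δ_r − δ_k) + δ_k` (additively), i.e. multiplicatively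
`v (t k - s k) < (δ_r / δ_k)^λ * δ_k`.
-/
theorem stmt_11 {K : Type*} [Field K] {Γ₀ : Type*} [LinearOrderedCommGroupWithZero Γ₀]
    (v : Valuation K Γ₀) (s t : ℕ → K)
    (hE : StrictAnti fun n => v (s (n + 1) - s n))
    (hF : StrictAnti fun n => v (t (n + 1) - t n)) :
    polyClosure v (Set.range s) = polyClosure v (Set.range t) ↔
      (∀ n, v (s (n + 1) - s n) = v (t (n + 1) - t n)) ∧
      ∀ k r : ℕ, k ≤ r → ∀ lam : ℕ, 1 ≤ lam →
        v (t k - s k) <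
          (v (s (r + 1) - s r) / v (s (k + 1) - s k)) ^ lam * v (s (k + 1) - s k) := by
  classical
  have hmono : ∀ k : ℕ, StrictMono (fun i => k + i : ℕ → ℕ) := by
    intro k a b hab
    simpa using hab
  constructor
  · intro hcl
    have hts : ∀ j, ∀ f : Polynomial K, (∀ n, v (f.eval (s n)) ≤ 1) → v (f.eval (t j)) ≤ 1 := by
      intro j f hf
      have hmem : t j ∈ polyClosure v (Set.range t) := fun g hg => hg (t j) ⟨j, rfl⟩
      rw [← hcl] at hmem
      exact hmem f (by rintro a ⟨n, rfl⟩; exact hf n)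
    have hst : ∀ k, ∀ f : Polynomial K, (∀ n, v (f.eval (t n)) ≤ 1) → v (f.eval (s k)) ≤ 1 := by
      intro k f hf
      have hmem : s k ∈ polyClosure v (Set.range s) := fun g hg => hg (s k) ⟨k, rfl⟩
      rw [hcl] at hmem
      exact hmem f (by rintro a ⟨n, rfl⟩; exact hf n)
    exact Stmt11Aux.necessity hE hF hts hst
  · rintro ⟨hgauge, hsharp⟩
    have key1 : ∀ f : Polynomial K, (∀ n, v (f.eval (s n)) ≤ 1) →
        ∀ k, v (f.eval (t k)) ≤ 1 := by
      intro f hf k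
      obtain ⟨hg, hanti⟩ := Stmt11Aux.subseq_anti hE (fun i => k + i) (hmono k)
      refine Stmt11Aux.sharp_eval_le_one hanti (t k) ?_ f (fun i => hf (k + i))
      intro r lam hlam
      have e1 : v ((s ∘ fun i => k + i) (r + 1) - (s ∘ fun i => k + i) r)
          = v (s ((k + r) + 1) - s (k + r)) := hg r
      have e2 : v ((s ∘ fun i => k + i) 1 - (s ∘ fun i => k + i) 0)
          = v (s ((k + 0) + 1) - s (k + 0)) := hg 0
      have e3 : t k - (s ∘ fun i => k + i) 0 = t k - s (k + 0) := rfl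
      rw [e1, e2, e3]
      simp only [Nat.add_zero]
      exact hsharp k (k + r) (Nat.le_add_right k r) lam hlam
    have key2 : ∀ f : Polynomial K, (∀ n, v (f.eval (t n)) ≤ 1) →
        ∀ k, v (f.eval (s k)) ≤ 1 := by
      intro f hf k
      obtain ⟨hg, hanti⟩ := Stmt11Aux.subseq_anti hF (fun i => k + i) (hmono k)
      refine Stmt11Aux.sharp_eval_le_one hanti (s k) ?_ f (fun i => hf (k + i))
      intro r lam hlam
      have e1 : v ((t ∘ fun i => k + i) (r + 1) - (t ∘ fun i => k + i) r)
          = v (t ((k + r) + 1) - t (k + r)) := hg r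
      have e2 : v ((t ∘ fun i => k + i) 1 - (t ∘ fun i => k + i) 0)
          = v (t ((k + 0) + 1) - t (k + 0)) := hg 0
      have e3 : s k - (t ∘ fun i => k + i) 0 = s k - t (k + 0) := rfl
      rw [e1, e2, e3]
      simp only [Nat.add_zero]
      rw [← hgauge (k + r), ← hgauge k, Valuation.map_sub_swap]
      exact hsharp k (k + r) (Nat.le_add_right k r) lam hlam
    ext x
    simp only [polyClosure, Set.mem_setOf_eq]
    constructor
    · intro hx f hf
      refine hx f ?_
      rintro a ⟨n, rfl⟩
      exact key2 f (fun m => hf (t m) ⟨m, rfl⟩) n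
    · intro hx f hf
      refine hx f ?_
      rintro a ⟨n, rfl⟩
      exact key1 f (fun m => hf (s m) ⟨m, rfl⟩) n
end

section
/- Let V be a valuation domain of rank 1 with quotient field K (i.e. V is not a field and every nonzero prime ideal of V is maximal). Let E = {s_n}_{n∈ℕ} ⊆ K be a pseudo-convergent sequence. Then the polynomial closure of E is E̅ = E ∪ Lim(E), where Lim(E) is the set of pseudo-limits of E. -/
section StmtTwelveAux



lemma arch_lemma {K : Type*} [Field K] {Γ₀ : Type*} [LinearOrderedCommGroupWithZero Γ₀]
    (v : Valuation K Γ₀)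
    (hrk1 : ∀ P : Ideal ↥v.valuationSubring, P.IsPrime → P ≠ ⊥ → P.IsMaximal)
    (u w : K) (hu0 : v u ≠ 0) (hu1 : v u < 1) (hw0 : v w ≠ 0) :
    ∃ m : ℕ, v u ^ m < v w := by
  by_contra h
  push_neg at h
  -- h : ∀ m, v w ≤ v u ^ m
  have hwle : ∀ m : ℕ, v w ≤ v u ^ m := h
  have huV : u ∈ v.valuationSubring := by
    exact le_of_lt (lt_of_lt_of_le hu1 le_rfl)
  have hwV : w ∈ v.valuationSubring := by
    refine le_trans (hwle 1) ?_
    simpa using hu1.le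
  set V := v.valuationSubring
  let P : Ideal ↥V :=
    { carrier := {r | ∀ m : ℕ, v (r : K) ≤ v u ^ m}
      add_mem' := by
        intro a b ha hb m
        exact le_trans (v.map_add _ _) (max_le (ha m) (hb m))
      zero_mem' := by intro m; simp
      smul_mem' := by
        intro c r hr m
        have : v ((c : K) * (r : K)) = v (c : K) * v (r : K) := v.map_mul _ _
        simp only [smul_eq_mul, Set.mem_setOf_eq]
        push_cast
        rw [this]
        calc v (c : K) * v (r : K) ≤ 1 * (v u ^ m) := by
              exact mul_le_mul' c.2 (hr m)
          _ = v u ^ m := one_mul _ }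
  have hPprime : P.IsPrime := by
    constructor
    · intro htop
      have h1 : (1 : ↥V) ∈ P := htop ▸ Submodule.mem_top
      have := h1 1
      simp at this
      exact absurd (lt_of_le_of_lt this hu1) (lt_irrefl _)
    · intro a b hab
      by_contra hcon
      push_neg at hcon
      obtain ⟨ha, hb⟩ := hcon
      obtain ⟨ma, hma⟩ := not_forall.mp ha
      obtain ⟨mb, hmb⟩ := not_forall.mp hb
      push_neg at hma hmb
      have : v ((a : K) * b) ≤ v u ^ (ma + mb) := hab (ma + mb)
      rw [v.map_mul, pow_add] at this
      have hlt : v u ^ ma * v u ^ mb < v (a : K) * v (b : K) :=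
        mul_lt_mul'' hma hmb zero_le' zero_le'
      exact absurd this (not_le.mpr hlt)
  have hPbot : P ≠ ⊥ := by
    intro hbot
    have hwP : (⟨w, hwV⟩ : ↥V) ∈ P := fun m => hwle m
    rw [hbot, Ideal.mem_bot] at hwP
    apply hw0
    rw [show w = ((⟨w, hwV⟩ : ↥V) : K) from rfl, hwP]
    simp
  have hPmax := hrk1 P hPprime hPbot
  have hPeq : P = IsLocalRing.maximalIdeal ↥V := IsLocalRing.eq_maximalIdeal hPmax
  -- u is a non-unit of V, hence in the maximal ideal, hence in P; contradiction
  have huP : (⟨u, huV⟩ : ↥V) ∈ P := by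
    rw [hPeq, IsLocalRing.mem_maximalIdeal, mem_nonunits_iff]
    intro hunit
    obtain ⟨z, hz⟩ := isUnit_iff_exists_inv.mp hunit
    have heq : v u * v (z : K) = 1 := by
      have h2 : (u * (z : K)) = ((1 : ↥V) : K) := by
        have := congrArg (Subtype.val) hz; push_cast at this ⊢; linear_combination this
      rw [← v.map_mul, h2]; simp
    have hzle : v (z : K) ≤ 1 := z.2
    have hlt : v u * v (z : K) < 1 :=
      lt_of_le_of_lt (mul_le_of_le_one_right' hzle) hu1
    rw [heq] at hlt
    exact lt_irrefl _ hlt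
  have := huP 2
  have h2 : v u ^ 2 < v u := by
    calc v u ^ 2 = v u * v u := sq (v u)
    _ < 1 * v u := by
        exact (mul_lt_mul_iff_left₀ (zero_lt_iff.2 hu0)).2 hu1
    _ = v u := one_mul _
  exact absurd this (not_le.mpr h2)


open Polynomial Finset

variable {K : Type*} [Field K] {Γ₀ : Type*} [LinearOrderedCommGroupWithZero Γ₀]

lemma cancel_helper {Γ₀ : Type*} [LinearOrderedCommGroupWithZero Γ₀] {a b c d : Γ₀}
    (hb : b ≠ 0) (hd : d ≠ 0) (h : a * b⁻¹ < c * d⁻¹) : d * a < c * b := by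
  have h1 := (mul_lt_mul_iff_left₀ (zero_lt_iff.2 hb)).2 h
  rw [inv_mul_cancel_right₀ hb] at h1
  have h2 := (mul_lt_mul_iff_right₀ (zero_lt_iff.2 hd)).2 h1
  have h3 : d * (c * d⁻¹ * b) = c * b := by
    rw [mul_comm c d⁻¹, mul_assoc d⁻¹ c b, ← mul_assoc, mul_inv_cancel₀ hd, one_mul]
  rwa [h3] at h2

lemma tele (v : Valuation K Γ₀) (s : ℕ → K)
    (hE : StrictAnti fun n => v (s (n + 1) - s n)) :
    ∀ i n : ℕ, i < n → v (s n - s i) = v (s (i + 1) - s i) := by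
  intro i n
  induction n with
  | zero => omega
  | succ n ih =>
    intro hin
    rcases Nat.lt_or_ge i n with hlt | hge
    · have hn : v (s n - s i) = v (s (i + 1) - s i) := ih hlt
      have hlt2 : v (s (n + 1) - s n) < v (s n - s i) := by
        rw [hn]; exact hE hlt
      have : s (n + 1) - s i = (s (n + 1) - s n) + (s n - s i) := by ring
      rw [this, Valuation.map_add_eq_of_lt_right _ hlt2, hn]
    · have : i = n := by omega
      subst this; rfl

lemma exists_bad_poly (v : Valuation K Γ₀)
    (arch : ∀ u w : K, v u ≠ 0 → v u < 1 → v w ≠ 0 → ∃ m : ℕ, v u ^ m < v w)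
    (s : ℕ → K) (hE : StrictAnti fun n => v (s (n + 1) - s n))
    (x : K) (hx : ∀ i, x ≠ s i) (M : ℕ)
    (hM : v (s (M + 1) - s M) < v (x - s M)) :
    ∃ f : Polynomial K, (∀ n, v (f.eval (s n)) ≤ 1) ∧ 1 < v (f.eval x) := by
  set δ : ℕ → Γ₀ := fun n => v (s (n + 1) - s n) with hδdef
  have hδ0 : ∀ n, δ n ≠ 0 := by
    intro n h0
    have := hE (Nat.lt_succ_self n)
    rw [h0] at this
    exact absurd this (by simp)
  set β : ℕ → Γ₀ := fun n => v (x - s n) with hβdef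
  have hβ0 : ∀ n, β n ≠ 0 := fun n =>
    v.ne_zero_iff.2 (sub_ne_zero.2 (hx n))
  set A : Γ₀ := ∏ i ∈ range (M + 1), β i with hA
  set B : Γ₀ := ∏ i ∈ range (M + 1), δ i with hB
  have hA0 : A ≠ 0 := Finset.prod_ne_zero_iff.2 fun i _ => hβ0 i
  have hB0 : B ≠ 0 := Finset.prod_ne_zero_iff.2 fun i _ => hδ0 i
  -- choose m by archimedean property
  obtain ⟨m, hm⟩ : ∃ m : ℕ, (δ M * (β M)⁻¹) ^ m < A * B⁻¹ := by
    have h1 : v ((s (M + 1) - s M) * (x - s M)⁻¹) = δ M * (β M)⁻¹ := by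
      rw [v.map_mul, map_inv₀]
    have h2 : v ((∏ i ∈ range (M + 1), (x - s i)) *
        (∏ i ∈ range (M + 1), (s (i + 1) - s i))⁻¹) = A * B⁻¹ := by
      rw [v.map_mul, map_inv₀, map_prod, map_prod]
    have hu0 : δ M * (β M)⁻¹ ≠ 0 := mul_ne_zero (hδ0 M) (inv_ne_zero (hβ0 M))
    have hu1 : δ M * (β M)⁻¹ < 1 := by
      apply mul_inv_lt_of_lt_mul₀
      rw [one_mul]; exact hM
    have hw0 : A * B⁻¹ ≠ 0 := mul_ne_zero hA0 (inv_ne_zero hB0)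
    obtain ⟨m, hm⟩ := arch _ _ (h1 ▸ hu0) (h1 ▸ hu1) (h2 ▸ hw0)
    exact ⟨m, by rwa [h1, h2] at hm⟩
  -- key inequality
  have key : B * δ M ^ m < A * β M ^ m := by
    have hm' : δ M ^ m * (β M ^ m)⁻¹ < A * B⁻¹ := by
      rwa [mul_pow, inv_pow] at hm
    exact cancel_helper (pow_ne_zero _ (hβ0 M)) hB0 hm'
  set c : K := (∏ i ∈ range (M + 1), (s (i + 1) - s i)) * (s (M + 1) - s M) ^ m with hc
  have hvc : v c = B * δ M ^ m := by
    rw [hc, v.map_mul, map_prod, map_pow]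
  have hvc0 : v c ≠ 0 := by
    rw [hvc]; exact mul_ne_zero hB0 (pow_ne_zero _ (hδ0 M))
  refine ⟨(∏ i ∈ range (M + 1), (X - C (s i))) * (X - C (s M)) ^ m * C c⁻¹, ?_, ?_⟩
  · intro n
    rcases le_or_gt n M with hn | hn
    · -- a zero factor kills everything
      have hzero : (∏ i ∈ range (M + 1), (s n - s i)) = 0 :=
        Finset.prod_eq_zero (Finset.mem_range.2 (Nat.lt_succ_of_le hn)) (by ring)
      simp [eval_prod, hzero]
    · -- n > M
      have heval : v ((((∏ i ∈ range (M + 1), (X - C (s i))) * (X - C (s M)) ^ m * C c⁻¹ :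
          Polynomial K)).eval (s n)) =
          (∏ i ∈ range (M + 1), v (s n - s i)) * v (s n - s M) ^ m * (v c)⁻¹ := by
        rw [eval_mul, eval_mul, eval_pow, eval_prod]
        simp only [eval_sub, eval_X, eval_C]
        rw [v.map_mul, v.map_mul, map_pow, map_prod, map_inv₀]
      rw [heval]
      have hprod : (∏ i ∈ range (M + 1), v (s n - s i)) = B := by
        apply Finset.prod_congr rfl
        intro i hi
        exact tele v s hE i n (lt_of_lt_of_le (Finset.mem_range.1 hi) hn)
      have hsM : v (s n - s M) = δ M := tele v s hE M n hn
      rw [hprod, hsM, ← hvc, mul_inv_cancel₀ hvc0]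
  · have heval : v ((((∏ i ∈ range (M + 1), (X - C (s i))) * (X - C (s M)) ^ m * C c⁻¹ :
        Polynomial K)).eval x) = A * β M ^ m * (v c)⁻¹ := by
      rw [eval_mul, eval_mul, eval_pow, eval_prod]
      simp only [eval_sub, eval_X, eval_C]
      rw [v.map_mul, v.map_mul, map_pow, map_prod, map_inv₀, hA]
    rw [heval, hvc]
    have hpos : (0 : Γ₀) < (B * δ M ^ m)⁻¹ :=
      zero_lt_iff.2 (inv_ne_zero (mul_ne_zero hB0 (pow_ne_zero _ (hδ0 M))))
    have := (mul_lt_mul_iff_left₀ hpos).2 key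
    rwa [mul_inv_cancel₀ (mul_ne_zero hB0 (pow_ne_zero _ (hδ0 M)))] at this




lemma limit_le_one (v : Valuation K Γ₀) (s : ℕ → K)
    (hE : StrictAnti fun n => v (s (n + 1) - s n))
    (α : K) (hα : ∀ n, v (α - s n) = v (s (n + 1) - s n))
    (f : Polynomial K) (hf : ∀ n, v (f.eval (s n)) ≤ 1) :
    v (f.eval α) ≤ 1 := by
  classical
  set δ : ℕ → Γ₀ := fun n => v (s (n + 1) - s n) with hδdef
  have hδ0 : ∀ n, δ n ≠ 0 := by
    intro n h0
    have := hE (Nat.lt_succ_self n)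
    rw [h0] at this
    exact absurd this (by simp)
  set g : Polynomial K := Polynomial.taylor α f with hg
  set c : ℕ → K := fun k => g.coeff k with hcdef
  set D : ℕ := g.natDegree with hD
  set T : Finset ℕ := (range (D + 1)).filter (fun k => k ≠ 0 ∧ c k ≠ 0) with hT
  have hev : ∀ y : K, f.eval y = g.eval (y - α) := fun y =>
    (Polynomial.taylor_eval_sub α f y).symm
  have hEn : ∀ n, f.eval (s n) = f.eval α + ∑ k ∈ T, c k * (s n - α) ^ k := by
    intro n
    rw [hev (s n), Polynomial.eval_eq_sum_range, ← hD]
    rw [← Finset.sum_filter_add_sum_filter_not (range (D + 1))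
      (fun k => k ≠ 0 ∧ c k ≠ 0) (fun k => c k * (s n - α) ^ k)]
    rw [add_comm, ← hT]
    congr 1
    · -- sum over non-T part is f.eval α
      rw [Finset.sum_eq_single_of_mem 0]
      · simp only [pow_zero, mul_one]
        rw [hev α, sub_self, ← Polynomial.coeff_zero_eq_eval_zero]
      · simp only [Finset.mem_filter, Finset.mem_range]
        exact ⟨Nat.succ_pos D, by simp⟩
      · intro b hb hb0
        simp only [Finset.mem_filter, Finset.mem_range, not_and, not_ne_iff] at hb
        rcases hb with ⟨hbr, hbc⟩
        rw [hbc hb0, zero_mul]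
  rcases Finset.eq_empty_or_nonempty T with hTe | hTne
  · have := hEn 0
    rw [hTe, Finset.sum_empty, add_zero] at this
    rw [← this]; exact hf 0
  -- valuations of terms
  set w : ℕ → ℕ → Γ₀ := fun n k => v (c k) * δ n ^ k with hw
  have hc0 : ∀ k ∈ T, v (c k) ≠ 0 := by
    intro k hk
    rw [hT, Finset.mem_filter] at hk
    exact v.ne_zero_iff.2 hk.2.2
  have hk0 : ∀ k ∈ T, k ≠ 0 := by
    intro k hk
    rw [hT, Finset.mem_filter] at hk
    exact hk.2.1
  have hval : ∀ n, ∀ k, v (c k * (s n - α) ^ k) = w n k := by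
    intro n k
    rw [v.map_mul, map_pow, Valuation.map_sub_swap, hα n]
  have hw0 : ∀ n, ∀ k ∈ T, w n k ≠ 0 := fun n k hk =>
    mul_ne_zero (hc0 k hk) (pow_ne_zero _ (hδ0 n))
  -- uniqueness of tie points
  have huniq : ∀ k j n n', k < j → v (c k) ≠ 0 → v (c j) ≠ 0 →
      w n k = w n j → w n' k = w n' j → n = n' := by
    intro k j n n' hkj hck hcj h1 h2
    by_contra hne
    have e : ∀ nn, w nn k = w nn j → v (c k) = v (c j) * δ nn ^ (j - k) := by
      intro nn hnn
      have hsplit : v (c j) * δ nn ^ j = v (c j) * δ nn ^ (j - k) * δ nn ^ k := by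
        rw [mul_assoc, ← pow_add]
        congr 2
        omega
      rw [hw] at hnn
      simp only at hnn
      rw [hsplit] at hnn
      exact mul_right_cancel₀ (pow_ne_zero _ (hδ0 nn)) hnn
    have e12 : v (c j) * δ n ^ (j - k) = v (c j) * δ n' ^ (j - k) := by
      rw [← e n h1, ← e n' h2]
    have epow : δ n ^ (j - k) = δ n' ^ (j - k) := mul_left_cancel₀ hcj e12
    have hjk : j - k ≠ 0 := by omega
    rcases lt_or_gt_of_ne hne with hlt | hlt
    · have : δ n' ^ (j - k) < δ n ^ (j - k) :=
        pow_lt_pow_left₀ (hE hlt) zero_le' hjk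
      rw [epow] at this
      exact lt_irrefl _ this
    · have : δ n ^ (j - k) < δ n' ^ (j - k) :=
        pow_lt_pow_left₀ (hE hlt) zero_le' hjk
      rw [epow] at this
      exact lt_irrefl _ this
  have huniq' : ∀ k ∈ T, ∀ j ∈ T, ∀ n n', k ≠ j →
      w n k = w n j → w n' k = w n' j → n = n' := by
    intro k hk j hj n n' hkj h1 h2
    rcases lt_or_gt_of_ne hkj with h | h
    · exact huniq k j n n' h (hc0 k hk) (hc0 j hj) h1 h2
    · exact huniq j k n n' h (hc0 j hj) (hc0 k hk) h1.symm h2.symm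
  -- finite set of bad indices
  set Bad : Finset ℕ := (T ×ˢ T).image
    (fun p => if h : ∃ n, p.1 ≠ p.2 ∧ w n p.1 = w n p.2 then h.choose else 0) with hBad
  have hgood : ∀ n, Bad.sup id < n → ∀ k ∈ T, ∀ j ∈ T, k ≠ j → w n k ≠ w n j := by
    intro n hn k hk j hj hkj heq
    have hex : ∃ n0, k ≠ j ∧ w n0 k = w n0 j := ⟨n, hkj, heq⟩
    have hmem : n ∈ Bad := by
      rw [hBad]
      apply Finset.mem_image.2
      refine ⟨(k, j), Finset.mem_product.2 ⟨hk, hj⟩, ?_⟩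
      rw [dif_pos hex]
      obtain ⟨hkj', hw'⟩ := hex.choose_spec
      exact huniq' k hk j hj _ n hkj' hw' heq
    have := Finset.le_sup (f := id) hmem
    simp only [id] at this
    omega
  -- two good indices
  set n1 : ℕ := Bad.sup id + 1 with hn1
  set n2 : ℕ := Bad.sup id + 2 with hn2
  have hgood1 := hgood n1 (by omega)
  have hgood2 := hgood n2 (by omega)
  -- value of the sum at a good index is attained at the argmax
  have dval : ∀ n, (∀ k ∈ T, ∀ j ∈ T, k ≠ j → w n k ≠ w n j) →
      ∃ k ∈ T, v (∑ i ∈ T, c i * (s n - α) ^ i) = w n k ∧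
        ∀ j ∈ T, w n j ≤ w n k := by
    intro n hgoodn
    obtain ⟨k, hkT, hkmax⟩ := Finset.exists_max_image T (w n) hTne
    refine ⟨k, hkT, ?_, hkmax⟩
    rw [Valuation.map_sum_eq_of_lt v hkT]
    · exact hval n k
    · intro i hi
      simp only [Finset.mem_sdiff, Finset.mem_singleton] at hi
      rw [hval n i, hval n k]
      exact lt_of_le_of_ne (hkmax i hi.1) (hgoodn i hi.1 k hkT hi.2)
  obtain ⟨k1, hk1T, hd1, hmax1⟩ := dval n1 hgood1
  obtain ⟨k2, hk2T, hd2, hmax2⟩ := dval n2 hgood2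
  -- conclude
  by_contra hgt
  push_neg at hgt
  have hdα : ∀ n, v (∑ i ∈ T, c i * (s n - α) ^ i) = v (f.eval α) := by
    intro n
    have hsub : (∑ i ∈ T, c i * (s n - α) ^ i) = f.eval (s n) - f.eval α := by
      rw [hEn n]; ring
    rw [hsub]
    exact Valuation.map_sub_eq_of_lt_right _ (lt_of_le_of_lt (hf n) hgt)
  have heq12 : w n1 k1 = w n2 k2 := by
    rw [← hd1, ← hd2, hdα n1, hdα n2]
  have hlt12 : w n2 k2 < w n1 k1 := by
    have hstep : δ n2 < δ n1 := hE (by omega)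
    have hpow : δ n2 ^ k2 < δ n1 ^ k2 :=
      pow_lt_pow_left₀ hstep zero_le' (hk0 k2 hk2T)
    calc w n2 k2 = v (c k2) * δ n2 ^ k2 := rfl
      _ < v (c k2) * δ n1 ^ k2 :=
          (mul_lt_mul_iff_right₀ (zero_lt_iff.2 (hc0 k2 hk2T))).2 hpow
      _ = w n1 k2 := rfl
      _ ≤ w n1 k1 := hmax1 k2 hk2T
  rw [heq12] at hlt12
  exact lt_irrefl _ hlt12


theorem stmt_12_main {K : Type*} [Field K] {Γ₀ : Type*} [LinearOrderedCommGroupWithZero Γ₀]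
    (v : Valuation K Γ₀)
    (hnf : ¬IsField ↥v.valuationSubring)
    (hrk1 : ∀ P : Ideal ↥v.valuationSubring, P.IsPrime → P ≠ ⊥ → P.IsMaximal)
    (s : ℕ → K) (hE : StrictAnti fun n => v (s (n + 1) - s n)) :
    polyClosure v (Set.range s) =
      Set.range s ∪ {α : K | ∀ n, v (α - s n) = v (s (n + 1) - s n)} := by
  have arch : ∀ u w : K, v u ≠ 0 → v u < 1 → v w ≠ 0 → ∃ m : ℕ, v u ^ m < v w :=
    fun u w h1 h2 h3 => arch_lemma v hrk1 u w h1 h2 h3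
  apply Set.eq_of_subset_of_subset
  · -- polyClosure ⊆ E ∪ Lim E
    intro x hx
    by_contra hcon
    rw [Set.mem_union] at hcon
    push_neg at hcon
    obtain ⟨hxE, hxL⟩ := hcon
    have hxne : ∀ i, x ≠ s i := by
      intro i hi
      exact hxE ⟨i, hi.symm⟩
    simp only [Set.mem_setOf_eq] at hxL
    push_neg at hxL
    obtain ⟨N, hN⟩ := hxL
    -- find M with v (s (M+1) - s M) < v (x - s M)
    obtain ⟨M, hM⟩ : ∃ M, v (s (M + 1) - s M) < v (x - s M) := by
      rcases lt_or_gt_of_ne hN with hlt | hlt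
      · -- v (x - s N) < v (s (N+1) - s N) : go one step further
        refine ⟨N + 1, ?_⟩
        have h1 : v (x - s (N + 1)) = v (s (N + 1) - s N) := by
          have : x - s (N + 1) = (x - s N) - (s (N + 1) - s N) := by ring
          rw [this]
          exact Valuation.map_sub_eq_of_lt_right _ hlt
        rw [h1]
        exact hE (Nat.lt_succ_self N)
      · exact ⟨N, hlt⟩
    obtain ⟨f, hf1, hf2⟩ := exists_bad_poly v arch s hE x hxne M hM
    have := hx f (by rintro a ⟨n, rfl⟩; exact hf1 n)
    exact absurd this (not_le.mpr hf2)
  · -- E ∪ Lim E ⊆ polyClosure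
    intro x hx
    rcases hx with ⟨n, rfl⟩ | hx
    · intro f hf
      exact hf (s n) ⟨n, rfl⟩
    · simp only [Set.mem_setOf_eq] at hx
      intro f hf
      exact limit_le_one v s hE x hx f (fun n => hf (s n) ⟨n, rfl⟩)

end StmtTwelveAux

/-!
STATEMENT 12.  `V = v.valuationSubring` has rank `1`, expressed (as in the
statement) by: `V` is not a field, and every nonzero prime ideal of `V` is
maximal.  Multiplicative convention: pseudo-convergent means the gauge
`n ↦ v (s (n+1) - s n)` is strictly decreasing, and `α` is a pseudo-limit of
`E` iff `v (α - s n) = v (s (n+1) - s n)` for all `n`.  Then the polynomial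
closure of `E = range s` is `E ∪ Lim(E)`.
-/
theorem stmt_12 {K : Type*} [Field K] {Γ₀ : Type*} [LinearOrderedCommGroupWithZero Γ₀]
    (v : Valuation K Γ₀)
    (hnf : ¬IsField ↥v.valuationSubring)
    (hrk1 : ∀ P : Ideal ↥v.valuationSubring, P.IsPrime → P ≠ ⊥ → P.IsMaximal)
    (s : ℕ → K) (hE : StrictAnti fun n => v (s (n + 1) - s n)) :
    polyClosure v (Set.range s) =
      Set.range s ∪ {α : K | ∀ n, v (α - s n) = v (s (n + 1) - s n)} := by
  exact stmt_12_main v hnf hrk1 s hE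
end
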